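/- arXiv:2308.05435 — 11 statements merged into one kernel-verified Lean document; each statement's English description precedes it below -/
import Mathlib

section
/- For all integers l ≥ 1 and all integers μ with 1 ≤ μ ≤ n − l, if X_{n,μ} is a binomial random variable with n trials and success probability μ/n, then 1/2 ≥ P(X_{n,μ} ≥ μ + l) ≥ (μ/(μ+l))^{μ+l} ≥ 1/(1+l)^{1+l}. Moreover (μ/(μ+l))^{μ+l} = P(X_{μ+l,μ} = μ+l) and 1/(1+l)^{1+l} = P(X_{1+l,1} = 1+l), so both lower bounds are attained within the family. -/
/-- The probability that a binomial random variable with `n` trials and success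
probability `p` takes the value `k`. -/
noncomputable def binomialPMF (n : ℕ) (p : ℝ) (k : ℕ) : ℝ :=
  (n.choose k : ℝ) * p ^ k * (1 - p) ^ (n - k)

/-- `P(X ≥ t)` for `X` binomial with `n` trials and success probability `p`,
where `t` is a real threshold. -/
noncomputable def binomialTail (n : ℕ) (p : ℝ) (t : ℝ) : ℝ :=
  ∑ k ∈ Finset.range (n + 1), if t ≤ (k : ℝ) then binomialPMF n p k else 0

/-!
The upper bound says that a binomial law with integer mean `μ` has median `μ`. If `p = μ/n ≥ 1/2`,
the mass at `μ + 1 + j` is at most the mass at `μ - j` for every `j`. If `p ≤ 1/2`, the function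
`x ↦ P_{p+x}(X ≥ μ+1) + P_{p-x}(X ≥ μ+1)` is nondecreasing on `[0, p]`, because `q^μ (1-q)^(n-1-μ)`,
the derivative of `q ↦ P_q(X ≥ μ+1)` up to a constant, is larger at `p + x` than at `p - x`; its
values at `0` and `p` give `2 P_p(X ≥ μ+1) ≤ P_{2p}(X ≥ μ+1) + P_0(X ≥ μ+1) ≤ 1`.

For `s > μ` the tail `P(X_{n,μ} ≥ s)` is nondecreasing in `n`: along
`q ↦ P_q(X_n ≥ s) + (μ - n q) P_q(X_n = s - 1)`, which decreases on `[μ/(n+1), μ/n]`, the value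
`P(X_{n,μ} ≥ s)` at `q = μ/n` becomes `P(X_{n+1,μ} ≥ s)` at `q = μ/(n+1)`. At `n = μ + l` the tail
is `(μ/(μ+l))^(μ+l)`, which increases with `μ` by AM-GM applied to `μ + l` copies of `μ/(μ+l)`
and one copy of `1`.
-/

open Finset Polynomial

noncomputable def binomialTailFrom (n : ℕ) (p : ℝ) (s : ℕ) : ℝ :=
  ∑ k ∈ Ico s (n + 1), binomialPMF n p k

section PMF

variable (n k : ℕ) (p : ℝ)

theorem binomialPMF_eq_eval_bernsteinPolynomial :
    binomialPMF n p k = (bernsteinPolynomial ℝ n k).eval p := by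
  simp [binomialPMF, bernsteinPolynomial]

theorem binomialPMF_self : binomialPMF n p n = p ^ n := by
  simp [binomialPMF]

variable {n k} in
theorem binomialPMF_of_lt (h : n < k) : binomialPMF n p k = 0 := by
  simp [binomialPMF, Nat.choose_eq_zero_of_lt h]

variable {p} in
theorem binomialPMF_nonneg (h0 : 0 ≤ p) (h1 : p ≤ 1) : 0 ≤ binomialPMF n p k := by
  have : 0 ≤ 1 - p := sub_nonneg.2 h1
  unfold binomialPMF
  positivity

theorem binomialPMF_zero_succ : binomialPMF n 0 (k + 1) = 0 := by
  simp [binomialPMF]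

theorem sum_binomialPMF : ∑ k ∈ range (n + 1), binomialPMF n p k = 1 := by
  simpa [binomialPMF_eq_eval_bernsteinPolynomial, eval_finsetSum] using
    congrArg (eval p) (bernsteinPolynomial.sum ℝ n)

theorem binomialPMF_succ_succ :
    binomialPMF (n + 1) p (k + 1) = p * binomialPMF n p k + (1 - p) * binomialPMF n p (k + 1) := by
  unfold binomialPMF
  rcases lt_trichotomy k n with hk | rfl | hk
  · obtain ⟨d, rfl⟩ := Nat.exists_eq_add_of_lt hk
    rw [Nat.choose_succ_succ, show k + d + 1 + 1 - (k + 1) = d + 1 by omega,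
      show k + d + 1 - k = d + 1 by omega, show k + d + 1 - (k + 1) = d by omega]
    push_cast
    ring
  · simp [pow_succ']
  · simp [Nat.choose_eq_zero_of_lt hk, Nat.choose_eq_zero_of_lt (Nat.succ_lt_succ hk),
      Nat.choose_eq_zero_of_lt (hk.trans (Nat.lt_succ_self k))]

theorem binomialPMF_succ_mul :
    (k + 1) * (1 - p) * binomialPMF n p (k + 1) = (n - k : ℕ) * p * binomialPMF n p k := by
  unfold binomialPMF
  rcases lt_or_ge k n with hk | hk
  · obtain ⟨d, rfl⟩ := Nat.exists_eq_add_of_lt hk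
    have hchoose := congrArg (Nat.cast (R := ℝ)) (Nat.choose_succ_right_eq (k + d + 1) k)
    rw [show k + d + 1 - (k + 1) = d by omega, show k + d + 1 - k = d + 1 by omega]
    rw [show k + d + 1 - k = d + 1 by omega] at hchoose
    push_cast at hchoose ⊢
    linear_combination p ^ k * (1 - p) ^ d * p * (1 - p) * hchoose
  · simp [Nat.choose_eq_zero_of_lt (Nat.lt_succ_of_le hk), Nat.sub_eq_zero_of_le hk]

variable {n k p} in
theorem binomialPMF_succ_le (hp0 : 0 ≤ p) (hp1 : p < 1) (hmode : (n + 1) * p ≤ k + 1) :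
    binomialPMF n p (k + 1) ≤ binomialPMF n p k := by
  have hratio : ((n - k : ℕ) : ℝ) * p ≤ (k + 1) * (1 - p) := by
    rcases le_total k n with hk | hk
    · rw [Nat.cast_sub hk]; nlinarith
    · rw [Nat.sub_eq_zero_of_le hk, Nat.cast_zero]; nlinarith
  have hpos : 0 < ((k : ℝ) + 1) * (1 - p) := mul_pos (by positivity) (by linarith)
  refine le_of_mul_le_mul_left ?_ hpos
  rw [binomialPMF_succ_mul]
  exact mul_le_mul_of_nonneg_right hratio (binomialPMF_nonneg n k hp0 hp1.le)

theorem hasDerivAt_binomialPMF :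
    HasDerivAt (fun q => binomialPMF n q (k + 1))
      (n * (binomialPMF (n - 1) p k - binomialPMF (n - 1) p (k + 1))) p := by
  simpa [binomialPMF_eq_eval_bernsteinPolynomial, bernsteinPolynomial.derivative_succ] using
    (bernsteinPolynomial ℝ n (k + 1)).hasDerivAt p

end PMF

section Tail

variable (n : ℕ) (p : ℝ)

theorem binomialTail_natCast (s : ℕ) : binomialTail n p s = binomialTailFrom n p s := by
  rw [binomialTail, binomialTailFrom, ← sum_filter]
  congr 1
  ext k
  simp only [mem_filter, mem_range, mem_Ico, Nat.cast_le]
  omega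

theorem binomialTailFrom_eq_sum_Ico {N : ℕ} (hN : n + 1 ≤ N) (s : ℕ) :
    binomialTailFrom n p s = ∑ k ∈ Ico s N, binomialPMF n p k := by
  refine sum_subset (Ico_subset_Ico_right hN) fun k hk hkn => binomialPMF_of_lt p ?_
  simp only [mem_Ico] at hk hkn
  omega

theorem binomialTailFrom_self : binomialTailFrom n p n = p ^ n := by
  simp [binomialTailFrom, binomialPMF_self]

theorem binomialTailFrom_zero_succ (s : ℕ) : binomialTailFrom n 0 (s + 1) = 0 :=
  sum_eq_zero fun k hk => by
    obtain ⟨j, rfl⟩ := Nat.exists_eq_add_of_le (mem_Ico.1 hk).1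
    rw [add_right_comm, binomialPMF_zero_succ]

variable {p}

theorem binomialTailFrom_le_one (h0 : 0 ≤ p) (h1 : p ≤ 1) (s : ℕ) : binomialTailFrom n p s ≤ 1 := by
  rw [← sum_binomialPMF n p, range_eq_Ico]
  exact sum_le_sum_of_subset_of_nonneg (Ico_subset_Ico_left (Nat.zero_le s))
    fun k _ _ => binomialPMF_nonneg n k h0 h1

theorem binomialTailFrom_anti (h0 : 0 ≤ p) (h1 : p ≤ 1) {s s' : ℕ} (h : s ≤ s') :
    binomialTailFrom n p s' ≤ binomialTailFrom n p s :=
  sum_le_sum_of_subset_of_nonneg (Ico_subset_Ico_left h)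
    fun k _ _ => binomialPMF_nonneg n k h0 h1

variable (p)

theorem sum_range_add_binomialTailFrom {s : ℕ} (hs : s ≤ n + 1) :
    ∑ k ∈ range s, binomialPMF n p k + binomialTailFrom n p s = 1 := by
  rw [← sum_binomialPMF n p, range_eq_Ico, range_eq_Ico, binomialTailFrom]
  exact sum_Ico_consecutive _ (Nat.zero_le s) hs

theorem binomialTailFrom_eq_add (k : ℕ) :
    binomialTailFrom n p k = binomialPMF n p k + binomialTailFrom n p (k + 1) := by
  rw [binomialTailFrom_eq_sum_Ico n p (N := n + k + 2) (by omega),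
    binomialTailFrom_eq_sum_Ico n p (N := n + k + 2) (by omega),
    sum_eq_sum_Ico_succ_bot (by omega)]

theorem binomialTailFrom_succ_succ (k : ℕ) :
    binomialTailFrom (n + 1) p (k + 1) = binomialTailFrom n p (k + 1) + p * binomialPMF n p k := by
  have hshift : ∀ f : ℕ → ℝ, ∑ j ∈ Ico (k + 1) (n + 2), f j = ∑ j ∈ Ico k (n + 1), f (j + 1) :=
    fun f => (sum_Ico_add' f k (n + 1) 1).symm
  rw [binomialTailFrom, hshift]
  simp only [binomialPMF_succ_succ, sum_add_distrib, ← mul_sum]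
  rw [← hshift (binomialPMF n p), ← binomialTailFrom_eq_sum_Ico n p (Nat.le_succ _),
    ← binomialTailFrom, binomialTailFrom_eq_add n p k]
  ring

end Tail

theorem hasDerivAt_binomialTailFrom (n k : ℕ) (p : ℝ) :
    HasDerivAt (fun q => binomialTailFrom n q (k + 1)) (n * binomialPMF (n - 1) p k) p := by
  have hshift : (fun q => binomialTailFrom n q (k + 1)) =
      fun q => ∑ j ∈ Ico k (n + k), binomialPMF n q (j + 1) := by
    ext q
    rw [binomialTailFrom_eq_sum_Ico n q (N := n + k + 1) (by omega), sum_Ico_add']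
  have htop : (n : ℝ) * binomialPMF (n - 1) p (n + k) = 0 := by
    rcases n with _ | n
    · simp
    · simp [binomialPMF_of_lt p (show n < n + 1 + k by omega)]
  rw [hshift]
  refine (HasDerivAt.fun_sum fun j (_ : j ∈ Ico k (n + k)) =>
    hasDerivAt_binomialPMF n j p).congr_deriv ?_
  have htelescope := sum_Ico_sub (binomialPMF (n - 1) p) (by omega : k ≤ n + k)
  rw [← mul_sum, sum_sub_distrib]
  rw [sum_sub_distrib] at htelescope
  linear_combination -htop - n * htelescope

theorem div_sub_div_one_sub_add_div_sub_div_one_sub_nonneg {a c : ℕ} {p y : ℝ}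
    (hp : p * (a + c + 1) = a) (hac : a ≤ c + 1) (hy0 : 0 < y) (hyp : y < p) :
    0 ≤ (a / (p + y) - c / (1 - (p + y))) + (a / (p - y) - c / (1 - (p - y))) := by
  have hac' : (a : ℝ) ≤ c + 1 := by exact_mod_cast hac
  have h2p : p + p ≤ 1 := by nlinarith
  have h1 : 0 < p + y := by linarith
  have h2 : 0 < p - y := by linarith
  have h3 : 0 < 1 - (p + y) := by linarith
  have h4 : 0 < 1 - (p - y) := by linarith
  have hnum : 0 ≤ (a : ℝ) * 2 * p * ((1 - (p + y)) * (1 - (p - y)))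
      - c * 2 * (1 - p) * ((p + y) * (p - y)) := by
    have hT : 0 ≤ 2 * ((a + c + 1) * y ^ 2 * (1 - (p + p)) + (1 - p) * ((p + y) * (p - y))) := by
      have : 0 ≤ 1 - (p + p) := by linarith
      have : 0 < 1 - p := by linarith
      positivity
    linear_combination hT + 2 * (p * (1 - p) - y ^ 2) * hp
  have e : (a / (p + y) - c / (1 - (p + y))) + (a / (p - y) - c / (1 - (p - y)))
      = ((a : ℝ) * 2 * p * ((1 - (p + y)) * (1 - (p - y)))
        - c * 2 * (1 - p) * ((p + y) * (p - y)))
        / ((p + y) * (p - y) * ((1 - (p + y)) * (1 - (p - y)))) := by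
    field_simp
    ring
  rw [e]
  exact div_nonneg hnum (mul_pos (mul_pos h1 h2) (mul_pos h3 h4)).le

theorem pow_mul_one_sub_pow_sub_le_add {a c : ℕ} {p x : ℝ} (hp : p * (a + c + 1) = a)
    (hac : a ≤ c + 1) (hx0 : 0 < x) (hxp : x < p) :
    (p - x) ^ a * (1 - (p - x)) ^ c ≤ (p + x) ^ a * (1 - (p + x)) ^ c := by
  have hac' : (a : ℝ) ≤ c + 1 := by exact_mod_cast hac
  have h2p : p + p ≤ 1 := by nlinarith
  set f : ℝ → ℝ := fun q => a * Real.log q + c * Real.log (1 - q)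
  have hf : ∀ q ∈ Set.Ioo (0 : ℝ) 1, HasDerivAt f (a / q - c / (1 - q)) q := by
    rintro q ⟨hq0, hq1⟩
    have h1 := (Real.hasDerivAt_log hq0.ne').const_mul (a : ℝ)
    have h2 := ((Real.hasDerivAt_log (sub_pos.2 hq1).ne').comp q
      ((hasDerivAt_id q).const_sub 1)).const_mul (c : ℝ)
    refine (h1.add h2).congr_deriv ?_
    ring
  have hψ : ∀ y ∈ Set.Icc 0 x,
      HasDerivAt (fun y => f (p + y) - f (p - y))
        ((a / (p + y) - c / (1 - (p + y))) + (a / (p - y) - c / (1 - (p - y)))) y := by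
    rintro y ⟨hy0, hyx⟩
    have h1 := (hf (p + y) ⟨by linarith, by linarith⟩).comp y ((hasDerivAt_id y).const_add p)
    have h2 := (hf (p - y) ⟨by linarith, by linarith⟩).comp y ((hasDerivAt_id y).const_sub p)
    refine (h1.sub h2).congr_deriv ?_
    ring
  have hmono : MonotoneOn (fun y => f (p + y) - f (p - y)) (Set.Icc 0 x) :=
    monotoneOn_of_hasDerivWithinAt_nonneg (convex_Icc _ _)
      (fun y hy => (hψ y hy).continuousAt.continuousWithinAt)
      (fun y hy => (hψ y (interior_subset hy)).hasDerivWithinAt)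
      fun y hy => by
        rw [interior_Icc] at hy
        exact div_sub_div_one_sub_add_div_sub_div_one_sub_nonneg hp hac hy.1 (hy.2.trans hxp)
  have hfx := hmono (Set.left_mem_Icc.2 hx0.le) (Set.right_mem_Icc.2 hx0.le) hx0.le
  simp only [f, add_zero, sub_zero, sub_self] at hfx
  have h1 := pow_pos (show 0 < p - x by linarith) a
  have h2 := pow_pos (show 0 < 1 - (p - x) by linarith) c
  have h3 := pow_pos (show 0 < p + x by linarith) a
  have h4 := pow_pos (show 0 < 1 - (p + x) by linarith) c
  rw [← Real.log_le_log_iff (mul_pos h1 h2) (mul_pos h3 h4), Real.log_mul h1.ne' h2.ne',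
    Real.log_mul h3.ne' h4.ne', Real.log_pow, Real.log_pow, Real.log_pow, Real.log_pow]
  linarith

theorem binomialPMF_mean_sub_le_add {a n : ℕ} (h : 2 * a ≤ n) {x : ℝ} (hx0 : 0 < x)
    (hxp : x < a / n) :
    binomialPMF (n - 1) (a / n - x) a ≤ binomialPMF (n - 1) (a / n + x) a := by
  have ha : 0 < a := by
    by_contra! ha
    simp only [Nat.le_zero.1 ha, CharP.cast_eq_zero, zero_div] at hxp
    linarith
  obtain ⟨c, rfl⟩ : ∃ c, n = a + c + 1 := ⟨n - a - 1, by omega⟩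
  have hp : (a / (a + c + 1 : ℕ) : ℝ) * (a + c + 1) = a := by
    push_cast
    field_simp
  unfold binomialPMF
  rw [show a + c + 1 - 1 - a = c by omega, mul_assoc, mul_assoc]
  exact mul_le_mul_of_nonneg_left
    (pow_mul_one_sub_pow_sub_le_add hp (by omega) hx0 hxp) (Nat.cast_nonneg _)

theorem binomialTailFrom_mean_succ_le_half_of_ge {a n : ℕ} (h : 2 * a ≤ n) :
    binomialTailFrom n (a / n) (a + 1) ≤ 1 / 2 := by
  set p : ℝ := a / n
  have hp0 : 0 ≤ p := by positivity
  have h2p : p + p ≤ 1 := by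
    rcases Nat.eq_zero_or_pos n with rfl | hn
    · simp [p]
    · rw [← two_mul, ← mul_div_assoc, div_le_one (by exact_mod_cast hn)]
      exact_mod_cast h
  set H : ℝ → ℝ := fun x => binomialTailFrom n (p + x) (a + 1) + binomialTailFrom n (p - x) (a + 1)
  have hH : ∀ x, HasDerivAt H
      (n * (binomialPMF (n - 1) (p + x) a - binomialPMF (n - 1) (p - x) a)) x := by
    intro x
    have h1 := (hasDerivAt_binomialTailFrom n a (p + x)).comp x ((hasDerivAt_id x).const_add p)
    have h2 := (hasDerivAt_binomialTailFrom n a (p - x)).comp x ((hasDerivAt_id x).const_sub p)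
    refine (h1.add h2).congr_deriv ?_
    ring
  have hmono : MonotoneOn H (Set.Icc 0 p) :=
    monotoneOn_of_hasDerivWithinAt_nonneg (convex_Icc _ _)
      (fun x _ => (hH x).continuousAt.continuousWithinAt) (fun x _ => (hH x).hasDerivWithinAt)
      fun x hx => by
        rw [interior_Icc] at hx
        exact mul_nonneg (Nat.cast_nonneg n)
          (sub_nonneg.2 (binomialPMF_mean_sub_le_add h hx.1 hx.2))
  have hends := hmono (Set.left_mem_Icc.2 hp0) (Set.right_mem_Icc.2 hp0) hp0
  simp only [H, add_zero, sub_zero, sub_self, binomialTailFrom_zero_succ] at hends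
  linarith [binomialTailFrom_le_one n (by linarith) h2p (a + 1)]

theorem binomialPMF_natCast_div_succ_mul {a n k : ℕ} (hn : 0 < n) (hk : k ≤ n) :
    (k + 1) * ((n : ℝ) - a) * binomialPMF n (a / n) (k + 1)
      = (n - k) * a * binomialPMF n (a / n) k := by
  have hn' : (n : ℝ) ≠ 0 := by positivity
  have h := binomialPMF_succ_mul n k (a / n)
  rw [Nat.cast_sub hk] at h
  field_simp at h
  linear_combination h

theorem binomialPMF_mean_add_le_sub {a n : ℕ} (h : n ≤ 2 * a) {j : ℕ} (hj : a + j < n) :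
    binomialPMF n (a / n) (a + 1 + j) ≤ binomialPMF n (a / n) (a - j) := by
  set P := binomialPMF n (a / n) with hPdef
  have hP : ∀ k, 0 ≤ P k := fun k => binomialPMF_nonneg n k (by positivity)
    (div_le_one_of_le₀ (by exact_mod_cast (show a ≤ n by omega)) (Nat.cast_nonneg n))
  have hna : (n : ℝ) ≤ 2 * a := by exact_mod_cast h
  induction j with
  | zero =>
    have e := binomialPMF_natCast_div_succ_mul (a := a) (k := a) (show 0 < n by omega) (by omega)
    have hB : (a + 1 : ℝ) ≤ n := by exact_mod_cast (show a + 1 ≤ n by omega)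
    refine le_of_mul_le_mul_left ?_
      (mul_pos (by positivity : (0 : ℝ) < a + 1) (by linarith : (0 : ℝ) < n - a))
    rw [add_zero, Nat.sub_zero, e]
    nlinarith [hP a]
  | succ j ih =>
    have e1 := binomialPMF_natCast_div_succ_mul (a := a) (k := a + 1 + j) (show 0 < n by omega) (by omega)
    have e2 := binomialPMF_natCast_div_succ_mul (a := a) (k := a - (j + 1)) (show 0 < n by omega) (by omega)
    rw [show a - (j + 1) + 1 = a - j by omega, Nat.cast_sub (by omega : j + 1 ≤ a)] at e2
    rw [← hPdef] at e1 e2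
    push_cast at e1 e2
    have hJ : (a + j + 2 : ℝ) ≤ n := by exact_mod_cast (show a + j + 2 ≤ n by omega)
    have hJa : (j + 1 : ℝ) < a := by exact_mod_cast (show j + 1 < a by omega)
    have hscal : ((n : ℝ) - a - 1 - j) * (n - a + j + 1) * a ^ 2
        ≤ (a + 2 + j) * (a - j) * (n - a) ^ 2 := by
      nlinarith [mul_nonneg (sq_nonneg ((j : ℝ) + 1)) (mul_nonneg (by linarith : (0 : ℝ) ≤ 2 * a - n)
        (Nat.cast_nonneg n)), mul_nonneg (by linarith : (0 : ℝ) ≤ 2 * a + 1)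
        (sq_nonneg ((n : ℝ) - a))]
    have hAJ : (0 : ℝ) < a - j := by linarith
    have hNA : (0 : ℝ) < n - a := by linarith
    refine le_of_mul_le_mul_left ?_ (by positivity : (0 : ℝ) < (a + 2 + j) * (a - j) * (n - a) ^ 2)
    calc (a + 2 + j) * (a - j) * (n - a) ^ 2 * P (a + 1 + (j + 1))
        = (a - j) * (n - a) * ((n - (a + 1 + j)) * a) * P (a + 1 + j) := by
          linear_combination ((a : ℝ) - j) * (n - a) * e1
      _ ≤ (a - j) * (n - a) * ((n - (a + 1 + j)) * a) * P (a - j) := by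
          have : (0 : ℝ) ≤ n - (a + 1 + j) := by linarith
          gcongr
          exact ih (by omega)
      _ = ((n : ℝ) - a - 1 - j) * (n - a + j + 1) * a ^ 2 * P (a - (j + 1)) := by
          linear_combination ((n : ℝ) - a - 1 - j) * a * e2
      _ ≤ (a + 2 + j) * (a - j) * (n - a) ^ 2 * P (a - (j + 1)) := by
          gcongr
          exact hP _

theorem binomialTailFrom_mean_succ_le_half_of_le {a n : ℕ} (h : n ≤ 2 * a) (han : a ≤ n) :
    binomialTailFrom n (a / n) (a + 1) ≤ 1 / 2 := by
  set P := binomialPMF n (a / n)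
  have hP : ∀ k, 0 ≤ P k := fun k => binomialPMF_nonneg n k (by positivity)
    (div_le_one_of_le₀ (by exact_mod_cast han) (Nat.cast_nonneg n))
  have hpair : binomialTailFrom n (a / n) (a + 1) ≤ ∑ k ∈ range (a + 1), P k :=
    calc binomialTailFrom n (a / n) (a + 1) = ∑ j ∈ range (n - a), P (a + 1 + j) := by
          rw [binomialTailFrom, sum_Ico_eq_sum_range, Nat.add_sub_add_right]
      _ ≤ ∑ j ∈ range (n - a), P (a - j) :=
          sum_le_sum fun j hj => binomialPMF_mean_add_le_sub h (by simp at hj; omega)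
      _ ≤ ∑ j ∈ range (a + 1), P (a - j) :=
          sum_le_sum_of_subset_of_nonneg (range_subset_range.2 (by omega)) fun j _ _ => hP _
      _ = ∑ k ∈ range (a + 1), P k := by
          simpa using sum_range_reflect P (a + 1)
  linarith [sum_range_add_binomialTailFrom n (a / n : ℝ) (show a + 1 ≤ n + 1 by omega)]

theorem binomialTailFrom_mean_succ_le_half {μ n : ℕ} (h : μ ≤ n) :
    binomialTailFrom n (μ / n) (μ + 1) ≤ 1 / 2 := by
  rcases le_total n (2 * μ) with h2 | h2
  · exact binomialTailFrom_mean_succ_le_half_of_le h2 h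
  · exact binomialTailFrom_mean_succ_le_half_of_ge h2

theorem hasDerivAt_binomialTailFrom_add_mul_binomialPMF (μ : ℝ) (m t : ℕ) (q : ℝ) :
    HasDerivAt (fun q => binomialTailFrom (m + 1) q (t + 2)
        + (μ - (m + 1) * q) * binomialPMF (m + 1) q (t + 1))
      ((m + 1) * ((μ - (m + 2) * q) * (binomialPMF m q t - binomialPMF m q (t + 1)))) q := by
  have hlin : HasDerivAt (fun q : ℝ => μ - (m + 1) * q) (-(m + 1)) q := by
    simpa using ((hasDerivAt_id q).const_mul ((m : ℝ) + 1)).const_sub μ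
  refine ((hasDerivAt_binomialTailFrom (m + 1) (t + 1) q).add
    (hlin.mul (hasDerivAt_binomialPMF (m + 1) t q))).congr_deriv ?_
  simp only [Nat.add_sub_cancel, binomialPMF_succ_succ m]
  push_cast
  ring

theorem binomialTailFrom_le_succ {μ n s : ℕ} (hμs : μ < s) (hμn : μ ≤ n) :
    binomialTailFrom n (μ / n) s ≤ binomialTailFrom (n + 1) (μ / ↑(n + 1)) s := by
  rcases Nat.eq_zero_or_pos μ with rfl | hμ
  · obtain ⟨t, rfl⟩ : ∃ t, s = t + 1 := ⟨s - 1, by omega⟩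
    simp [binomialTailFrom_zero_succ]
  obtain ⟨m, rfl⟩ : ∃ m, n = m + 1 := ⟨n - 1, by omega⟩
  obtain ⟨t, rfl⟩ : ∃ t, s = t + 2 := ⟨s - 2, by omega⟩
  push_cast
  -- `g` equals the left tail at `q = μ/(m+1)` and the right tail at `q = μ/(m+2)`; in between,
  -- `(m+1) q < μ ≤ t+1`, so `t` is past the mode of `Bin(m, q)` and `g' ≤ 0`
  set g : ℝ → ℝ := fun q =>
    binomialTailFrom (m + 1) q (t + 2) + (μ - (m + 1) * q) * binomialPMF (m + 1) q (t + 1)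
  have hg' : ∀ q ∈ Set.Ioo (μ / (m + 2) : ℝ) (μ / (m + 1)),
      (m + 1) * ((μ - (m + 2) * q) * (binomialPMF m q t - binomialPMF m q (t + 1))) ≤ 0 := by
    rintro q ⟨hq1, hq2⟩
    rw [div_lt_iff₀ (by positivity)] at hq1
    rw [lt_div_iff₀ (by positivity)] at hq2
    have hμt : (μ : ℝ) ≤ t + 1 := by exact_mod_cast (by omega : μ ≤ t + 1)
    have hμm : (μ : ℝ) ≤ m + 1 := by exact_mod_cast hμn
    have hq0 : 0 ≤ q := by nlinarith
    have hmode := binomialPMF_succ_le (n := m) (k := t) hq0 (by nlinarith) (by nlinarith)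
    exact mul_nonpos_of_nonneg_of_nonpos (by positivity)
      (mul_nonpos_of_nonpos_of_nonneg (by linarith) (sub_nonneg.2 hmode))
  have hle : (μ / (m + 2) : ℝ) ≤ μ / (m + 1) :=
    div_le_div_of_nonneg_left (by positivity) (by positivity) (by linarith)
  have hg := hasDerivAt_binomialTailFrom_add_mul_binomialPMF μ m t
  have hanti : AntitoneOn g (Set.Icc (μ / (m + 2) : ℝ) (μ / (m + 1))) :=
    antitoneOn_of_hasDerivWithinAt_nonpos (convex_Icc _ _)
      (fun q _ => (hg q).continuousAt.continuousWithinAt)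
      (fun q _ => (hg q).hasDerivWithinAt) (fun q hq => hg' q (by rwa [interior_Icc] at hq))
  have hright : g (μ / (m + 1)) = binomialTailFrom (m + 1) (μ / (m + 1)) (t + 2) := by
    simp only [g]
    rw [mul_div_cancel₀ _ (by positivity), sub_self, zero_mul, add_zero]
  have hleft : g (μ / (m + 2)) = binomialTailFrom (m + 2) (μ / (m + 2)) (t + 2) := by
    have hq : (μ : ℝ) - (m + 1) * (μ / (m + 2)) = μ / (m + 2) := by field_simp; ring
    simp only [g, hq]
    exact (binomialTailFrom_succ_succ (m + 1) _ (t + 1)).symm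
  have h := hanti (Set.left_mem_Icc.2 hle) (Set.right_mem_Icc.2 hle) hle
  rw [hleft, hright] at h
  rwa [add_assoc (m : ℝ), one_add_one_eq_two]

theorem div_pow_le_binomialTailFrom {μ s n : ℕ} (hμs : μ < s) (hsn : s ≤ n) :
    ((μ : ℝ) / s) ^ s ≤ binomialTailFrom n (μ / n) s := by
  induction n, hsn using Nat.le_induction with
  | base => rw [binomialTailFrom_self]
  | succ n hsn ih => exact ih.trans (binomialTailFrom_le_succ hμs (by omega))

theorem pow_le_mean_pow_succ {x : ℝ} (hx : 0 < x) (m : ℕ) :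
    x ^ m ≤ ((m * x + 1) / (m + 1)) ^ (m + 1) := by
  have hbern := one_add_mul_le_pow (a := (1 - x) / ((m + 1) * x)) (by
    rw [le_div_iff₀ (by positivity)]; nlinarith) (m + 1)
  have h1 : 1 + ((m + 1 : ℕ) : ℝ) * ((1 - x) / ((m + 1) * x)) = x⁻¹ := by
    push_cast; field_simp; ring
  have h2 : 1 + (1 - x) / ((m + 1) * x) = (m * x + 1) / (m + 1) / x := by
    field_simp; ring
  rwa [h1, h2, div_pow, le_div_iff₀ (by positivity), pow_succ x m, ← mul_assoc,
    mul_right_comm, inv_mul_cancel₀ hx.ne', one_mul] at hbern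

theorem one_div_pow_le_div_add_pow (l : ℕ) {μ : ℕ} (hμ : 1 ≤ μ) :
    1 / ((1 : ℝ) + l) ^ (1 + l) ≤ ((μ : ℝ) / (μ + l)) ^ (μ + l) := by
  induction μ, hμ using Nat.le_induction with
  | base => rw [Nat.cast_one, div_pow, one_pow]
  | succ μ hμ ih =>
    refine ih.trans ?_
    have hx : (0 : ℝ) < μ / (μ + l) := by positivity
    have hmean : (((μ + l : ℕ) : ℝ) * (μ / (μ + l)) + 1) / ((μ + l : ℕ) + 1)
        = ((μ + 1 : ℕ) : ℝ) / ((μ + 1 : ℕ) + l) := by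
      push_cast
      field_simp
      ring
    calc _ ≤ _ := pow_le_mean_pow_succ hx (μ + l)
      _ = _ := by rw [hmean, show μ + l + 1 = μ + 1 + l by omega]

/-- For integers `l ≥ 1` and `1 ≤ μ ≤ n - l`, with `X_{n,μ} ~ Binom(n, μ/n)`:
`1/2 ≥ P(X_{n,μ} ≥ μ+l) ≥ (μ/(μ+l))^{μ+l} ≥ 1/(1+l)^{1+l}`, and the two lower bounds
equal `P(X_{μ+l,μ} = μ+l)` and `P(X_{1+l,1} = 1+l)` respectively. -/
theorem stmt0 (l μ n : ℕ) (hl : 1 ≤ l) (hμ : 1 ≤ μ) (hμn : μ + l ≤ n) :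
    (1 : ℝ) / 2 ≥ binomialTail n ((μ : ℝ) / n) ((μ : ℝ) + l) ∧
    binomialTail n ((μ : ℝ) / n) ((μ : ℝ) + l) ≥ ((μ : ℝ) / ((μ : ℝ) + l)) ^ (μ + l) ∧
    ((μ : ℝ) / ((μ : ℝ) + l)) ^ (μ + l) ≥ 1 / ((1 : ℝ) + l) ^ (1 + l) ∧
    ((μ : ℝ) / ((μ : ℝ) + l)) ^ (μ + l)
      = binomialPMF (μ + l) ((μ : ℝ) / ((μ : ℝ) + l)) (μ + l) ∧
    1 / ((1 : ℝ) + l) ^ (1 + l)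
      = binomialPMF (1 + l) ((1 : ℝ) / ((1 : ℝ) + l)) (1 + l) := by
  have hp0 : (0 : ℝ) ≤ μ / n := by positivity
  have hp1 : (μ : ℝ) / n ≤ 1 :=
    div_le_one_of_le₀ (by exact_mod_cast (show μ ≤ n by omega)) (Nat.cast_nonneg n)
  have htail : binomialTail n (μ / n) (μ + l) = binomialTailFrom n (μ / n) (μ + l) := by
    exact_mod_cast binomialTail_natCast n (μ / n) (μ + l)
  refine ⟨?_, ?_, one_div_pow_le_div_add_pow l hμ, ?_, ?_⟩
  · rw [ge_iff_le, htail]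
    exact (binomialTailFrom_anti n hp0 hp1 (by omega)).trans
      (binomialTailFrom_mean_succ_le_half (by omega))
  · rw [ge_iff_le, htail]
    exact_mod_cast div_pow_le_binomialTailFrom (μ := μ) (by omega) hμn
  · rw [binomialPMF_self]
  · rw [binomialPMF_self, div_pow, one_pow]
end

section
/- For every integer l ≥ 0, every integer n ≥ l + 1, and every real μ with 1 ≤ μ ≤ n − l, if X_{n,μ} is a binomial random variable with n trials and success probability μ/n, then P(X_{n,μ} ≥ μ + l) ≥ (⌊μ⌋/(⌊μ⌋+l+1))^{⌊μ⌋+l+1} ≥ 1/(2+l)^{2+l}. -/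
open Finset

namespace PoissonBinomial

/-- `tail L k` is the probability of at least `k` successes among independent Bernoulli trials
with success probabilities `L`, computed by conditioning on the first trial. -/
noncomputable def tail : List ℝ → ℕ → ℝ
  | _, 0 => 1
  | [], _ + 1 => 0
  | x :: L, k + 1 => x * tail L k + (1 - x) * tail L (k + 1)

noncomputable def pmf (L : List ℝ) (k : ℕ) : ℝ := tail L k - tail L (k + 1)

@[simp] lemma tail_zero (L : List ℝ) : tail L 0 = 1 := by cases L <;> rfl

@[simp] lemma tail_nil_succ (k : ℕ) : tail [] (k + 1) = 0 := rfl

lemma tail_cons_succ (x : ℝ) (L : List ℝ) (k : ℕ) :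
    tail (x :: L) (k + 1) = x * tail L k + (1 - x) * tail L (k + 1) := rfl

lemma pmf_cons_zero (x : ℝ) (L : List ℝ) : pmf (x :: L) 0 = (1 - x) * pmf L 0 := by
  simp only [pmf, tail_cons_succ, tail_zero]
  ring

lemma pmf_cons_succ (x : ℝ) (L : List ℝ) (k : ℕ) :
    pmf (x :: L) (k + 1) = x * pmf L k + (1 - x) * pmf L (k + 1) := by
  simp only [pmf, tail_cons_succ]
  ring

lemma tail_eq_zero_of_length_lt {L : List ℝ} {k : ℕ} (h : L.length < k) : tail L k = 0 := by
  induction L generalizing k with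
  | nil => obtain ⟨k, rfl⟩ := Nat.exists_eq_add_one_of_ne_zero (by omega : k ≠ 0); rfl
  | cons x L ih =>
    obtain ⟨k, rfl⟩ := Nat.exists_eq_add_one_of_ne_zero (by omega : k ≠ 0)
    simp only [List.length_cons] at h
    rw [tail_cons_succ, ih (by omega), ih (by omega)]
    ring

lemma tail_cons_zero (L : List ℝ) (k : ℕ) : tail (0 :: L) k = tail L k := by
  cases k with
  | zero => simp
  | succ k => rw [tail_cons_succ]; ring

lemma tail_perm {L M : List ℝ} (h : L.Perm M) (k : ℕ) : tail L k = tail M k := by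
  induction h generalizing k with
  | nil => rfl
  | cons x _ ih => cases k <;> simp only [tail_zero, tail_cons_succ, ih]
  | swap x y L => rcases k with _ | _ | k <;> simp only [tail_zero, tail_cons_succ] <;> ring
  | trans _ _ ih₁ ih₂ => rw [ih₁, ih₂]

lemma pmf_nonneg {L : List ℝ} (hL : ∀ x ∈ L, x ∈ Set.Icc (0 : ℝ) 1) (k : ℕ) : 0 ≤ pmf L k := by
  induction L generalizing k with
  | nil => cases k <;> simp [pmf]
  | cons x L ih =>
    obtain ⟨hx0, hx1⟩ := hL x List.mem_cons_self
    have ih := ih fun y hy ↦ hL y (List.mem_cons_of_mem x hy)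
    cases k with
    | zero => rw [pmf_cons_zero]; nlinarith [ih 0]
    | succ k => rw [pmf_cons_succ]; nlinarith [ih k, ih (k + 1)]

lemma antitone_tail {L : List ℝ} (hL : ∀ x ∈ L, x ∈ Set.Icc (0 : ℝ) 1) : Antitone (tail L) :=
  antitone_nat_of_succ_le fun k ↦ sub_nonneg.1 (pmf_nonneg hL k)

lemma tail_eq_sum_pmf (L : List ℝ) (j : ℕ) :
    tail L j = ∑ k ∈ range (L.length + 1), if j ≤ k then pmf L k else 0 := by
  have telescope : ∀ k,
      (if j ≤ k then pmf L k else 0) = tail L (max j k) - tail L (max j (k + 1)) := by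
    intro k
    by_cases hjk : j ≤ k
    · rw [if_pos hjk, max_eq_right hjk, max_eq_right (by omega), pmf]
    · rw [if_neg hjk, max_eq_left (by omega), max_eq_left (by omega), sub_self]
  rw [sum_congr rfl fun k _ ↦ telescope k, sum_range_sub', max_eq_left (Nat.zero_le _),
    tail_eq_zero_of_length_lt (by omega : L.length < max j (L.length + 1)), sub_zero]

lemma pmf_replicate (n : ℕ) (p : ℝ) (k : ℕ) :
    pmf (List.replicate n p) k = binomialPMF n p k := by
  induction n generalizing k with
  | zero => cases k <;> simp [pmf, binomialPMF]
  | succ n ih =>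
    rw [List.replicate_succ]
    cases k with
    | zero => rw [pmf_cons_zero, ih]; simp only [binomialPMF]; simp [pow_succ]; ring
    | succ k =>
      rw [pmf_cons_succ, ih, ih, binomialPMF, binomialPMF, binomialPMF, Nat.choose_succ_succ',
        Nat.add_sub_add_right]
      rcases Nat.lt_or_ge k n with hk | hk
      · rw [show n - k = n - (k + 1) + 1 by omega]
        push_cast
        ring
      · rw [Nat.choose_eq_zero_of_lt (by omega : n < k + 1), Nat.sub_eq_zero_of_le hk,
          Nat.sub_eq_zero_of_le (by omega : n ≤ k + 1)]
        push_cast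
        ring

lemma binomialTail_eq_tail (n : ℕ) (p t : ℝ) :
    binomialTail n p t = tail (List.replicate n p) ⌈t⌉₊ := by
  simp only [tail_eq_sum_pmf, List.length_replicate, pmf_replicate, binomialTail, Nat.ceil_le]

lemma tail_replicate_self (n : ℕ) (p : ℝ) : tail (List.replicate n p) n = p ^ n := by
  induction n with
  | zero => simp
  | succ n ih =>
    rw [List.replicate_succ, tail_cons_succ, ih, tail_eq_zero_of_length_lt (by simp), pow_succ]
    ring

lemma tail_replicate_mono {p q : ℝ} (hp : 0 ≤ p) (hpq : p ≤ q) (hq : q ≤ 1) (n k : ℕ) :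
    tail (List.replicate n p) k ≤ tail (List.replicate n q) k := by
  induction n generalizing k with
  | zero => rfl
  | succ n ih =>
    cases k with
    | zero => simp
    | succ k =>
      have hmono := antitone_tail (L := List.replicate n p)
        (fun x hx ↦ by rw [List.eq_of_mem_replicate hx]; exact ⟨hp, hpq.trans hq⟩) k.le_succ
      simp only [List.replicate_succ, tail_cons_succ]
      nlinarith [ih k, ih (k + 1)]

lemma pmf_succ_ratio_le {c : ℝ} (hc : c ≤ 1) {L : List ℝ} (hL : ∀ x ∈ L, x ∈ Set.Icc 0 c)
    (j : ℕ) : (1 - c) * (j + 1) * pmf L (j + 1) ≤ c * (L.length - j) * pmf L j := by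
  induction L generalizing j with
  | nil => cases j <;> simp [pmf]
  | cons x L ih =>
    obtain ⟨hx0, hxc⟩ := hL x List.mem_cons_self
    have hL' : ∀ y ∈ L, y ∈ Set.Icc 0 c := fun y hy ↦ hL y (List.mem_cons_of_mem x hy)
    have hP := pmf_nonneg (fun y hy ↦ ⟨(hL' y hy).1, (hL' y hy).2.trans hc⟩)
    have hxc' : (1 - c) * x ≤ c * (1 - x) := by nlinarith
    have hx1 : 0 ≤ 1 - x := by linarith
    simp only [List.length_cons, Nat.cast_add, Nat.cast_one]
    cases j with
    | zero =>
      rw [pmf_cons_succ, pmf_cons_zero]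
      have := mul_le_mul_of_nonneg_left (ih hL' 0) hx1
      simp only [Nat.cast_zero, zero_add, sub_zero] at this ⊢
      nlinarith [mul_le_mul_of_nonneg_right hxc' (hP 0)]
    | succ i =>
      rw [pmf_cons_succ, pmf_cons_succ]
      push_cast
      have ih₁ := mul_le_mul_of_nonneg_left (ih hL' i) hx0
      have ih₂ := mul_le_mul_of_nonneg_left (ih hL' (i + 1)) hx1
      push_cast at ih₁ ih₂ ⊢
      nlinarith [mul_le_mul_of_nonneg_right hxc' (hP (i + 1))]

lemma pmf_succ_le {c : ℝ} (hc : c < 1) {L : List ℝ} (hL : ∀ x ∈ L, x ∈ Set.Icc 0 c) {j : ℕ}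
    (hj : c * (L.length - j) ≤ (1 - c) * (j + 1)) : pmf L (j + 1) ≤ pmf L j := by
  have hP := pmf_nonneg (fun y hy ↦ ⟨(hL y hy).1, (hL y hy).2.trans hc.le⟩) j
  refine le_of_mul_le_mul_left ?_ (by positivity : 0 < (1 - c) * (j + 1))
  calc (1 - c) * (j + 1) * pmf L (j + 1) ≤ c * (L.length - j) * pmf L j :=
        pmf_succ_ratio_le hc.le hL j
    _ ≤ (1 - c) * (j + 1) * pmf L j := mul_le_mul_of_nonneg_right hj hP

lemma tail_cons_cons (x y : ℝ) (C : List ℝ) (d : ℕ) :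
    tail (x :: y :: C) (d + 2) =
      tail C (d + 2) + (x + y) * pmf C (d + 1) + x * y * (pmf C d - pmf C (d + 1)) := by
  simp only [tail_cons_succ, pmf]
  ring

lemma tail_cons_cons_le {x y x' y' : ℝ} (hs : x + y = x' + y') (hp : x * y ≤ x' * y')
    {C : List ℝ} {d : ℕ} (hC : pmf C (d + 1) ≤ pmf C d) :
    tail (x :: y :: C) (d + 2) ≤ tail (x' :: y' :: C) (d + 2) := by
  rw [tail_cons_cons, tail_cons_cons, hs]
  gcongr

lemma tail_replicate_div_le_succ {m : ℝ} (hm : 0 ≤ m) {d n : ℕ} (hmd : m ≤ d + 1)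
    (hdn : d + 2 ≤ n) :
    tail (List.replicate n (m / n)) (d + 2) ≤
      tail (List.replicate (n + 1) (m / (n + 1))) (d + 2) := by
  set p := m / n
  set p' := m / (n + 1)
  set δ := p - p'
  have hdn' : (d : ℝ) + 2 ≤ n := by exact_mod_cast hdn
  have hn : (0 : ℝ) < n := by linarith
  have hnδ : n * δ = p' := by simp only [δ, p, p']; field_simp; ring
  have hδ : 0 ≤ δ := sub_nonneg.2 (div_le_div_of_nonneg_left hm hn (by linarith))
  have hp' : 0 ≤ p' := by positivity
  have hp1 : p < 1 := by rw [div_lt_one hn]; linarith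
  -- Move the mass `δ` off one entry `p` at a time onto an extra entry, growing from `0` to `p'`.
  have chain : ∀ i ≤ n, tail (List.replicate n p) (d + 2) ≤
      tail (i * δ :: (List.replicate (n - i) p ++ List.replicate i p')) (d + 2) := by
    intro i hi
    induction i with
    | zero => simp [tail_cons_zero]
    | succ i ih =>
      obtain ⟨k, hk⟩ : ∃ k, n - i = k + 1 := ⟨n - (i + 1), by omega⟩
      set R := List.replicate k p ++ List.replicate i p'
      have hR : ∀ x ∈ R, x ∈ Set.Icc 0 p := by
        intro x hx
        rcases List.mem_append.1 hx with hx | hx <;> rw [List.eq_of_mem_replicate hx]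
        exacts [⟨by positivity, le_rfl⟩, ⟨hp', by linarith⟩]
      have hRlen : (R.length : ℝ) = n - 1 := by
        simp only [R, List.length_append, List.length_replicate]
        rw [show k + i = n - 1 by omega, Nat.cast_sub (by omega), Nat.cast_one]
      have hiδ : i * δ ≤ p' := by rw [← hnδ]; gcongr; exact_mod_cast (by omega : i ≤ n)
      have hpmf : pmf R (d + 1) ≤ pmf R d := by
        refine pmf_succ_le hp1 hR ?_
        rw [hRlen]
        simp only [p]
        field_simp
        nlinarith
      calc tail (List.replicate n p) (d + 2)
          ≤ tail (i * δ :: p :: R) (d + 2) := by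
            rw [← List.cons_append, ← List.replicate_succ, ← hk]; exact ih (by omega)
        _ ≤ tail ((i + 1 : ℕ) * δ :: p' :: R) (d + 2) := by
            refine tail_cons_cons_le (by push_cast; ring) ?_ hpmf
            push_cast
            nlinarith
        _ = tail ((i + 1 : ℕ) * δ ::
              (List.replicate (n - (i + 1)) p ++ List.replicate (i + 1) p')) (d + 2) := by
            rw [show n - (i + 1) = k by omega, List.replicate_succ]
            exact tail_perm (List.perm_middle.symm.cons _) _
  simpa [hnδ, List.replicate_succ] using chain n le_rfl

lemma pow_le_tail_replicate {m : ℝ} (hm : 0 ≤ m) {k n : ℕ} (hk : 2 ≤ k) (hmk : m + 1 ≤ k)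
    (hkn : k ≤ n) : (m / k) ^ k ≤ tail (List.replicate n (m / n)) k := by
  obtain ⟨d, rfl⟩ : ∃ d, k = d + 2 := ⟨k - 2, by omega⟩
  induction n, hkn using Nat.le_induction with
  | base => rw [tail_replicate_self]
  | succ n hdn ih =>
    push_cast at hmk
    exact_mod_cast ih.trans (tail_replicate_div_le_succ hm (by linarith) hdn)

lemma div_pow_le_binomialTail {l n m : ℕ} {μ : ℝ} (hm : 1 ≤ m) (hmμ : m ≤ μ) (hμm : μ < m + 1)
    (hn : m + l + 1 ≤ n) :
    ((m : ℝ) / (m + l + 1)) ^ (m + l + 1) ≤ binomialTail n (μ / n) (μ + l) := by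
  have hn' : (m : ℝ) + l + 1 ≤ n := by exact_mod_cast hn
  have hμ0 : 0 ≤ μ := (Nat.cast_nonneg m).trans hmμ
  have hμn : μ / n ≤ 1 := by rw [div_le_one (by linarith)]; linarith
  rw [binomialTail_eq_tail]
  calc ((m : ℝ) / (m + l + 1)) ^ (m + l + 1) = (m / (m + l + 1 : ℕ)) ^ (m + l + 1) := by
        push_cast; rfl
    _ ≤ tail (List.replicate n (m / n)) (m + l + 1) :=
        pow_le_tail_replicate (Nat.cast_nonneg m) (by omega) (by push_cast; linarith) hn
    _ ≤ tail (List.replicate n (μ / n)) (m + l + 1) :=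
        tail_replicate_mono (by positivity) (by gcongr) hμn _ _
    _ ≤ tail (List.replicate n (μ / n)) ⌈μ + l⌉₊ :=
        antitone_tail (fun x hx ↦ by rw [List.eq_of_mem_replicate hx]; exact ⟨by positivity, hμn⟩)
          (Nat.ceil_le.2 (by push_cast; linarith))

end PoissonBinomial

lemma div_add_pow_le_succ (k : ℕ) {m : ℕ} (hm : 0 < m) :
    ((m : ℝ) / (m + k)) ^ (m + k) ≤ ((m + 1 : ℝ) / (m + 1 + k)) ^ (m + 1 + k) := by
  set A : ℝ := m / (m + k)
  set B : ℝ := (m + 1) / (m + 1 + k)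
  set x : ℝ := k / (m * (m + 1 + k))
  -- `B = A (1 + x)`; after Bernoulli's inequality the claim reduces to `(1 + (m + k) x) B ≥ 1`,
  -- which clears denominators to `k ^ 2 ≥ 0`.
  have hm' : (0 : ℝ) < m := by exact_mod_cast hm
  have hB : 0 < B := by positivity
  have hAB : A * (1 + x) = B := by simp only [A, B, x]; field_simp; ring
  have hBern : 1 + (m + k : ℕ) * x ≤ (1 + x) ^ (m + k) :=
    one_add_mul_le_pow (by linarith [show 0 ≤ x by positivity]) _
  have hkey : 1 ≤ (1 + (m + k : ℕ) * x) * B := by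
    simp only [B, x]
    push_cast
    field_simp
    nlinarith [sq_nonneg (k : ℝ)]
  calc A ^ (m + k) ≤ A ^ (m + k) * ((1 + x) ^ (m + k) * B) := by
        refine le_mul_of_one_le_right (by positivity) (hkey.trans ?_)
        gcongr
    _ = B ^ (m + 1 + k) := by rw [← mul_assoc, ← mul_pow, hAB, ← pow_succ]; ring_nf

lemma one_div_pow_le_div_add_pow_s1 (k : ℕ) {m : ℕ} (hm : 1 ≤ m) :
    1 / (1 + k : ℝ) ^ (1 + k) ≤ ((m : ℝ) / (m + k)) ^ (m + k) := by
  induction m, hm using Nat.le_induction with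
  | base => simp
  | succ m hm ih => exact_mod_cast ih.trans (div_add_pow_le_succ k hm)

lemma div_succ_pow_le_div_pow {a : ℝ} (ha : 0 ≤ a) {k : ℕ} (hk : 0 < k) (hak : a ≤ k + 1) :
    (a / (k + 1)) ^ (k + 1) ≤ (a / k) ^ k := by
  calc (a / (k + 1)) ^ (k + 1) ≤ (a / (k + 1)) ^ k :=
        pow_le_pow_of_le_one (by positivity) (by rw [div_le_one (by positivity)]; exact hak)
          k.le_succ
    _ ≤ (a / k) ^ k := by gcongr; linarith

open PoissonBinomial in
theorem stmt1_general (l n : ℕ) (μ : ℝ) (hμ1 : 1 ≤ μ) (hμ2 : μ ≤ (n : ℝ) - l) :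
    binomialTail n (μ / n) (μ + l)
      ≥ ((⌊μ⌋₊ : ℝ) / ((⌊μ⌋₊ : ℝ) + l + 1)) ^ (⌊μ⌋₊ + l + 1) ∧
    ((⌊μ⌋₊ : ℝ) / ((⌊μ⌋₊ : ℝ) + l + 1)) ^ (⌊μ⌋₊ + l + 1)
      ≥ 1 / ((2 : ℝ) + l) ^ (2 + l) := by
  set m := ⌊μ⌋₊
  have hm1 : 1 ≤ m := Nat.le_floor (by exact_mod_cast hμ1)
  have hmμ : (m : ℝ) ≤ μ := Nat.floor_le (by linarith)
  have hμm : μ < m + 1 := Nat.lt_floor_add_one μ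
  have hmln : m + l ≤ n := by exact_mod_cast (by linarith : (m : ℝ) + l ≤ n)
  refine ⟨?_, ?_⟩
  · rcases hmln.lt_or_eq with hlt | rfl
    · exact div_pow_le_binomialTail hm1 hmμ hμm hlt
    · have hμ : μ = m := by push_cast at hμ2; linarith
      have hceil : ⌈μ + l⌉₊ = m + l := by rw [hμ]; exact_mod_cast Nat.ceil_natCast (m + l)
      rw [ge_iff_le, binomialTail_eq_tail, hceil, tail_replicate_self, hμ]
      have key := div_succ_pow_le_div_pow (Nat.cast_nonneg m) (by omega : 0 < m + l)
        (by push_cast; linarith)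
      push_cast at key ⊢
      exact key
  · have := one_div_pow_le_div_add_pow_s1 (l + 1) hm1
    push_cast at this
    convert this using 2 <;> ring_nf

/-- For integers `l ≥ 0`, `n ≥ l+1`, and real `1 ≤ μ ≤ n - l`, with
`X_{n,μ} ~ Binom(n, μ/n)`:
`P(X_{n,μ} ≥ μ+l) ≥ (⌊μ⌋/(⌊μ⌋+l+1))^{⌊μ⌋+l+1} ≥ 1/(2+l)^{2+l}`. -/
theorem stmt1 (l n : ℕ) (hn : l + 1 ≤ n) (μ : ℝ) (hμ1 : 1 ≤ μ) (hμ2 : μ ≤ (n : ℝ) - l) :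
    binomialTail n (μ / n) (μ + l)
      ≥ ((⌊μ⌋₊ : ℝ) / ((⌊μ⌋₊ : ℝ) + l + 1)) ^ (⌊μ⌋₊ + l + 1) ∧
    ((⌊μ⌋₊ : ℝ) / ((⌊μ⌋₊ : ℝ) + l + 1)) ^ (⌊μ⌋₊ + l + 1)
      ≥ 1 / ((2 : ℝ) + l) ^ (2 + l) :=
  stmt1_general l n μ hμ1 hμ2
end

section
/- For all integers λ and l with λ > l ≥ 1, if Z_λ is a Poisson random variable with mean λ, then P(Z_λ ≤ λ − l) ≥ P(Z_l = 0) = e^{−l}. -/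
/-- The probability that a Poisson random variable with mean `r` takes the value `k`. -/
noncomputable def poissonPMF (r : ℝ) (k : ℕ) : ℝ :=
  r ^ k * Real.exp (-r) / (Nat.factorial k : ℝ)

/-- `P(Z ≤ t)` for `Z` Poisson with mean `r`, where `t` is a real threshold. -/
noncomputable def poissonLowerTail (r : ℝ) (t : ℝ) : ℝ :=
  ∑' k : ℕ, if (k : ℝ) ≤ t then poissonPMF r k else 0

/-!
Put `m = λ - l` and `S_n(x) = ∑_{k<n} x^k/k!`, so that `P(Z_λ ≤ m) = e^{-λ} S_{m+1}(λ)`. As `S_n` is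
monotone and `λ ≥ m + 1`, it suffices that `S_{n+1}(n+1) ≥ e^n`, i.e. that `P(Z_{n+1} ≤ n)` never
drops below its value `e^{-1}` at `n = 0`. In fact it is nondecreasing: expanding `(n+1)^k`
binomially, `S_{n+1}(n+1) - e S_n(n) = n^n/n! - ∑_{i<n} n^i/i! R_{n+1-i}`, where `R_s = e - S_s(1)`.
The weights `n^i/i!` increase up to `i = n`, and `∑_{s≥2} R_s = ∑_{j≥2} (j-1)/j! = 1`.
-/

open Finset Real
open scoped Nat

noncomputable def expPartialSum (x : ℝ) (n : ℕ) : ℝ := ∑ k ∈ range n, x ^ k / k !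

noncomputable def expOneTail (n : ℕ) : ℝ := exp 1 - expPartialSum 1 n

theorem expPartialSum_succ (x : ℝ) (n : ℕ) :
    expPartialSum x (n + 1) = expPartialSum x n + x ^ n / n ! :=
  sum_range_succ _ _

theorem expPartialSum_mono {x y : ℝ} (hx : 0 ≤ x) (hxy : x ≤ y) (n : ℕ) :
    expPartialSum x n ≤ expPartialSum y n := by
  unfold expPartialSum
  gcongr

theorem add_pow_div_factorial (x y : ℝ) (n : ℕ) :
    (x + y) ^ n / n ! = ∑ i ∈ range (n + 1), x ^ i / i ! * (y ^ (n - i) / (n - i)!) := by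
  rw [add_pow, sum_div]
  refine sum_congr rfl fun i hi => ?_
  rw [Nat.cast_choose ℝ (Nat.lt_succ_iff.mp (mem_range.mp hi))]
  field_simp

theorem expPartialSum_add (x y : ℝ) (n : ℕ) :
    expPartialSum (x + y) n = ∑ i ∈ range n, x ^ i / i ! * expPartialSum y (n - i) := by
  simp only [expPartialSum, add_pow_div_factorial, mul_sum]
  exact sum_range_diag_flip n fun i j => x ^ i / i ! * (y ^ j / j !)

theorem pow_div_factorial_le_pow_div_factorial {x : ℝ} {i j : ℕ} (hij : i ≤ j)
    (hjx : (j : ℝ) ≤ x) : x ^ i / i ! ≤ x ^ j / j ! := by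
  induction j, hij using Nat.le_induction with
  | base => rfl
  | succ j _ ih =>
    have hx : (0 : ℝ) ≤ x := le_trans (by positivity) hjx
    calc x ^ i / i ! ≤ x ^ j / j ! := ih (by push_cast at hjx; linarith)
      _ ≤ x ^ j / j ! * (x / (j + 1)) := by
        refine le_mul_of_one_le_right (by positivity) ?_
        rw [one_le_div (by positivity)]
        exact_mod_cast hjx
      _ = x ^ (j + 1) / (j + 1)! := by
        rw [Nat.factorial_succ]; push_cast; field_simp; ring

theorem expOneTail_nonneg (n : ℕ) : 0 ≤ expOneTail n :=
  sub_nonneg.mpr (by simpa [expPartialSum] using sum_le_exp_of_nonneg zero_le_one n)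

theorem expOneTail_eq_add (n : ℕ) : expOneTail n = 1 / n ! + expOneTail (n + 1) := by
  simp only [expOneTail, expPartialSum_succ, one_pow]
  ring

theorem mul_expOneTail_le (n : ℕ) : n * expOneTail (n + 2) ≤ 1 / (n + 1)! := by
  have hbound : expOneTail (n + 2) ≤ (n + 3) / ((n + 2)! * (n + 2)) := by
    have h := exp_bound' zero_le_one le_rfl (n := n + 2) (by omega)
    simp only [one_pow, one_mul] at h
    rw [expOneTail, expPartialSum, sub_le_iff_le_add']
    convert h using 3 <;> push_cast <;> ring
  calc (n : ℝ) * expOneTail (n + 2) ≤ n * ((n + 3) / ((n + 2)! * (n + 2))) := by gcongr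
    _ ≤ 1 / (n + 1)! := by
      rw [mul_div_assoc', Nat.factorial_succ (n + 1),
        div_le_div_iff₀ (by positivity) (by positivity)]
      push_cast
      nlinarith [(n + 1).factorial_pos]

theorem sum_expOneTail_le_one (n : ℕ) : ∑ s ∈ range n, expOneTail (s + 2) ≤ 1 := by
  have hclosed : ∑ s ∈ range n, expOneTail (s + 2) =
      1 - expOneTail (n + 1) + (n + 1) * expOneTail (n + 2) := by
    induction n with
    | zero => simp [expOneTail_eq_add 1]
    | succ n ih =>
      rw [sum_range_succ, ih, expOneTail_eq_add (n + 1), expOneTail_eq_add (n + 2),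
        Nat.factorial_succ (n + 1)]
      push_cast
      field_simp
      ring
  have := mul_expOneTail_le n
  have := expOneTail_eq_add (n + 1)
  linarith

theorem exp_one_mul_expPartialSum_self_le (n : ℕ) :
    exp 1 * expPartialSum n n ≤ expPartialSum (n + 1) (n + 1) := by
  set a : ℕ → ℝ := fun i => (n : ℝ) ^ i / i ! with ha
  have hshift : expPartialSum (n + 1) (n + 1) =
      ∑ i ∈ range n, a i * expPartialSum 1 (n + 1 - i) + a n := by
    rw [expPartialSum_add, sum_range_succ, Nat.add_sub_cancel_left]
    simp [ha, expPartialSum]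
  have hsplit : exp 1 * expPartialSum n n =
      ∑ i ∈ range n, a i * expPartialSum 1 (n + 1 - i) +
        ∑ i ∈ range n, a i * expOneTail (n + 1 - i) := by
    rw [expPartialSum, mul_sum, ← sum_add_distrib]
    refine sum_congr rfl fun i _ => ?_
    rw [expOneTail]
    ring
  have htail : ∑ i ∈ range n, a i * expOneTail (n + 1 - i) ≤ a n :=
    calc ∑ i ∈ range n, a i * expOneTail (n + 1 - i)
        ≤ ∑ i ∈ range n, a n * expOneTail (n + 1 - i) := by
          refine sum_le_sum fun i hi => mul_le_mul_of_nonneg_right ?_ (expOneTail_nonneg _)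
          exact pow_div_factorial_le_pow_div_factorial (mem_range.mp hi).le le_rfl
      _ = a n * ∑ s ∈ range n, expOneTail (s + 2) := by
          rw [← mul_sum, ← sum_range_reflect (fun s => expOneTail (s + 2))]
          refine congrArg _ (sum_congr rfl fun i hi => ?_)
          have := mem_range.mp hi
          congr 1
          omega
      _ ≤ a n := mul_le_of_le_one_right (by positivity) (sum_expOneTail_le_one n)
  linarith

theorem exp_le_expPartialSum_succ_self (n : ℕ) :
    exp n ≤ expPartialSum (n + 1 : ℕ) (n + 1) := by
  induction n with
  | zero => simp [expPartialSum]
  | succ n ih =>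
    calc exp (n + 1 : ℕ) = exp 1 * exp n := by push_cast; rw [← exp_add, add_comm]
      _ ≤ exp 1 * expPartialSum (n + 1 : ℕ) (n + 1) := by gcongr
      _ ≤ expPartialSum (n + 1 + 1 : ℕ) (n + 1 + 1) :=
        mod_cast exp_one_mul_expPartialSum_self_le (n + 1)

theorem poissonLowerTail_natCast (r : ℝ) (m : ℕ) :
    poissonLowerTail r m = exp (-r) * expPartialSum r (m + 1) := by
  rw [poissonLowerTail, tsum_eq_sum (s := range (m + 1)), expPartialSum, mul_sum]
  · refine sum_congr rfl fun k hk => ?_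
    rw [if_pos (by exact_mod_cast Nat.lt_succ_iff.mp (mem_range.mp hk)), poissonPMF]
    ring
  · intro k hk
    rw [if_neg (by rw [mem_range] at hk; exact_mod_cast (by omega : ¬ k ≤ m))]

/-- For integers `λ > l ≥ 1`, with `Z_λ ~ Poisson(λ)`:
`P(Z_λ ≤ λ - l) ≥ P(Z_l = 0) = e^{-l}`. -/
theorem stmt4 (lam l : ℕ) (hl : 1 ≤ l) (hllam : l < lam) :
    poissonLowerTail (lam : ℝ) ((lam : ℝ) - l) ≥ poissonPMF (l : ℝ) 0 ∧
    poissonPMF (l : ℝ) 0 = Real.exp (-(l : ℝ)) := by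
  have hpmf : poissonPMF (l : ℝ) 0 = exp (-(l : ℝ)) := by simp [poissonPMF]
  refine ⟨?_, hpmf⟩
  obtain ⟨m, rfl⟩ : ∃ m, lam = m + l := ⟨lam - l, by omega⟩
  have hthreshold : ((m + l : ℕ) : ℝ) - l = m := by push_cast; ring
  rw [hthreshold, poissonLowerTail_natCast, hpmf, ge_iff_le]
  calc exp (-(l : ℝ)) = exp (-((m + l : ℕ) : ℝ)) * exp m := by
        rw [← exp_add]; push_cast; ring_nf
    _ ≤ exp (-((m + l : ℕ) : ℝ)) * expPartialSum ((m + l : ℕ) : ℝ) (m + 1) := by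
        gcongr
        calc exp m ≤ expPartialSum (m + 1 : ℕ) (m + 1) := exp_le_expPartialSum_succ_self m
          _ ≤ _ := expPartialSum_mono (by positivity) (by gcongr) _
end

section
/- Let X and Y be random variables with values in a measurable space 𝒳, whose distributions have densities f_X and f_Y with respect to a common reference measure μ on 𝒳. If f : 𝒳 → ℝ is measurable and C ∈ ℝ are such that for all x ∈ 𝒳, f_X(x) > f_Y(x) if and only if f(x) > C, then for every t ∈ ℝ, P(f(X) > t) ≥ P(f(Y) > t). -/
open MeasureTheory
open scoped ENNReal

/- The superlevel set `{f > t}` either lies inside `{fX > fY} = {f > C}` (when `C ≤ t`),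
where `fX` dominates pointwise, or has its complement inside `{fX ≤ fY}` (when `t < C`);
in the second case the inequality passes from the complement to the set because both
laws have total mass one. -/

namespace MeasureTheory

variable {α : Type*} [MeasurableSpace α]

theorem withDensity_apply_mono_of_forall_mem {μ : Measure α} {g h : α → ℝ≥0∞} {s : Set α}
    (hs : MeasurableSet s) (hgh : ∀ x ∈ s, g x ≤ h x) :
    μ.withDensity g s ≤ μ.withDensity h s := by
  rw [withDensity_apply _ hs, withDensity_apply _ hs]
  exact setLIntegral_mono' hs hgh

theorem measure_le_of_measure_compl_le {ν ρ : Measure α} {s : Set α}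
    (huniv : ρ Set.univ = ν Set.univ) (hfin : ν Set.univ ≠ ∞) (hs : MeasurableSet s)
    (hcompl : ν sᶜ ≤ ρ sᶜ) : ρ s ≤ ν s := by
  have hν_compl : ν sᶜ ≠ ∞ := measure_ne_top_of_subset (Set.subset_univ _) hfin
  refine ENNReal.le_of_add_le_add_right hν_compl ?_
  calc ρ s + ν sᶜ ≤ ρ s + ρ sᶜ := add_le_add_right hcompl _
    _ = ν s + ν sᶜ := by rw [measure_add_measure_compl hs, measure_add_measure_compl hs, huniv]

end MeasureTheory

theorem stmt10_general {α : Type*} [MeasurableSpace α] (μ : Measure α)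
    (fX fY : α → ℝ≥0∞)
    (hX : μ.withDensity fX Set.univ = 1) (hY : μ.withDensity fY Set.univ = 1)
    (f : α → ℝ) (hf : Measurable f) (C : ℝ)
    (hiff : ∀ x, fY x < fX x ↔ C < f x) :
    ∀ t : ℝ, μ.withDensity fY {x | t < f x} ≤ μ.withDensity fX {x | t < f x} := by
  intro t
  have hA : MeasurableSet {x | t < f x} := measurableSet_lt measurable_const hf
  rcases le_or_gt C t with hCt | htC
  · exact withDensity_apply_mono_of_forall_mem hA fun x hx =>
      ((hiff x).mpr (hCt.trans_lt hx)).le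
  · refine measure_le_of_measure_compl_le (hY.trans hX.symm) (by simp [hX]) hA ?_
    exact withDensity_apply_mono_of_forall_mem hA.compl fun x hx =>
      not_lt.mp fun hlt => hx (htC.trans ((hiff x).mp hlt))

/-- Let `X`, `Y` be random variables with laws given by densities `fX`, `fY` with
respect to a common reference measure `μ`. If `f` is measurable and `C : ℝ` are such
that `fX x > fY x ↔ f x > C` for all `x`, then `P(f(X) > t) ≥ P(f(Y) > t)` for all `t`. -/
theorem stmt10 {α : Type*} [MeasurableSpace α] (μ : Measure α)
    (fX fY : α → ℝ≥0∞) (hfX : Measurable fX) (hfY : Measurable fY)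
    (hX : μ.withDensity fX Set.univ = 1) (hY : μ.withDensity fY Set.univ = 1)
    (f : α → ℝ) (hf : Measurable f) (C : ℝ)
    (hiff : ∀ x, fY x < fX x ↔ C < f x) :
    ∀ t : ℝ, μ.withDensity fY {x | t < f x} ≤ μ.withDensity fX {x | t < f x} :=
  stmt10_general μ fX fY hX hY f hf C hiff
end

section
/- Let X and Y be random variables with values in a measurable space 𝒳, whose distributions have densities f_X(x) = C_X · g_X(f(x)) and f_Y(x) = C_Y · g_Y(f(x)) with respect to a common reference measure μ, where g_X, g_Y : ℝ → ℝ are positive measurable functions, f : 𝒳 → ℝ is measurable, and C_X, C_Y ∈ ℝ are normalising constants. If g_X/g_Y is monotone increasing, then for every t ∈ ℝ, P(f(X) > t) ≥ P(f(Y) > t). -/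
open MeasureTheory Set
open scoped ENNReal

/-!
With `L := p t / q t` for the densities `p = C_X g_X`, `q = C_Y g_Y`, the monotone likelihood
ratio gives `L q ≤ p` above the threshold `t` and `p ≤ L q` below it. If `L ≥ 1` the first
inequality already dominates `P(f(Y) > t)` by `P(f(X) > t)`; if `L < 1` the second shows that
`f(X) ≤ t` is less likely than `f(Y) ≤ t`, and both laws have the same total mass.
-/

theorem Monotone.div_mul_le_of_le {p q : ℝ → ℝ} (h : Monotone fun s => p s / q s)
    (hq : ∀ s, 0 < q s) {s t : ℝ} (hts : t ≤ s) : p t / q t * q s ≤ p s :=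
  (le_div_iff₀ (hq s)).mp (h hts)

theorem Monotone.le_div_mul_of_le {p q : ℝ → ℝ} (h : Monotone fun s => p s / q s)
    (hq : ∀ s, 0 < q s) {s t : ℝ} (hst : s ≤ t) : p s ≤ p t / q t * q s :=
  (div_le_iff₀ (hq s)).mp (h hst)

theorem pos_of_withDensity_ofReal_mul_ne_zero {α : Type*} [MeasurableSpace α] {μ : Measure α}
    {g : α → ℝ} (hg : ∀ x, 0 < g x) {C : ℝ}
    (h : μ.withDensity (fun x => ENNReal.ofReal (C * g x)) univ ≠ 0) : 0 < C := by
  by_contra! hC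
  have hzero : (fun x => ENNReal.ofReal (C * g x)) = 0 := funext fun x =>
    ENNReal.ofReal_eq_zero.mpr (mul_nonpos_of_nonpos_of_nonneg hC (hg x).le)
  simp [hzero] at h

section withDensity

variable {α : Type*} [MeasurableSpace α] {μ : Measure α} {d e : α → ℝ≥0∞} {s : Set α}
  {c : ℝ≥0∞}

theorem const_mul_withDensity_le_withDensity (hs : MeasurableSet s) (hc : c ≠ ∞)
    (h : ∀ x ∈ s, c * d x ≤ e x) : c * μ.withDensity d s ≤ μ.withDensity e s := by
  rw [withDensity_apply _ hs, withDensity_apply _ hs, ← lintegral_const_mul' _ _ hc]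
  exact setLIntegral_mono' hs h

theorem withDensity_le_const_mul_withDensity (hs : MeasurableSet s) (hc : c ≠ ∞)
    (h : ∀ x ∈ s, e x ≤ c * d x) : μ.withDensity e s ≤ c * μ.withDensity d s := by
  rw [withDensity_apply _ hs, withDensity_apply _ hs, ← lintegral_const_mul' _ _ hc]
  exact setLIntegral_mono' hs h

end withDensity

theorem measure_le_of_const_mul_le_of_compl_le_const_mul {α : Type*} [MeasurableSpace α]
    {P Q : Measure α} (hPQ : P univ = Q univ) (hQ : Q univ ≠ ∞) {A : Set α}
    (hA : MeasurableSet A) {c : ℝ≥0∞} (hle : c * Q A ≤ P A) (hle_compl : P Aᶜ ≤ c * Q Aᶜ) :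
    Q A ≤ P A := by
  rcases le_or_gt 1 c with hc | hc
  · calc Q A = 1 * Q A := (one_mul _).symm
      _ ≤ c * Q A := by gcongr
      _ ≤ P A := hle
  · have hcompl : P Aᶜ ≤ Q Aᶜ := hle_compl.trans (mul_le_of_le_one_left' hc.le)
    have hQc : Q Aᶜ ≠ ∞ := ne_top_of_le_ne_top hQ (measure_mono (subset_univ _))
    rw [← ENNReal.add_le_add_iff_right hQc, measure_add_measure_compl hA]
    calc Q univ = P A + P Aᶜ := by rw [measure_add_measure_compl hA, hPQ]
      _ ≤ P A + Q Aᶜ := by gcongr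

theorem stmt11_general {α : Type*} [MeasurableSpace α] (μ : Measure α)
    (gX gY : ℝ → ℝ)
    (hgXpos : ∀ s, 0 < gX s) (hgYpos : ∀ s, 0 < gY s)
    (f : α → ℝ) (hf : Measurable f) (CX CY : ℝ)
    (hX : μ.withDensity (fun x => ENNReal.ofReal (CX * gX (f x))) Set.univ = 1)
    (hY : μ.withDensity (fun x => ENNReal.ofReal (CY * gY (f x))) Set.univ = 1)
    (hmono : Monotone fun s => gX s / gY s) :
    ∀ t : ℝ,
      μ.withDensity (fun x => ENNReal.ofReal (CY * gY (f x))) {x | t < f x}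
        ≤ μ.withDensity (fun x => ENNReal.ofReal (CX * gX (f x))) {x | t < f x} := by
  intro t
  have hCX := pos_of_withDensity_ofReal_mul_ne_zero (fun x => hgXpos (f x)) (hX ▸ one_ne_zero)
  have hCY := pos_of_withDensity_ofReal_mul_ne_zero (fun x => hgYpos (f x)) (hY ▸ one_ne_zero)
  have hq : ∀ s, 0 < CY * gY s := fun s => mul_pos hCY (hgYpos s)
  have hratio : Monotone fun s => CX * gX s / (CY * gY s) := by
    simpa only [mul_div_mul_comm] using hmono.const_mul (div_pos hCX hCY).le
  have hL : 0 ≤ CX * gX t / (CY * gY t) := (div_pos (mul_pos hCX (hgXpos t)) (hq t)).le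
  have hA : MeasurableSet {x | t < f x} := measurableSet_lt measurable_const hf
  refine measure_le_of_const_mul_le_of_compl_le_const_mul (hX.trans hY.symm) (by simp [hY]) hA
    (c := ENNReal.ofReal (CX * gX t / (CY * gY t)))
    (const_mul_withDensity_le_withDensity hA ENNReal.ofReal_ne_top fun x hx => ?_)
    (withDensity_le_const_mul_withDensity hA.compl ENNReal.ofReal_ne_top fun x hx => ?_)
  · rw [← ENNReal.ofReal_mul hL]
    exact ENNReal.ofReal_le_ofReal (hratio.div_mul_le_of_le hq (le_of_lt hx))
  · rw [← ENNReal.ofReal_mul hL]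
    exact ENNReal.ofReal_le_ofReal (hratio.le_div_mul_of_le hq (not_lt.mp hx))

/-- Let `X`, `Y` be random variables with laws given by densities
`x ↦ C_X · g_X(f x)` and `x ↦ C_Y · g_Y(f x)` with respect to a common reference
measure `μ`, where `g_X, g_Y` are positive measurable functions on `ℝ`. If
`g_X / g_Y` is monotone increasing, then `P(f(X) > t) ≥ P(f(Y) > t)` for all `t`. -/
theorem stmt11 {α : Type*} [MeasurableSpace α] (μ : Measure α)
    (gX gY : ℝ → ℝ) (hgX : Measurable gX) (hgY : Measurable gY)
    (hgXpos : ∀ s, 0 < gX s) (hgYpos : ∀ s, 0 < gY s)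
    (f : α → ℝ) (hf : Measurable f) (CX CY : ℝ)
    (hX : μ.withDensity (fun x => ENNReal.ofReal (CX * gX (f x))) Set.univ = 1)
    (hY : μ.withDensity (fun x => ENNReal.ofReal (CY * gY (f x))) Set.univ = 1)
    (hmono : Monotone fun s => gX s / gY s) :
    ∀ t : ℝ,
      μ.withDensity (fun x => ENNReal.ofReal (CY * gY (f x))) {x | t < f x}
        ≤ μ.withDensity (fun x => ENNReal.ofReal (CX * gX (f x))) {x | t < f x} :=
  stmt11_general μ gX gY hgXpos hgYpos f hf CX CY hX hY hmono
end

section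
/- Let r : [0,1] → [0,1] be a smooth, strictly decreasing involution with fixed point p ∈ [0,1], i.e. r(r(x)) = x for all x ∈ [0,1] and r(p) = p. Let X be a random variable on [0,1] whose distribution has Lebesgue density f_X(x) = f(x)·g(x), where g > 0 and f(r(x)) = f(x) for all x ∈ [0,1], and suppose 0 < P(X ≥ p) < 1. Then P(X ≥ p)/(1 − P(X ≥ p)) = E[ −r'(X)·g(r(X))/g(X) | X < p ] and P(X ≤ p)/(1 − P(X ≤ p)) = E[ −r'(X)·g(r(X))/g(X) | X > p ]. -/
open MeasureTheory

/-- Let `r : [0,1] → [0,1]` be a smooth, strictly decreasing involution with fixed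
point `p`, with derivative `r'` on `[0,1]`. Let `X` be a random variable on `[0,1]`
whose law `ν` has Lebesgue density `f·g` on `[0,1]`, where `g > 0` and `f ∘ r = f`
on `[0,1]`, and suppose `0 < P(X ≥ p) < 1`. Then
`P(X ≥ p)/(1 - P(X ≥ p)) = E[-r'(X)·g(r(X))/g(X) ∣ X < p]` and
`P(X ≤ p)/(1 - P(X ≤ p)) = E[-r'(X)·g(r(X))/g(X) ∣ X > p]`. -/
theorem stmt14 (r r' f g : ℝ → ℝ) (p : ℝ) (hp : p ∈ Set.Icc (0 : ℝ) 1)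
    (hmaps : Set.MapsTo r (Set.Icc 0 1) (Set.Icc 0 1))
    (hanti : StrictAntiOn r (Set.Icc 0 1))
    (hsmooth : ContDiffOn ℝ (⊤ : ℕ∞) r (Set.Icc 0 1))
    (hderiv : ∀ x ∈ Set.Icc (0 : ℝ) 1, HasDerivWithinAt r (r' x) (Set.Icc 0 1) x)
    (hinv : ∀ x ∈ Set.Icc (0 : ℝ) 1, r (r x) = x) (hrp : r p = p)
    (hgpos : ∀ x ∈ Set.Icc (0 : ℝ) 1, 0 < g x)
    (hfr : ∀ x ∈ Set.Icc (0 : ℝ) 1, f (r x) = f x)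
    (hmf : Measurable f) (hmg : Measurable g)
    (ν : Measure ℝ)
    (hν : ν = (volume.restrict (Set.Icc (0 : ℝ) 1)).withDensity
      (fun x => ENNReal.ofReal (f x * g x)))
    (hprob : IsProbabilityMeasure ν)
    (h0 : 0 < (ν (Set.Ici p)).toReal) (h1 : (ν (Set.Ici p)).toReal < 1) :
    (ν (Set.Ici p)).toReal / (1 - (ν (Set.Ici p)).toReal)
        = (∫ x in Set.Iio p, -r' x * (g (r x) / g x) ∂ν) / (ν (Set.Iio p)).toReal ∧
    (ν (Set.Iic p)).toReal / (1 - (ν (Set.Iic p)).toReal)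
        = (∫ x in Set.Ioi p, -r' x * (g (r x) / g x) ∂ν) / (ν (Set.Ioi p)).toReal := by
  obtain ⟨hp0, hp1⟩ := hp
  set F : ℝ → ℝ := fun x => max (f x) 0 with hFdef
  have hmF : Measurable F := hmf.max measurable_const
  have hFr : ∀ x ∈ Set.Icc (0 : ℝ) 1, F (r x) = F x := by
    intro x hx; simp only [hFdef, hfr x hx]
  -- derivative is nonpositive
  have hr'le : ∀ x ∈ Set.Icc (0 : ℝ) 1, r' x ≤ 0 := by
    intro x hx
    have ht := hasDerivWithinAt_iff_tendsto_slope.1 (hderiv x hx)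
    rcases lt_or_eq_of_le hx.2 with hx1 | hx1
    · have hsub : Set.Ioc x 1 ⊆ Set.Icc 0 1 \ {x} := fun y hy =>
        ⟨⟨hx.1.trans hy.1.le, hy.2⟩, ne_of_gt hy.1⟩
      have ht' := ht.mono_left (nhdsWithin_mono x hsub)
      haveI := left_nhdsWithin_Ioc_neBot hx1
      refine le_of_tendsto ht' (eventually_nhdsWithin_of_forall fun y hy => ?_)
      have hylt : r y < r x := hanti hx ⟨hx.1.trans hy.1.le, hy.2⟩ hy.1
      rw [slope_def_field]
      exact div_nonpos_of_nonpos_of_nonneg (sub_nonpos.2 hylt.le) (sub_nonneg.2 hy.1.le)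
    · have hx0 : (0 : ℝ) < x := by rw [hx1]; exact one_pos
      have hsub : Set.Ico 0 x ⊆ Set.Icc 0 1 \ {x} := fun y hy =>
        ⟨⟨hy.1, hy.2.le.trans hx.2⟩, ne_of_lt hy.2⟩
      have ht' := ht.mono_left (nhdsWithin_mono x hsub)
      haveI := right_nhdsWithin_Ico_neBot hx0
      refine le_of_tendsto ht' (eventually_nhdsWithin_of_forall fun y hy => ?_)
      have hylt : r x < r y := hanti ⟨hy.1, hy.2.le.trans hx.2⟩ hx hy.2
      rw [slope_def_field]
      exact div_nonpos_of_nonneg_of_nonpos (sub_nonneg.2 hylt.le) (sub_nonpos.2 hy.2.le)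
  -- set identities
  have hIio : Set.Iio p ∩ Set.Icc 0 1 = Set.Ico 0 p := by
    ext x
    simp only [Set.mem_inter_iff, Set.mem_Iio, Set.mem_Icc, Set.mem_Ico]
    exact ⟨fun ⟨a, b, _⟩ => ⟨b, a⟩, fun ⟨a, b⟩ => ⟨b, a, (b.trans_le hp1).le⟩⟩
  have hIoi : Set.Ioi p ∩ Set.Icc 0 1 = Set.Ioc p 1 := by
    ext x
    simp only [Set.mem_inter_iff, Set.mem_Ioi, Set.mem_Icc, Set.mem_Ioc]
    exact ⟨fun ⟨a, _, c⟩ => ⟨a, c⟩, fun ⟨a, c⟩ => ⟨a, (hp0.trans a.le), c⟩⟩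
  have hIci : Set.Ici p ∩ Set.Icc 0 1 = Set.Icc p 1 := by
    ext x
    simp only [Set.mem_inter_iff, Set.mem_Ici, Set.mem_Icc]
    exact ⟨fun ⟨a, _, c⟩ => ⟨a, c⟩, fun ⟨a, c⟩ => ⟨a, hp0.trans a, c⟩⟩
  -- subset facts
  have hIcoSub : Set.Ico (0 : ℝ) p ⊆ Set.Icc 0 1 := fun x hx => ⟨hx.1, (hx.2.trans_le hp1).le⟩
  have hIocSub : Set.Ioc p 1 ⊆ Set.Icc 0 1 := fun x hx => ⟨hp0.trans hx.1.le, hx.2⟩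
  have hIccSub : Set.Icc p 1 ⊆ Set.Icc 0 1 := Set.Icc_subset_Icc hp0 le_rfl
  -- images under r
  have him1 : r '' Set.Ico 0 p = Set.Ioc p 1 := by
    ext y
    constructor
    · rintro ⟨x, hx, rfl⟩
      have hxI : x ∈ Set.Icc (0 : ℝ) 1 := hIcoSub hx
      exact ⟨hrp ▸ hanti hxI ⟨hp0, hp1⟩ hx.2, (hmaps hxI).2⟩
    · intro hy
      have hyI : y ∈ Set.Icc (0 : ℝ) 1 := hIocSub hy
      refine ⟨r y, ⟨(hmaps hyI).1, ?_⟩, hinv y hyI⟩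
      have := hanti ⟨hp0, hp1⟩ hyI hy.1
      rwa [hrp] at this
  have him2 : r '' Set.Ioc p 1 = Set.Ico 0 p := by
    ext y
    constructor
    · rintro ⟨x, hx, rfl⟩
      have hxI : x ∈ Set.Icc (0 : ℝ) 1 := hIocSub hx
      refine ⟨(hmaps hxI).1, ?_⟩
      have := hanti ⟨hp0, hp1⟩ hxI hx.1
      rwa [hrp] at this
    · intro hy
      have hyI : y ∈ Set.Icc (0 : ℝ) 1 := hIcoSub hy
      refine ⟨r y, ⟨?_, (hmaps hyI).2⟩, hinv y hyI⟩
      have := hanti hyI ⟨hp0, hp1⟩ hy.2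
      rwa [hrp] at this
  -- measure values as lintegrals
  have hνset : ∀ t : Set ℝ, MeasurableSet t →
      ν t = ∫⁻ x in t ∩ Set.Icc 0 1, ENNReal.ofReal (f x * g x) ∂volume := by
    intro t htm
    rw [hν, withDensity_apply _ htm, Measure.restrict_restrict htm]
  -- toReal of lintegral over subsets of [0,1]
  have hset : ∀ t : Set ℝ, MeasurableSet t → t ⊆ Set.Icc (0 : ℝ) 1 →
      IntegrableOn (fun x => F x * g x) t volume ∧
      (∫⁻ x in t, ENNReal.ofReal (f x * g x) ∂volume).toReal
        = ∫ x in t, F x * g x ∂volume := by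
    intro t htm hts
    have hnn : ∀ x ∈ t, 0 ≤ F x * g x := fun x hx =>
      mul_nonneg (le_max_right _ _) (hgpos x (hts hx)).le
    have hcong : ∫⁻ x in t, ENNReal.ofReal (f x * g x) ∂volume
        = ∫⁻ x in t, ENNReal.ofReal (F x * g x) ∂volume := by
      refine setLIntegral_congr_fun htm (fun x hx => ?_)
      have hg := hgpos x (hts hx)
      rcases le_or_gt 0 (f x) with h | h
      · simp only [hFdef, max_eq_left h]
      · have h1 : f x * g x ≤ 0 := (mul_neg_of_neg_of_pos h hg).le
        simp only [hFdef, max_eq_right h.le, zero_mul,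
          ENNReal.ofReal_of_nonpos h1, ENNReal.ofReal_zero]
    have hfin : ∫⁻ x in t, ENNReal.ofReal (F x * g x) ∂volume ≠ ⊤ := by
      rw [← hcong]
      have : ∫⁻ x in t, ENNReal.ofReal (f x * g x) ∂volume = ν t := by
        rw [hνset t htm, Set.inter_eq_self_of_subset_left hts]
      rw [this]
      exact (measure_lt_top ν t).ne
    have hint : IntegrableOn (fun x => F x * g x) t volume := by
      have h2 := integrable_toReal_of_lintegral_ne_top
        ((hmF.mul hmg).ennreal_ofReal.aemeasurable) hfin
      refine h2.congr ((ae_restrict_iff' htm).2 (ae_of_all _ fun x hx => ?_))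
      exact ENNReal.toReal_ofReal (hnn x hx)
    refine ⟨hint, ?_⟩
    rw [hcong, ← ofReal_integral_eq_lintegral_ofReal hint
      ((ae_restrict_iff' htm).2 (ae_of_all _ hnn)),
      ENNReal.toReal_ofReal (setIntegral_nonneg htm hnn)]
  -- measure values as real integrals
  have hAci : (ν (Set.Ici p)).toReal = ∫ x in Set.Icc p 1, F x * g x ∂volume := by
    rw [hνset _ measurableSet_Ici, hIci, (hset _ measurableSet_Icc hIccSub).2]
  have hAio : (ν (Set.Iio p)).toReal = ∫ x in Set.Ico 0 p, F x * g x ∂volume := by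
    rw [hνset _ measurableSet_Iio, hIio, (hset _ measurableSet_Ico hIcoSub).2]
  -- change of variables
  have hCoV : ∀ s : Set ℝ, MeasurableSet s → s ⊆ Set.Icc (0 : ℝ) 1 →
      ∫ y in r '' s, F y * g y ∂volume = ∫ x in s, -r' x * (F x * g (r x)) ∂volume := by
    intro s hs hss
    rw [integral_image_eq_integral_abs_deriv_smul hs
      (fun x hx => (hderiv x (hss hx)).mono hss) (hanti.injOn.mono hss)
      (fun y => F y * g y)]
    refine setIntegral_congr_fun hs fun x hx => ?_
    rw [smul_eq_mul, abs_of_nonpos (hr'le x (hss hx)), hFr x (hss hx)]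
  -- rewriting the ν-integrals
  have hmain : ∀ s : Set ℝ, MeasurableSet s →
      ∫ x in s, -r' x * (g (r x) / g x) ∂ν
        = ∫ x in s ∩ Set.Icc 0 1,
            (Real.toNNReal (f x * g x) : ℝ) * (-r' x * (g (r x) / g x)) ∂volume := by
    intro s hs
    rw [hν]
    have hdens : (fun x => ENNReal.ofReal (f x * g x))
        = (fun x => ((Real.toNNReal (f x * g x) : NNReal) : ENNReal)) := rfl
    rw [hdens, setIntegral_withDensity_eq_setIntegral_smul
      (show Measurable (fun x => Real.toNNReal (f x * g x)) from (hmf.mul hmg).real_toNNReal) _ hs, Measure.restrict_restrict hs]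
    refine setIntegral_congr_fun (hs.inter measurableSet_Icc) fun x _ => ?_
    rw [NNReal.smul_def, smul_eq_mul]
  have hptwise : ∀ t : Set ℝ, t ⊆ Set.Icc (0 : ℝ) 1 → ∀ x ∈ t,
      (Real.toNNReal (f x * g x) : ℝ) * (-r' x * (g (r x) / g x))
        = -r' x * (F x * g (r x)) := by
    intro t hts x hx
    have hg := hgpos x (hts hx)
    have hgne : g x ≠ 0 := ne_of_gt hg
    have hmax : (Real.toNNReal (f x * g x) : ℝ) = F x * g x := by
      rw [Real.coe_toNNReal', hFdef]
      rw [max_mul_of_nonneg _ _ hg.le, zero_mul]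
    rw [hmax]
    field_simp
  -- numerator 1
  have hN1 : ∫ x in Set.Iio p, -r' x * (g (r x) / g x) ∂ν = (ν (Set.Ici p)).toReal := by
    rw [hmain _ measurableSet_Iio, hIio,
      setIntegral_congr_fun measurableSet_Ico (hptwise _ hIcoSub),
      ← hCoV _ measurableSet_Ico hIcoSub, him1, hAci,
      integral_Icc_eq_integral_Ioc]
  -- numerator 2
  have hN2 : ∫ x in Set.Ioi p, -r' x * (g (r x) / g x) ∂ν = (ν (Set.Iio p)).toReal := by
    rw [hmain _ measurableSet_Ioi, hIoi,
      setIntegral_congr_fun measurableSet_Ioc (hptwise _ hIocSub),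
      ← hCoV _ measurableSet_Ioc hIocSub, him2, hAio]
  -- null singleton
  have hνp : ν {p} = 0 := by
    rw [hνset _ (measurableSet_singleton p)]
    refine le_antisymm ?_ (zero_le)
    calc ∫⁻ x in {p} ∩ Set.Icc 0 1, ENNReal.ofReal (f x * g x) ∂volume
        ≤ ∫⁻ x in {p}, ENNReal.ofReal (f x * g x) ∂volume :=
          lintegral_mono_set Set.inter_subset_left
      _ = 0 := by
          rw [Measure.restrict_eq_zero.2 (by simp), lintegral_zero_measure]
  have hd1 : Disjoint (Set.Iio p) ({p} : Set ℝ) := by simp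
  have hd2 : Disjoint (Set.Ioi p) ({p} : Set ℝ) := by simp
  have hIicIio : ν (Set.Iic p) = ν (Set.Iio p) := by
    rw [← Set.Iio_union_right, measure_union hd1 (measurableSet_singleton p), hνp, add_zero]
  have hIoiIci : ν (Set.Ioi p) = ν (Set.Ici p) := by
    rw [← Set.Ioi_union_left, measure_union hd2 (measurableSet_singleton p), hνp, add_zero]
  -- complement
  have hcompl : (ν (Set.Iio p)).toReal = 1 - (ν (Set.Ici p)).toReal := by
    have h := measure_compl (measurableSet_Ici (a := p)) (measure_ne_top ν _)
    rw [Set.compl_Ici, measure_univ] at h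
    rw [h, ENNReal.toReal_sub_of_le prob_le_one ENNReal.one_ne_top, ENNReal.toReal_one]
  constructor
  · rw [hN1, hcompl]
  · rw [hN2, hIoiIci, congrArg ENNReal.toReal hIicIio, hcompl, sub_sub_cancel]
end

section
/- Let a, b ∈ ℝ \ {0} be of the same sign and set p = a/(a+b) ∈ (0,1). Then there exists a unique continuous decreasing function r_p : [0,1] → [0,1] such that x^a (1−x)^b = r_p(x)^a (1−r_p(x))^b for all x ∈ (0,1); this function depends only on p. Moreover r_p is a smooth involution with fixed point p: r_p(r_p(x)) = x for all x ∈ [0,1], r_p(p) = p, r_p(0) = 1 and r_p(1) = 0. -/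
open Set Filter Real Topology

namespace Stmt15Aux

noncomputable def G (p x : ℝ) : ℝ := p * Real.log x + (1 - p) * Real.log (1 - x)

lemma hasDerivAt_G {p : ℝ} {x : ℝ} (hx : x ∈ Set.Ioo (0:ℝ) 1) :
    HasDerivAt (G p) ((p - x) / (x * (1 - x))) x := by
  have h1 : (0:ℝ) < x := hx.1
  have h2 : (0:ℝ) < 1 - x := by linarith [hx.2]
  have hlog1 : HasDerivAt (fun y : ℝ => Real.log y) x⁻¹ x := Real.hasDerivAt_log h1.ne'
  have hlog2 : HasDerivAt (fun y : ℝ => Real.log (1 - y)) ((1 - x)⁻¹ * (-1)) x := by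
    have : HasDerivAt (fun y : ℝ => 1 - y) (-1) x := (hasDerivAt_id x).const_sub 1
    exact (Real.hasDerivAt_log h2.ne').comp x this
  have := (hlog1.const_mul p).add (hlog2.const_mul (1 - p))
  refine this.congr_deriv ?_
  field_simp
  ring

lemma G_strictMonoOn {p : ℝ} (hp : p ∈ Set.Ioo (0:ℝ) 1) :
    StrictMonoOn (G p) (Set.Ioc 0 p) := by
  have hsub : Set.Ioc (0:ℝ) p ⊆ Set.Ioo 0 1 := fun z hz => ⟨hz.1, lt_of_le_of_lt hz.2 hp.2⟩
  apply strictMonoOn_of_deriv_pos (convex_Ioc 0 p)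
  · exact fun z hz => ((hasDerivAt_G (hsub hz)).continuousAt).continuousWithinAt
  · intro z hz
    rw [interior_Ioc] at hz
    have hz' : z ∈ Set.Ioo (0:ℝ) 1 := ⟨hz.1, lt_trans hz.2 hp.2⟩
    rw [(hasDerivAt_G hz').deriv]
    apply div_pos (by linarith [hz.2]) (mul_pos hz'.1 (by linarith [hz'.2]))

lemma G_strictAntiOn {p : ℝ} (hp : p ∈ Set.Ioo (0:ℝ) 1) :
    StrictAntiOn (G p) (Set.Ico p 1) := by
  have hsub : Set.Ico p (1:ℝ) ⊆ Set.Ioo 0 1 := fun z hz => ⟨lt_of_lt_of_le hp.1 hz.1, hz.2⟩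
  apply strictAntiOn_of_deriv_neg (convex_Ico p 1)
  · exact fun z hz => ((hasDerivAt_G (hsub hz)).continuousAt).continuousWithinAt
  · intro z hz
    rw [interior_Ico] at hz
    have hz' : z ∈ Set.Ioo (0:ℝ) 1 := ⟨lt_trans hp.1 hz.1, hz.2⟩
    rw [(hasDerivAt_G hz').deriv]
    apply div_neg_of_neg_of_pos (by linarith [hz.1]) (mul_pos hz'.1 (by linarith [hz'.2]))

lemma G_lt {p : ℝ} (hp : p ∈ Set.Ioo (0:ℝ) 1) {x : ℝ} (hx : x ∈ Set.Ioo (0:ℝ) 1)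
    (hxp : x ≠ p) : G p x < G p p := by
  rcases lt_or_gt_of_ne hxp with h | h
  · exact G_strictMonoOn hp ⟨hx.1, h.le⟩ ⟨hp.1, le_refl p⟩ h
  · exact G_strictAntiOn hp ⟨le_refl p, hp.2⟩ ⟨h.le, hx.2⟩ h

noncomputable def F (p x : ℝ) : ℝ := G p p - G p x

lemma F_pos {p : ℝ} (hp : p ∈ Set.Ioo (0:ℝ) 1) {x : ℝ} (hx : x ∈ Set.Ioo (0:ℝ) 1)
    (hxp : x ≠ p) : 0 < F p x := sub_pos.2 (G_lt hp hx hxp)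

lemma F_self (p : ℝ) : F p p = 0 := sub_self _

lemma F_nonneg {p : ℝ} (hp : p ∈ Set.Ioo (0:ℝ) 1) {x : ℝ} (hx : x ∈ Set.Ioo (0:ℝ) 1) :
    0 ≤ F p x := by
  rcases eq_or_ne x p with h | h
  · rw [h, F_self]
  · exact (F_pos hp hx h).le

noncomputable def psi (p x : ℝ) : ℝ :=
  if x < p then -Real.sqrt (F p x) else Real.sqrt (F p x)

lemma psi_of_le {p x : ℝ} (h : x ≤ p) : psi p x = -Real.sqrt (F p x) := by
  rcases lt_or_eq_of_le h with h | h
  · rw [psi, if_pos h]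
  · subst h; rw [psi, if_neg (lt_irrefl x), F_self, Real.sqrt_zero, neg_zero]

lemma psi_of_ge {p x : ℝ} (h : p ≤ x) : psi p x = Real.sqrt (F p x) := by
  rw [psi, if_neg (not_lt.2 h)]

lemma psi_self (p : ℝ) : psi p p = 0 := by
  rw [psi_of_ge (le_refl p), F_self, Real.sqrt_zero]

lemma psi_mul_self {p : ℝ} (hp : p ∈ Set.Ioo (0:ℝ) 1) {x : ℝ} (hx : x ∈ Set.Ioo (0:ℝ) 1) :
    psi p x * psi p x = F p x := by
  have h := Real.mul_self_sqrt (F_nonneg hp hx)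
  rcases le_or_gt x p with h' | h'
  · rw [psi_of_le h', neg_mul_neg, h]
  · rw [psi_of_ge h'.le, h]

lemma psi_strictMonoOn {p : ℝ} (hp : p ∈ Set.Ioo (0:ℝ) 1) :
    StrictMonoOn (psi p) (Set.Ioo 0 1) := by
  intro x hx y hy hxy
  rcases le_or_gt y p with hyp | hyp
  · have hGxy : G p x < G p y :=
      G_strictMonoOn hp ⟨hx.1, by linarith⟩ ⟨hy.1, hyp⟩ hxy
    rw [psi_of_le (by linarith), psi_of_le hyp, neg_lt_neg_iff]
    apply Real.sqrt_lt_sqrt (F_nonneg hp hy)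
    simp only [F]; linarith
  · rcases le_or_gt p x with hpx | hpx
    · have hGyx : G p y < G p x :=
        G_strictAntiOn hp ⟨hpx, hx.2⟩ ⟨by linarith, hy.2⟩ hxy
      rw [psi_of_ge hpx, psi_of_ge (by linarith)]
      apply Real.sqrt_lt_sqrt (F_nonneg hp hx)
      simp only [F]; linarith
    · rw [psi_of_le hpx.le, psi_of_ge hyp.le]
      have h1 : 0 < Real.sqrt (F p x) :=
        Real.sqrt_pos.2 (F_pos hp hx (ne_of_lt hpx))
      have h2 : 0 ≤ Real.sqrt (F p y) := Real.sqrt_nonneg _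
      linarith

lemma continuousOn_G {p : ℝ} {s : Set ℝ} (hs : s ⊆ Set.Ioo 0 1) :
    ContinuousOn (G p) s :=
  fun z hz => ((hasDerivAt_G (hs hz)).continuousAt).continuousWithinAt

lemma G_le_self {p : ℝ} (hp : p ∈ Set.Ioo (0:ℝ) 1) {x : ℝ} (hx : x ∈ Set.Ioo (0:ℝ) 1) :
    G p x ≤ G p p := by
  rcases eq_or_ne x p with h | h
  · rw [h]
  · exact (G_lt hp hx h).le

lemma exists_conj {p : ℝ} (hp : p ∈ Set.Ioo (0:ℝ) 1) {x : ℝ} (hx : x ∈ Set.Ioo (0:ℝ) 1) :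
    ∃ y ∈ Set.Ioo (0:ℝ) 1, psi p y = -psi p x := by
  have hp0 := hp.1; have hp1 := hp.2
  rcases le_or_gt x p with hxp | hxp
  · -- x ≤ p : find y on the right of p
    set y₀ : ℝ := max ((1+p)/2) (1 - Real.exp (G p x / (1-p))) with hy₀def
    have hy₀1 : y₀ < 1 := by
      apply max_lt (by linarith) (by linarith [Real.exp_pos (G p x / (1-p))])
    have hpy₀ : p ≤ y₀ := le_trans (by linarith) (le_max_left _ _)
    have hy₀0 : 0 < y₀ := lt_of_lt_of_le hp0 hpy₀
    have hGy₀ : G p y₀ ≤ G p x := by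
      have hlog1 : Real.log y₀ ≤ 0 := Real.log_nonpos hy₀0.le hy₀1.le
      have h1y₀ : 0 < 1 - y₀ := by linarith
      have hle : 1 - y₀ ≤ Real.exp (G p x / (1-p)) := by
        have := le_max_right ((1+p)/2) (1 - Real.exp (G p x / (1-p)))
        linarith
      have hlog2 : Real.log (1 - y₀) ≤ G p x / (1-p) := by
        calc Real.log (1 - y₀) ≤ Real.log (Real.exp (G p x / (1-p))) :=
              Real.log_le_log h1y₀ hle
          _ = G p x / (1-p) := Real.log_exp _
      have h2 : (1-p) * Real.log (1 - y₀) ≤ (1-p) * (G p x / (1-p)) :=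
        mul_le_mul_of_nonneg_left hlog2 (by linarith)
      have h3 : (1-p) * (G p x / (1-p)) = G p x := by
        rw [mul_comm, div_mul_cancel₀ _ (by linarith : (1:ℝ)-p ≠ 0)]
      have h4 : p * Real.log y₀ ≤ 0 := mul_nonpos_of_nonneg_of_nonpos hp0.le hlog1
      calc G p y₀ = p * Real.log y₀ + (1-p) * Real.log (1 - y₀) := rfl
        _ ≤ 0 + (1-p) * (G p x / (1-p)) := by linarith
        _ = G p x := by rw [zero_add, h3]
    have hsub : Set.Icc p y₀ ⊆ Set.Ioo (0:ℝ) 1 :=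
      fun z hz => ⟨lt_of_lt_of_le hp0 hz.1, lt_of_le_of_lt hz.2 hy₀1⟩
    have hmem : G p x ∈ Set.Icc (G p y₀) (G p p) := ⟨hGy₀, G_le_self hp hx⟩
    obtain ⟨y, hy, hGy⟩ := intermediate_value_Icc' hpy₀ (continuousOn_G hsub) hmem
    refine ⟨y, hsub hy, ?_⟩
    rw [psi_of_ge hy.1, psi_of_le hxp, neg_neg]
    congr 1
    simp only [F, hGy]
  · -- p < x : find y on the left of p
    set y₀ : ℝ := min (p/2) (Real.exp (G p x / p)) with hy₀def
    have hy₀0 : 0 < y₀ := lt_min (by linarith) (Real.exp_pos _)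
    have hy₀p : y₀ ≤ p := le_trans (min_le_left _ _) (by linarith)
    have hy₀1 : y₀ < 1 := lt_of_le_of_lt hy₀p hp1
    have hGy₀ : G p y₀ ≤ G p x := by
      have h1y₀ : 0 < 1 - y₀ := by linarith
      have hlog1 : Real.log (1 - y₀) ≤ 0 := Real.log_nonpos h1y₀.le (by linarith)
      have hlog2 : Real.log y₀ ≤ G p x / p := by
        calc Real.log y₀ ≤ Real.log (Real.exp (G p x / p)) :=
              Real.log_le_log hy₀0 (min_le_right _ _)
          _ = G p x / p := Real.log_exp _
      have h2 : p * Real.log y₀ ≤ p * (G p x / p) :=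
        mul_le_mul_of_nonneg_left hlog2 hp0.le
      have h3 : p * (G p x / p) = G p x := by
        rw [mul_comm, div_mul_cancel₀ _ (by linarith : p ≠ 0)]
      have h4 : (1-p) * Real.log (1 - y₀) ≤ 0 :=
        mul_nonpos_of_nonneg_of_nonpos (by linarith) hlog1
      calc G p y₀ = p * Real.log y₀ + (1-p) * Real.log (1 - y₀) := rfl
        _ ≤ p * (G p x / p) + 0 := by linarith
        _ = G p x := by rw [add_zero, h3]
    have hsub : Set.Icc y₀ p ⊆ Set.Ioo (0:ℝ) 1 :=
      fun z hz => ⟨lt_of_lt_of_le hy₀0 hz.1, lt_of_le_of_lt hz.2 hp1⟩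
    have hmem : G p x ∈ Set.Icc (G p y₀) (G p p) := ⟨hGy₀, G_le_self hp hx⟩
    obtain ⟨y, hy, hGy⟩ := intermediate_value_Icc hy₀p (continuousOn_G hsub) hmem
    refine ⟨y, hsub hy, ?_⟩
    rw [psi_of_le hy.2, psi_of_ge hxp.le]
    congr 1
    simp only [F, hGy]

noncomputable def rr (p : ℝ) : ℝ → ℝ := fun x =>
  if h : p ∈ Set.Ioo (0:ℝ) 1 ∧ x ∈ Set.Ioo (0:ℝ) 1 then
    Classical.choose (exists_conj h.1 h.2)
  else 1 - x

lemma rr_spec {p : ℝ} (hp : p ∈ Set.Ioo (0:ℝ) 1) {x : ℝ} (hx : x ∈ Set.Ioo (0:ℝ) 1) :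
    rr p x ∈ Set.Ioo (0:ℝ) 1 ∧ psi p (rr p x) = -psi p x := by
  rw [rr, dif_pos ⟨hp, hx⟩]
  exact Classical.choose_spec (exists_conj hp hx)

lemma rr_zero (p : ℝ) : rr p 0 = 1 := by
  rw [rr, dif_neg, sub_zero]
  rintro ⟨-, h⟩; exact lt_irrefl 0 h.1

lemma rr_one (p : ℝ) : rr p 1 = 0 := by
  rw [rr, dif_neg, sub_self]
  rintro ⟨-, h⟩; exact lt_irrefl 1 h.2

lemma rr_G {p : ℝ} (hp : p ∈ Set.Ioo (0:ℝ) 1) {x : ℝ} (hx : x ∈ Set.Ioo (0:ℝ) 1) :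
    G p (rr p x) = G p x := by
  obtain ⟨hmem, hpsi⟩ := rr_spec hp hx
  have h1 := psi_mul_self hp hmem
  have h2 := psi_mul_self hp hx
  rw [hpsi, neg_mul_neg] at h1
  simp only [F] at h1 h2
  linarith

lemma rr_invol {p : ℝ} (hp : p ∈ Set.Ioo (0:ℝ) 1) {x : ℝ} (hx : x ∈ Set.Ioo (0:ℝ) 1) :
    rr p (rr p x) = x := by
  obtain ⟨hmem, hpsi⟩ := rr_spec hp hx
  obtain ⟨hmem2, hpsi2⟩ := rr_spec hp hmem
  apply (psi_strictMonoOn hp).injOn hmem2 hx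
  rw [hpsi2, hpsi, neg_neg]

lemma rr_fixed {p : ℝ} (hp : p ∈ Set.Ioo (0:ℝ) 1) : rr p p = p := by
  obtain ⟨hmem, hpsi⟩ := rr_spec hp hp
  apply (psi_strictMonoOn hp).injOn hmem hp
  rw [hpsi, psi_self, neg_zero]

lemma rr_ne {p : ℝ} (hp : p ∈ Set.Ioo (0:ℝ) 1) {x : ℝ} (hx : x ∈ Set.Ioo (0:ℝ) 1)
    (hxp : x ≠ p) : rr p x ≠ x := by
  intro h
  obtain ⟨hmem, hpsi⟩ := rr_spec hp hx
  rw [h] at hpsi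
  have hpsix : psi p x = 0 := by linarith
  have := psi_mul_self hp hx
  rw [hpsix, mul_zero] at this
  exact absurd this.symm (ne_of_gt (F_pos hp hx hxp))

lemma rr_ne_p {p : ℝ} (hp : p ∈ Set.Ioo (0:ℝ) 1) {x : ℝ} (hx : x ∈ Set.Ioo (0:ℝ) 1)
    (hxp : x ≠ p) : rr p x ≠ p := by
  intro h
  obtain ⟨hmem, hpsi⟩ := rr_spec hp hx
  rw [h, psi_self] at hpsi
  have hpsix : psi p x = 0 := by linarith
  have := psi_mul_self hp hx
  rw [hpsix, mul_zero] at this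
  exact absurd this.symm (ne_of_gt (F_pos hp hx hxp))

lemma rr_strictAntiOn {p : ℝ} (hp : p ∈ Set.Ioo (0:ℝ) 1) :
    StrictAntiOn (rr p) (Set.Icc 0 1) := by
  intro x hx y hy hxy
  rcases eq_or_lt_of_le hx.1 with hx0 | hx0
  · -- x = 0
    rw [← hx0, rr_zero]
    rcases eq_or_lt_of_le hy.2 with hy1 | hy1
    · rw [hy1, rr_one]; norm_num
    · exact (rr_spec hp ⟨by rw [← hx0] at hxy; exact hxy, hy1⟩).1.2
  · rcases eq_or_lt_of_le hy.2 with hy1 | hy1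
    · -- y = 1
      rw [hy1, rr_one]
      exact (rr_spec hp ⟨hx0, by rw [hy1] at hxy; exact hxy⟩).1.1
    · -- both interior
      have hxI : x ∈ Set.Ioo (0:ℝ) 1 := ⟨hx0, lt_trans hxy hy1⟩
      have hyI : y ∈ Set.Ioo (0:ℝ) 1 := ⟨lt_trans hx0 hxy, hy1⟩
      obtain ⟨hmx, hpx⟩ := rr_spec hp hxI
      obtain ⟨hmy, hpy⟩ := rr_spec hp hyI
      have h1 : psi p x < psi p y := psi_strictMonoOn hp hxI hyI hxy
      have h2 : psi p (rr p y) < psi p (rr p x) := by rw [hpx, hpy]; linarith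
      exact ((psi_strictMonoOn hp).lt_iff_lt hmy hmx).1 h2

lemma rr_mapsTo {p : ℝ} (hp : p ∈ Set.Ioo (0:ℝ) 1) :
    Set.MapsTo (rr p) (Set.Icc 0 1) (Set.Icc 0 1) := by
  intro x hx
  rcases eq_or_lt_of_le hx.1 with hx0 | hx0
  · rw [← hx0, rr_zero]; exact ⟨zero_le_one, le_refl 1⟩
  · rcases eq_or_lt_of_le hx.2 with hx1 | hx1
    · rw [hx1, rr_one]; exact ⟨le_refl 0, zero_le_one⟩
    · have := (rr_spec hp ⟨hx0, hx1⟩).1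
      exact ⟨this.1.le, this.2.le⟩

lemma rr_invol_Icc {p : ℝ} (hp : p ∈ Set.Ioo (0:ℝ) 1) {x : ℝ} (hx : x ∈ Set.Icc (0:ℝ) 1) :
    rr p (rr p x) = x := by
  rcases eq_or_lt_of_le hx.1 with hx0 | hx0
  · rw [← hx0, rr_zero, rr_one]
  · rcases eq_or_lt_of_le hx.2 with hx1 | hx1
    · rw [hx1, rr_one, rr_zero]
    · exact rr_invol hp ⟨hx0, hx1⟩

lemma sol_cases {p : ℝ} (hp : p ∈ Set.Ioo (0:ℝ) 1) {x y : ℝ} (hx : x ∈ Set.Ioo (0:ℝ) 1)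
    (hy : y ∈ Set.Ioo (0:ℝ) 1) (hG : G p y = G p x) : y = x ∨ y = rr p x := by
  have h1 : psi p y * psi p y = psi p x * psi p x := by
    rw [psi_mul_self hp hy, psi_mul_self hp hx]
    simp only [F, hG]
  rcases mul_self_eq_mul_self_iff.1 h1 with h | h
  · exact Or.inl ((psi_strictMonoOn hp).injOn hy hx h)
  · right
    obtain ⟨hmem, hpsi⟩ := rr_spec hp hx
    exact (psi_strictMonoOn hp).injOn hy hmem (by rw [hpsi, h])

/-- A strictly antitone involution of `[0,1]` is continuous on `[0,1]`. -/
lemma continuousOn_of_invol {r : ℝ → ℝ} (hanti : StrictAntiOn r (Set.Icc 0 1))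
    (hmaps : Set.MapsTo r (Set.Icc 0 1) (Set.Icc 0 1))
    (hinvol : ∀ x ∈ Set.Icc (0:ℝ) 1, r (r x) = x) :
    ContinuousOn r (Set.Icc 0 1) := by
  intro x₀ hx₀
  rw [ContinuousWithinAt]
  rw [tendsto_order]
  constructor
  · intro c hc
    rcases lt_or_ge c 0 with hc0 | hc0
    · filter_upwards [self_mem_nhdsWithin] with x hx
      exact lt_of_lt_of_le hc0 (hmaps hx).1
    · have hcI : c ∈ Set.Icc (0:ℝ) 1 := ⟨hc0, le_trans hc.le (hmaps hx₀).2⟩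
      have h1 : x₀ < r c := by
        have := hanti hcI (hmaps hx₀) hc
        rwa [hinvol x₀ hx₀] at this
      filter_upwards [mem_nhdsWithin_of_mem_nhds (Iio_mem_nhds h1), self_mem_nhdsWithin]
        with x hx1 hx2
      have := hanti hx2 (hmaps hcI) hx1
      rwa [hinvol c hcI] at this
  · intro c hc
    rcases le_or_gt c 1 with hc1 | hc1
    · have hcI : c ∈ Set.Icc (0:ℝ) 1 := ⟨le_trans (hmaps hx₀).1 hc.le, hc1⟩
      have h1 : r c < x₀ := by
        have := hanti (hmaps hx₀) hcI hc
        rwa [hinvol x₀ hx₀] at this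
      filter_upwards [mem_nhdsWithin_of_mem_nhds (Ioi_mem_nhds h1), self_mem_nhdsWithin]
        with x hx1 hx2
      have := hanti (hmaps hcI) hx2 hx1
      rwa [hinvol c hcI] at this
    · filter_upwards [self_mem_nhdsWithin] with x hx
      exact lt_of_le_of_lt (hmaps hx).2 hc1

lemma add_ne_zero_of_sign {a b : ℝ} (hsign : 0 < a * b) : a + b ≠ 0 := by
  rcases mul_pos_iff.1 hsign with ⟨h1, h2⟩ | ⟨h1, h2⟩ <;> intro h <;> linarith

lemma p_mem {a b : ℝ} (hsign : 0 < a * b) : a / (a + b) ∈ Set.Ioo (0:ℝ) 1 := by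
  rcases mul_pos_iff.1 hsign with ⟨h1, h2⟩ | ⟨h1, h2⟩
  · constructor
    · exact div_pos h1 (by linarith)
    · rw [div_lt_one (by linarith)]; linarith
  · constructor
    · exact div_pos_of_neg_of_neg h1 (by linarith)
    · have he : a/(a+b) = (-a)/((-a)+(-b)) := by
        rw [← neg_add]; exact (neg_div_neg_eq a (a+b)).symm
      rw [he, div_lt_one (by linarith)]; linarith

lemma G_mul {a b : ℝ} (hsign : 0 < a * b) (z : ℝ) :
    G (a/(a+b)) z * (a + b) = a * Real.log z + b * Real.log (1 - z) := by
  have hab : a + b ≠ 0 := add_ne_zero_of_sign hsign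
  simp only [G]
  field_simp
  ring

lemma rpow_eq_iff {a b : ℝ} (ha : a ≠ 0) (hb : b ≠ 0) (hsign : 0 < a * b) {x y : ℝ}
    (hx : x ∈ Set.Ioo (0:ℝ) 1) (hy : y ∈ Set.Ioo (0:ℝ) 1) :
    (x ^ a * (1 - x) ^ b = y ^ a * (1 - y) ^ b) ↔ G (a/(a+b)) x = G (a/(a+b)) y := by
  have hab : a + b ≠ 0 := add_ne_zero_of_sign hsign
  have hx0 : (0:ℝ) < x := hx.1
  have hx1 : (0:ℝ) < 1 - x := by linarith [hx.2]
  have hy0 : (0:ℝ) < y := hy.1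
  have hy1 : (0:ℝ) < 1 - y := by linarith [hy.2]
  rw [Real.rpow_def_of_pos hx0, Real.rpow_def_of_pos hx1, Real.rpow_def_of_pos hy0,
    Real.rpow_def_of_pos hy1, ← Real.exp_add, ← Real.exp_add, Real.exp_eq_exp]
  constructor
  · intro h
    apply mul_right_cancel₀ hab
    rw [G_mul hsign, G_mul hsign]
    linarith
  · intro h
    have := congrArg (fun t => t * (a + b)) h
    rw [G_mul hsign, G_mul hsign] at this
    linarith

lemma contDiffAt_G {p : ℝ} {x : ℝ} (hx : x ∈ Set.Ioo (0:ℝ) 1) :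
    ContDiffAt ℝ (⊤ : ℕ∞) (G p) x := by
  have h1 : ContDiffAt ℝ (⊤ : ℕ∞) Real.log x := Real.contDiffAt_log.2 hx.1.ne'
  have h2 : ContDiffAt ℝ (⊤ : ℕ∞) (fun y : ℝ => Real.log (1 - y)) x := by
    have hs : ContDiffAt ℝ (⊤ : ℕ∞) (fun y : ℝ => 1 - y) x := contDiffAt_const.sub contDiffAt_id
    exact (Real.contDiffAt_log.2 (by linarith [hx.2] : (1:ℝ) - x ≠ 0)).comp x hs
  exact (contDiffAt_const.mul h1).add (contDiffAt_const.mul h2)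

lemma analyticAt_F {p : ℝ} (hp : p ∈ Set.Ioo (0:ℝ) 1) : AnalyticAt ℝ (F p) p := by
  have h1 : ContDiffAt ℝ (⊤ : WithTop ℕ∞) Real.log p := Real.contDiffAt_log.2 hp.1.ne'
  have h2 : ContDiffAt ℝ (⊤ : WithTop ℕ∞) (fun y : ℝ => Real.log (1 - y)) p :=
    (Real.contDiffAt_log.2 (by linarith [hp.2] : (1:ℝ) - p ≠ 0)).comp p
      (contDiffAt_const.sub contDiffAt_id)
  show AnalyticAt ℝ (fun x => G p p - (p * Real.log x + (1 - p) * Real.log (1 - x))) p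
  exact (contDiffAt_const.sub ((contDiffAt_const.mul h1).add (contDiffAt_const.mul h2))).analyticAt

noncomputable def hh (p : ℝ) : ℝ → ℝ := dslope (dslope (F p) p) p

lemma analyticAt_hh {p : ℝ} (hp : p ∈ Set.Ioo (0:ℝ) 1) : AnalyticAt ℝ (hh p) p := by
  obtain ⟨pf, hpf⟩ := analyticAt_F hp
  exact ⟨_, hpf.has_fpower_series_dslope_fslope.has_fpower_series_dslope_fslope⟩

lemma deriv_F {p : ℝ} (hp : p ∈ Set.Ioo (0:ℝ) 1) : deriv (F p) p = 0 := by
  have h := ((hasDerivAt_G (p := p) hp).const_sub (G p p)).deriv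
  show deriv (fun x => G p p - G p x) p = 0
  simpa using h

lemma F_eq {p : ℝ} (hp : p ∈ Set.Ioo (0:ℝ) 1) (x : ℝ) :
    F p x = (x - p)^2 * hh p x := by
  rcases eq_or_ne x p with h | h
  · rw [h, F_self, sub_self]; ring
  · have hxp : x - p ≠ 0 := sub_ne_zero.2 h
    have h1 : dslope (F p) p x = F p x / (x - p) := by
      rw [dslope_of_ne _ h, slope_def_field, F_self, sub_zero]
    have h2 : hh p x = (dslope (F p) p x - deriv (F p) p) / (x - p) := by
      rw [hh, dslope_of_ne _ h, slope_def_field, dslope_same]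
    rw [h2, deriv_F hp, sub_zero, h1]
    field_simp

lemma hh_val {p : ℝ} (hp : p ∈ Set.Ioo (0:ℝ) 1) :
    1 / (p * (1 - p)) = 2 * hh p p := by
  have hA : ∀ᶠ y in 𝓝 p, AnalyticAt ℝ (hh p) y := (analyticAt_hh hp).eventually_analyticAt
  have hD : AnalyticAt ℝ (deriv (hh p)) p := by
    have h1 : AnalyticOnNhd ℝ (hh p) {y | AnalyticAt ℝ (hh p) y} := fun y hy => hy
    exact h1.deriv p (analyticAt_hh hp)
  have hkey : ∀ᶠ x in 𝓝[≠] p, 1/(x*(1-x)) = 2 * hh p x + (x - p) * deriv (hh p) x := by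
    have hIoo : Set.Ioo (0:ℝ) 1 ∈ 𝓝 p := isOpen_Ioo.mem_nhds hp
    filter_upwards [nhdsWithin_le_nhds hA, nhdsWithin_le_nhds hIoo, self_mem_nhdsWithin]
      with x hx1 hx2 hx3
    have hx3' : x ≠ p := hx3
    have hd1 : HasDerivAt (F p) ((x - p)/(x * (1-x))) x := by
      have h := (hasDerivAt_G (p := p) hx2).const_sub (G p p)
      refine h.congr_deriv ?_
      · rw [← neg_div, neg_sub]
    have hd2 : HasDerivAt (fun y => (y - p)^2 * hh p y)
        (2*(x-p)*hh p x + (x-p)^2 * deriv (hh p) x) x := by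
      have ha : HasDerivAt (fun y : ℝ => (y - p)^2) (2*(x-p)) x := by
        have h := ((hasDerivAt_id x).sub_const p).pow 2
        simp at h; exact h
      have hb : HasDerivAt (hh p) (deriv (hh p) x) x := hx1.differentiableAt.hasDerivAt
      exact ha.mul hb
    have hFeq : F p = fun y => (y - p)^2 * hh p y := funext (F_eq hp)
    rw [hFeq] at hd1
    have huniq := hd1.unique hd2
    have hxp : x - p ≠ 0 := sub_ne_zero.2 hx3'
    apply mul_left_cancel₀ hxp
    calc (x - p) * (1/(x*(1-x))) = (x-p)/(x*(1-x)) := by ring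
      _ = 2*(x-p)*hh p x + (x-p)^2 * deriv (hh p) x := huniq
      _ = (x-p) * (2 * hh p x + (x - p) * deriv (hh p) x) := by ring
  have hne : p * (1 - p) ≠ 0 :=
    mul_ne_zero hp.1.ne' (by linarith [hp.2] : (1:ℝ) - p ≠ 0)
  have t1 : Tendsto (fun x => 1/(x*(1-x))) (𝓝[≠] p) (𝓝 (1/(p*(1-p)))) := by
    apply Tendsto.mono_left _ nhdsWithin_le_nhds
    exact (continuousAt_const.div
      (continuousAt_id.mul (continuousAt_const.sub continuousAt_id)) hne)
  have t2 : Tendsto (fun x => 2 * hh p x + (x - p) * deriv (hh p) x) (𝓝 p)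
      (𝓝 (2 * hh p p + (p - p) * deriv (hh p) p)) :=
    (continuousAt_const.mul (analyticAt_hh hp).continuousAt).add
      ((continuousAt_id.sub continuousAt_const).mul hD.continuousAt)
  have t2' : Tendsto (fun x => 2 * hh p x + (x - p) * deriv (hh p) x) (𝓝[≠] p)
      (𝓝 (2 * hh p p)) := by
    have h := t2.mono_left (nhdsWithin_le_nhds : 𝓝[≠] p ≤ 𝓝 p)
    simpa using h
  exact tendsto_nhds_unique t1 (t2'.congr' (hkey.mono fun x h => h.symm))

lemma hh_pos {p : ℝ} (hp : p ∈ Set.Ioo (0:ℝ) 1) : 0 < hh p p := by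
  have h := hh_val hp
  have h1 : 0 < p * (1 - p) := mul_pos hp.1 (by linarith [hp.2])
  have h2 : 0 < 1 / (p * (1 - p)) := by positivity
  linarith

lemma psi_eq_rho {p : ℝ} (hp : p ∈ Set.Ioo (0:ℝ) 1) (x : ℝ) (hx : 0 ≤ hh p x) :
    psi p x = (x - p) * Real.sqrt (hh p x) := by
  have hs : Real.sqrt (F p x) = |x - p| * Real.sqrt (hh p x) := by
    rw [F_eq hp, Real.sqrt_mul (sq_nonneg _), Real.sqrt_sq_eq_abs]
  rcases le_or_gt x p with h | h
  · rw [psi_of_le h, hs, abs_of_nonpos (sub_nonpos.2 h)]; ring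
  · rw [psi_of_ge h.le, hs, abs_of_pos (sub_pos.2 h)]

lemma contDiffAt_rr {p : ℝ} (hp : p ∈ Set.Ioo (0:ℝ) 1)
    (hcont : ContinuousOn (rr p) (Set.Icc 0 1)) {x₀ : ℝ} (hx₀ : x₀ ∈ Set.Ioo (0:ℝ) 1) :
    ContDiffAt ℝ (⊤ : ℕ∞) (rr p) x₀ := by
  have hrrcont : ContinuousAt (rr p) x₀ :=
    hcont.continuousAt (Icc_mem_nhds hx₀.1 hx₀.2)
  by_cases hxp : x₀ = p
  · subst hxp
    have hhp := hh_pos hp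
    have hc : Real.sqrt (hh x₀ x₀) ≠ 0 := ne_of_gt (Real.sqrt_pos.2 hhp)
    have hsq : ContDiffAt ℝ (⊤ : ℕ∞) (fun x => Real.sqrt (hh x₀ x)) x₀ :=
      ((analyticAt_hh hp).contDiffAt).sqrt (ne_of_gt hhp)
    set rho : ℝ → ℝ := fun x => (x - x₀) * Real.sqrt (hh x₀ x) with hrhodef
    have hrho_cd : ContDiffAt ℝ (⊤ : ℕ∞) rho x₀ := (contDiffAt_id.sub contDiffAt_const).mul hsq
    have hder : HasDerivAt rho (Real.sqrt (hh x₀ x₀)) x₀ := by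
      have h1 : HasDerivAt (fun x : ℝ => x - x₀) 1 x₀ := (hasDerivAt_id x₀).sub_const x₀
      have h2 : HasDerivAt (fun x => Real.sqrt (hh x₀ x))
          (deriv (fun x => Real.sqrt (hh x₀ x)) x₀) x₀ :=
        (hsq.differentiableAt (by simp)).hasDerivAt
      have h := h1.mul h2
      refine h.congr_deriv ?_
      simp
    have hfd := hder.hasFDerivAt_equiv hc
    have hstrict := hrho_cd.hasStrictFDerivAt' hfd (by simp)
    have hcdli := hrho_cd.to_localInverse hfd (by simp)
    have hevl : ∀ᶠ z in 𝓝 x₀, (hrho_cd.localInverse hfd (by simp)) (rho z) = z :=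
      hstrict.eventually_left_inverse
    have hrho0 : rho x₀ = 0 := by simp [hrhodef]
    have htd : Tendsto (rr x₀) (𝓝 x₀) (𝓝 x₀) := by
      have h := hrrcont.tendsto
      rwa [rr_fixed hp] at h
    have hpos' : ∀ᶠ x in 𝓝 x₀, 0 < hh x₀ x :=
      (analyticAt_hh hp).continuousAt.eventually_const_lt hhp
    have hposr : ∀ᶠ x in 𝓝 x₀, 0 < hh x₀ (rr x₀ x) := htd.eventually hpos'
    have hIoo : ∀ᶠ x in 𝓝 x₀, x ∈ Set.Ioo (0:ℝ) 1 := isOpen_Ioo.mem_nhds hp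
    have hevli : ∀ᶠ x in 𝓝 x₀, (hrho_cd.localInverse hfd (by simp)) (rho (rr x₀ x)) = rr x₀ x :=
      htd.eventually hevl
    have heq : (fun x => (hrho_cd.localInverse hfd (by simp)) (-(rho x))) =ᶠ[𝓝 x₀] rr x₀ := by
      filter_upwards [hpos', hposr, hIoo, hevli] with x h1 h2 h3 h4
      have hrho_eq : rho (rr x₀ x) = -(rho x) := by
        have e1 : rho x = psi x₀ x := (psi_eq_rho hp x h1.le).symm
        have e2 : rho (rr x₀ x) = psi x₀ (rr x₀ x) := (psi_eq_rho hp _ h2.le).symm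
        rw [e1, e2, (rr_spec hp h3).2]
      rw [← hrho_eq, h4]
    have hcd : ContDiffAt ℝ (⊤ : ℕ∞) (fun x => (hrho_cd.localInverse hfd (by simp)) (-(rho x))) x₀ := by
      have hg : ContDiffAt ℝ (⊤ : ℕ∞) (hrho_cd.localInverse hfd (by simp)) (-(rho x₀)) := by
        rw [hrho0, neg_zero, ← hrho0]
        exact hcdli
      exact hg.comp x₀ hrho_cd.neg
    exact hcd.congr_of_eventuallyEq heq.symm
  · have hy₀ : rr p x₀ ∈ Set.Ioo (0:ℝ) 1 := (rr_spec hp hx₀).1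
    have hy₀p : rr p x₀ ≠ p := rr_ne_p hp hx₀ hxp
    have hcdG : ContDiffAt ℝ (⊤ : ℕ∞) (G p) (rr p x₀) := contDiffAt_G hy₀
    have hd : HasDerivAt (G p) ((p - rr p x₀)/(rr p x₀*(1-rr p x₀))) (rr p x₀) :=
      hasDerivAt_G hy₀
    have hdne : (p - rr p x₀)/(rr p x₀*(1-rr p x₀)) ≠ 0 :=
      div_ne_zero (sub_ne_zero.2 (Ne.symm hy₀p))
        (mul_ne_zero hy₀.1.ne' (by intro h; linarith [hy₀.2] : (1:ℝ) - rr p x₀ ≠ 0))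
    have hfd := hd.hasFDerivAt_equiv hdne
    have hstrict := hcdG.hasStrictFDerivAt' hfd (by simp)
    have hcdli := hcdG.to_localInverse hfd (by simp)
    have hevl : ∀ᶠ z in 𝓝 (rr p x₀), (hcdG.localInverse hfd (by simp)) (G p z) = z :=
      hstrict.eventually_left_inverse
    have htd : Tendsto (rr p) (𝓝 x₀) (𝓝 (rr p x₀)) := hrrcont.tendsto
    have hIoo : ∀ᶠ x in 𝓝 x₀, x ∈ Set.Ioo (0:ℝ) 1 := isOpen_Ioo.mem_nhds hx₀
    have heq : (fun x => (hcdG.localInverse hfd (by simp)) (G p x)) =ᶠ[𝓝 x₀] rr p := by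
      filter_upwards [htd.eventually hevl, hIoo] with x h1 h2
      rw [← rr_G hp h2]
      exact h1
    have hcd : ContDiffAt ℝ (⊤ : ℕ∞) (fun x => (hcdG.localInverse hfd (by simp)) (G p x)) x₀ := by
      have hg : ContDiffAt ℝ (⊤ : ℕ∞) (hcdG.localInverse hfd (by simp)) (G p x₀) := by
        rw [← rr_G hp hx₀]
        exact hcdli
      exact hg.comp x₀ (contDiffAt_G hx₀)
    exact hcd.congr_of_eventuallyEq heq.symm

lemma rr_eqOn {p : ℝ} (hp : p ∈ Set.Ioo (0:ℝ) 1)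
    (hcont_rr : ContinuousOn (rr p) (Set.Icc 0 1)) {r₂ : ℝ → ℝ}
    (hc : ContinuousOn r₂ (Set.Icc 0 1)) (hanti : StrictAntiOn r₂ (Set.Icc 0 1))
    (h2 : ∀ x ∈ Set.Ioo (0:ℝ) 1, r₂ x ∈ Set.Ioo (0:ℝ) 1 ∧ G p (r₂ x) = G p x) :
    Set.EqOn (rr p) r₂ (Set.Icc 0 1) := by
  have hsub : Set.Ioo (0:ℝ) 1 ⊆ Set.Icc 0 1 := Set.Ioo_subset_Icc_self
  -- no interior fixed point other than p
  have claim1 : ∀ x ∈ Set.Ioo (0:ℝ) 1, x ≠ p → r₂ x ≠ x := by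
    intro x hx hxp hcontra
    rcases lt_or_gt_of_ne hxp with hlt | hgt
    · -- x < p ; on (0,x), r₂ = rr p
      have hIoo : ∀ y ∈ Set.Ioo (0:ℝ) x, r₂ y = rr p y := by
        intro y hy
        have hyI : y ∈ Set.Ioo (0:ℝ) 1 := ⟨hy.1, lt_trans hy.2 hx.2⟩
        obtain ⟨hmem, hG⟩ := h2 y hyI
        rcases sol_cases hp hyI hmem hG with h | h
        · exfalso
          have h1 : r₂ x < r₂ y := hanti (hsub hyI) (hsub hx) hy.2
          rw [hcontra, h] at h1
          exact absurd h1 (not_lt.2 hy.2.le)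
        · exact h
      haveI : (𝓝[Set.Ioo (0:ℝ) x] x).NeBot := by
        apply mem_closure_iff_nhdsWithin_neBot.1
        rw [closure_Ioo hx.1.ne]
        exact ⟨hx.1.le, le_refl x⟩
      have hsub2 : Set.Ioo (0:ℝ) x ⊆ Set.Icc 0 1 :=
        fun z hz => ⟨hz.1.le, le_trans hz.2.le hx.2.le⟩
      have T1 : Tendsto r₂ (𝓝[Set.Ioo (0:ℝ) x] x) (𝓝 (r₂ x)) :=
        (hc x (hsub hx)).tendsto.mono_left (nhdsWithin_mono x hsub2)
      have T2 : Tendsto (rr p) (𝓝[Set.Ioo (0:ℝ) x] x) (𝓝 (rr p x)) :=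
        (hcont_rr x (hsub hx)).tendsto.mono_left (nhdsWithin_mono x hsub2)
      have T2' : Tendsto r₂ (𝓝[Set.Ioo (0:ℝ) x] x) (𝓝 (rr p x)) := by
        apply T2.congr'
        filter_upwards [self_mem_nhdsWithin] with y hy
        exact (hIoo y hy).symm
      have heq : r₂ x = rr p x := tendsto_nhds_unique T1 T2'
      rw [hcontra] at heq
      exact rr_ne hp hx hxp heq.symm
    · -- p < x ; on (x,1), r₂ = rr p
      have hIoo : ∀ y ∈ Set.Ioo x (1:ℝ), r₂ y = rr p y := by
        intro y hy
        have hyI : y ∈ Set.Ioo (0:ℝ) 1 := ⟨lt_trans hx.1 hy.1, hy.2⟩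
        obtain ⟨hmem, hG⟩ := h2 y hyI
        rcases sol_cases hp hyI hmem hG with h | h
        · exfalso
          have h1 : r₂ y < r₂ x := hanti (hsub hx) (hsub hyI) hy.1
          rw [hcontra, h] at h1
          exact absurd h1 (not_lt.2 hy.1.le)
        · exact h
      haveI : (𝓝[Set.Ioo x (1:ℝ)] x).NeBot := by
        apply mem_closure_iff_nhdsWithin_neBot.1
        rw [closure_Ioo hx.2.ne]
        exact ⟨le_refl x, hx.2.le⟩
      have hsub2 : Set.Ioo x (1:ℝ) ⊆ Set.Icc 0 1 :=
        fun z hz => ⟨le_trans hx.1.le hz.1.le, hz.2.le⟩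
      have T1 : Tendsto r₂ (𝓝[Set.Ioo x (1:ℝ)] x) (𝓝 (r₂ x)) :=
        (hc x (hsub hx)).tendsto.mono_left (nhdsWithin_mono x hsub2)
      have T2 : Tendsto (rr p) (𝓝[Set.Ioo x (1:ℝ)] x) (𝓝 (rr p x)) :=
        (hcont_rr x (hsub hx)).tendsto.mono_left (nhdsWithin_mono x hsub2)
      have T2' : Tendsto r₂ (𝓝[Set.Ioo x (1:ℝ)] x) (𝓝 (rr p x)) := by
        apply T2.congr'
        filter_upwards [self_mem_nhdsWithin] with y hy
        exact (hIoo y hy).symm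
      have heq : r₂ x = rr p x := tendsto_nhds_unique T1 T2'
      rw [hcontra] at heq
      exact rr_ne hp hx hxp heq.symm
  have step2 : ∀ x ∈ Set.Ioo (0:ℝ) 1, rr p x = r₂ x := by
    intro x hx
    obtain ⟨hmem, hG⟩ := h2 x hx
    rcases sol_cases hp hx hmem hG with h | h
    · by_cases hxp : x = p
      · rw [hxp] at h ⊢
        rw [h, rr_fixed hp]
      · exact absurd h (claim1 x hx hxp)
    · exact h.symm
  -- endpoints
  haveI hNB : (𝓝[Set.Ioo (0:ℝ) 1] (0:ℝ)).NeBot := by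
    apply mem_closure_iff_nhdsWithin_neBot.1
    rw [closure_Ioo (by norm_num : (0:ℝ) ≠ 1)]
    exact ⟨le_refl 0, zero_le_one⟩
  haveI hNB1 : (𝓝[Set.Ioo (0:ℝ) 1] (1:ℝ)).NeBot := by
    apply mem_closure_iff_nhdsWithin_neBot.1
    rw [closure_Ioo (by norm_num : (0:ℝ) ≠ 1)]
    exact ⟨zero_le_one, le_refl 1⟩
  have h0 : rr p 0 = r₂ 0 := by
    have T1 : Tendsto r₂ (𝓝[Set.Ioo (0:ℝ) 1] 0) (𝓝 (r₂ 0)) :=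
      (hc 0 ⟨le_refl 0, zero_le_one⟩).tendsto.mono_left (nhdsWithin_mono 0 hsub)
    have T2 : Tendsto (rr p) (𝓝[Set.Ioo (0:ℝ) 1] 0) (𝓝 (rr p 0)) :=
      (hcont_rr 0 ⟨le_refl 0, zero_le_one⟩).tendsto.mono_left (nhdsWithin_mono 0 hsub)
    have T2' : Tendsto r₂ (𝓝[Set.Ioo (0:ℝ) 1] 0) (𝓝 (rr p 0)) := by
      apply T2.congr'
      filter_upwards [self_mem_nhdsWithin] with y hy
      exact step2 y hy
    exact (tendsto_nhds_unique T2' T1)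
  have h1 : rr p 1 = r₂ 1 := by
    have T1 : Tendsto r₂ (𝓝[Set.Ioo (0:ℝ) 1] 1) (𝓝 (r₂ 1)) :=
      (hc 1 ⟨zero_le_one, le_refl 1⟩).tendsto.mono_left (nhdsWithin_mono 1 hsub)
    have T2 : Tendsto (rr p) (𝓝[Set.Ioo (0:ℝ) 1] 1) (𝓝 (rr p 1)) :=
      (hcont_rr 1 ⟨zero_le_one, le_refl 1⟩).tendsto.mono_left (nhdsWithin_mono 1 hsub)
    have T2' : Tendsto r₂ (𝓝[Set.Ioo (0:ℝ) 1] 1) (𝓝 (rr p 1)) := by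
      apply T2.congr'
      filter_upwards [self_mem_nhdsWithin] with y hy
      exact step2 y hy
    exact (tendsto_nhds_unique T2' T1)
  intro x hx
  rcases eq_or_lt_of_le hx.1 with hx0 | hx0
  · rw [← hx0]; exact h0
  · rcases eq_or_lt_of_le hx.2 with hx1 | hx1
    · rw [hx1]; exact h1
    · exact step2 x ⟨hx0, hx1⟩

end Stmt15Aux

open Stmt15Aux in
/-- For `a, b` nonzero reals of the same sign with `p = a/(a+b) ∈ (0,1)`, there
exists a unique (on `[0,1]`) continuous, strictly decreasing function
`r_p : [0,1] → [0,1]` with `x^a (1-x)^b = r_p(x)^a (1-r_p(x))^b` on `(0,1)`.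
It depends only on `p`, is a smooth involution with fixed point `p`, and
satisfies `r_p(0) = 1`, `r_p(1) = 0`. (Here `^` is the real power `rpow`.) -/
theorem stmt15 (a b : ℝ) (ha : a ≠ 0) (hb : b ≠ 0) (hsign : 0 < a * b) :
    a / (a + b) ∈ Set.Ioo (0 : ℝ) 1 ∧
    ∃ r : ℝ → ℝ,
      (ContinuousOn r (Set.Icc 0 1) ∧ StrictAntiOn r (Set.Icc 0 1) ∧
        Set.MapsTo r (Set.Icc 0 1) (Set.Icc 0 1) ∧
        ∀ x ∈ Set.Ioo (0 : ℝ) 1, x ^ a * (1 - x) ^ b = r x ^ a * (1 - r x) ^ b) ∧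
      -- uniqueness on [0,1] among continuous decreasing solutions
      (∀ r₂ : ℝ → ℝ,
        (ContinuousOn r₂ (Set.Icc 0 1) ∧ StrictAntiOn r₂ (Set.Icc 0 1) ∧
          Set.MapsTo r₂ (Set.Icc 0 1) (Set.Icc 0 1) ∧
          ∀ x ∈ Set.Ioo (0 : ℝ) 1, x ^ a * (1 - x) ^ b = r₂ x ^ a * (1 - r₂ x) ^ b) →
        Set.EqOn r r₂ (Set.Icc 0 1)) ∧
      -- dependence only on p = a/(a+b)
      (∀ a₂ b₂ : ℝ, a₂ ≠ 0 → b₂ ≠ 0 → 0 < a₂ * b₂ → a₂ / (a₂ + b₂) = a / (a + b) →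
        ∀ x ∈ Set.Ioo (0 : ℝ) 1, x ^ a₂ * (1 - x) ^ b₂ = r x ^ a₂ * (1 - r x) ^ b₂) ∧
      -- smooth involution with fixed point p, r 0 = 1, r 1 = 0
      ContDiffOn ℝ (⊤ : ℕ∞) r (Set.Ioo 0 1) ∧
      (∀ x ∈ Set.Icc (0 : ℝ) 1, r (r x) = x) ∧
      r (a / (a + b)) = a / (a + b) ∧ r 0 = 1 ∧ r 1 = 0 := by
  have hp : a / (a + b) ∈ Set.Ioo (0:ℝ) 1 := p_mem hsign
  set p : ℝ := a / (a + b) with hpdef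
  have hcont : ContinuousOn (rr p) (Set.Icc 0 1) :=
    continuousOn_of_invol (rr_strictAntiOn hp) (rr_mapsTo hp) (fun x hx => rr_invol_Icc hp hx)
  refine ⟨hp, rr p, ⟨hcont, rr_strictAntiOn hp, rr_mapsTo hp, ?_⟩, ?_, ?_, ?_,
    (fun x hx => rr_invol_Icc hp hx), rr_fixed hp, rr_zero p, rr_one p⟩
  · intro x hx
    exact (rpow_eq_iff ha hb hsign hx (rr_spec hp hx).1).2 (rr_G hp hx).symm
  · rintro r₂ ⟨hc2, hanti2, hmaps2, heq2⟩
    apply rr_eqOn hp hcont hc2 hanti2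
    intro x hx
    have hmem' : r₂ x ∈ Set.Icc (0:ℝ) 1 := hmaps2 (Set.Ioo_subset_Icc_self hx)
    have hLpos : 0 < x ^ a * (1-x) ^ b :=
      mul_pos (Real.rpow_pos_of_pos hx.1 a)
        (Real.rpow_pos_of_pos (by linarith [hx.2] : (0:ℝ) < 1 - x) b)
    have hne0 : r₂ x ≠ 0 := by
      intro h
      rw [heq2 x hx, h, Real.zero_rpow ha, zero_mul] at hLpos
      exact lt_irrefl 0 hLpos
    have hne1 : r₂ x ≠ 1 := by
      intro h
      rw [heq2 x hx, h, sub_self, Real.zero_rpow hb, mul_zero] at hLpos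
      exact lt_irrefl 0 hLpos
    have hmem : r₂ x ∈ Set.Ioo (0:ℝ) 1 :=
      ⟨lt_of_le_of_ne hmem'.1 (Ne.symm hne0), lt_of_le_of_ne hmem'.2 hne1⟩
    exact ⟨hmem, ((rpow_eq_iff ha hb hsign hx hmem).1 (heq2 x hx)).symm⟩
  · intro a₂ b₂ ha₂ hb₂ hs₂ hpeq x hx
    have h := rpow_eq_iff ha₂ hb₂ hs₂ hx (rr_spec hp hx).1
    rw [hpeq] at h
    exact h.2 (rr_G hp hx).symm
  · exact fun x hx => (contDiffAt_rr hp hcont hx).contDiffWithinAt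
end

section
/- Let p ∈ (0,1) and let r_p : [0,1] → [0,1] be the unique continuous decreasing function satisfying x^p (1−x)^{1−p} = r_p(x)^p (1−r_p(x))^{1−p} for x ∈ (0,1). If p < 1/2 then 2p − x ≤ r_p(x) < 1 − x for all x ∈ (0,1); if p > 1/2 then 2p − x ≥ r_p(x) > 1 − x for all x ∈ (0,1); and if p = 1/2 then r_p(x) = 1 − x for all x ∈ [0,1]. -/
/-!
Taking logarithms, `r_p(x)` is the point on the other side of `p` with the same value of
`ℓ_p(x) = p log x + (1 - p) log (1 - x)`, a function increasing on `(0, p]` and decreasing on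
`[p, 1)`. Each bound on `r_p(x)` therefore reduces to comparing two values of `ℓ_p`:
`ℓ_p(x) - ℓ_p(1 - x) = (1 - 2p) (log (1 - x) - log x)` gives the bound by `1 - x`, and for
`p < 1/2` the difference `ℓ_p(p + t) - ℓ_p(p - t)` has positive derivative, which gives the
bound by `2p - x`. The case `p > 1/2` follows by the symmetry `x ↦ 1 - x`, `p ↦ 1 - p`, and for
`p = 1/2` the symmetry of `ℓ_{1/2}` gives `r(x) = 1 - x` inside, hence on `[0, 1]` by continuity.
-/

open Real Set

variable {p x y : ℝ} {r : ℝ → ℝ}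

noncomputable def logLik (p x : ℝ) : ℝ := p * log x + (1 - p) * log (1 - x)

lemma hasDerivAt_logLik (p : ℝ) {x : ℝ} (hx : x ∈ Ioo (0 : ℝ) 1) :
    HasDerivAt (logLik p) ((p - x) / (x * (1 - x))) x := by
  obtain ⟨hx0, hx1⟩ := hx
  have hx1' : 1 - x ≠ 0 := by linarith
  have h : HasDerivAt (fun y => p * log y + (1 - p) * log (1 - y))
      (p * x⁻¹ + (1 - p) * ((1 - x)⁻¹ * -1)) x :=
    ((hasDerivAt_log hx0.ne').const_mul p).add
      (((hasDerivAt_log hx1').comp x ((hasDerivAt_id x).const_sub 1)).const_mul (1 - p))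
  refine h.congr_deriv ?_
  field_simp
  ring

lemma continuousOn_logLik (p : ℝ) : ContinuousOn (logLik p) (Ioo 0 1) :=
  fun _ hx => (hasDerivAt_logLik p hx).continuousAt.continuousWithinAt

lemma logLik_strictMonoOn (hp : p < 1) : StrictMonoOn (logLik p) (Ioc 0 p) := by
  have hsub : Ioc 0 p ⊆ Ioo (0 : ℝ) 1 := Ioc_subset_Ioo_right hp
  refine strictMonoOn_of_deriv_pos (convex_Ioc 0 p) ((continuousOn_logLik p).mono hsub)
    fun x hx => ?_
  rw [interior_Ioc] at hx
  have hx01 : x ∈ Ioo (0 : ℝ) 1 := ⟨hx.1, hx.2.trans hp⟩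
  rw [(hasDerivAt_logLik p hx01).deriv]
  exact div_pos (by linarith [hx.2]) (mul_pos hx01.1 (by linarith [hx01.2]))

lemma logLik_strictAntiOn (hp : 0 < p) : StrictAntiOn (logLik p) (Ico p 1) := by
  have hsub : Ico p 1 ⊆ Ioo (0 : ℝ) 1 := Ico_subset_Ioo_left hp
  refine strictAntiOn_of_deriv_neg (convex_Ico p 1) ((continuousOn_logLik p).mono hsub)
    fun x hx => ?_
  rw [interior_Ico] at hx
  have hx01 : x ∈ Ioo (0 : ℝ) 1 := ⟨hp.trans hx.1, hx.2⟩
  rw [(hasDerivAt_logLik p hx01).deriv]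
  exact div_neg_of_neg_of_pos (by linarith [hx.1]) (mul_pos hx01.1 (by linarith [hx01.2]))

lemma logLik_lt_logLik_self (hp : p ∈ Ioo (0 : ℝ) 1) (hx : x ∈ Ioo (0 : ℝ) 1) (hxp : x ≠ p) :
    logLik p x < logLik p p := by
  rcases hxp.lt_or_gt with hxp | hxp
  · exact logLik_strictMonoOn hp.2 ⟨hx.1, hxp.le⟩ ⟨hp.1, le_rfl⟩ hxp
  · exact logLik_strictAntiOn hp.1 ⟨le_rfl, hp.2⟩ ⟨hxp.le, hx.2⟩ hxp

lemma logLik_one_sub (p x : ℝ) : logLik (1 - p) (1 - x) = logLik p x := by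
  simp only [logLik, sub_sub_cancel]
  ring

lemma logLik_one_sub_lt (hp : p < 1 / 2) (hx : 0 < x) (hx' : x < 1 - x) :
    logLik p (1 - x) < logLik p x := by
  have hlog : log x < log (1 - x) := log_lt_log hx hx'
  have h : logLik p x - logLik p (1 - x) = (1 - 2 * p) * (log (1 - x) - log x) := by
    simp only [logLik, sub_sub_cancel]
    ring
  nlinarith

lemma logLik_lt_logLik_two_mul_sub (hp : p < 1 / 2) (hx : 0 < x) (hxp : x < p) :
    logLik p x < logLik p (2 * p - x) := by
  suffices StrictMonoOn (fun t => logLik p (p + t) - logLik p (p - t)) (Ico 0 p) by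
    have := this ⟨le_rfl, hx.trans hxp⟩ ⟨by linarith, by linarith⟩ (sub_pos.2 hxp)
    simp only [add_zero, sub_zero, sub_self, sub_sub_cancel,
      show p + (p - x) = 2 * p - x by ring] at this
    linarith
  have hderiv : ∀ t ∈ Ico 0 p, HasDerivAt (fun t => logLik p (p + t) - logLik p (p - t))
      ((p - (p + t)) / ((p + t) * (1 - (p + t))) - -((p - (p - t)) / ((p - t) * (1 - (p - t)))))
      t := fun t ht =>
    ((hasDerivAt_logLik p ⟨by linarith [ht.1, ht.2], by linarith [ht.1, ht.2]⟩).comp_const_add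
      p t).sub
    ((hasDerivAt_logLik p ⟨by linarith [ht.1, ht.2], by linarith [ht.1, ht.2]⟩).comp_const_sub
      p t)
  refine strictMonoOn_of_deriv_pos (convex_Ico 0 p)
    (fun t ht => (hderiv t ht).continuousAt.continuousWithinAt) fun t ht => ?_
  rw [interior_Ico] at ht
  obtain ⟨ht0, htp⟩ := ht
  rw [(hderiv t ⟨ht0.le, htp⟩).deriv, show p - (p + t) = -t by ring, sub_sub_cancel, neg_div]
  -- the two denominators differ by `2 t (1 - 2 p)`
  have hden : (p - t) * (1 - (p - t)) < (p + t) * (1 - (p + t)) := by nlinarith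
  have hlt : t / ((p + t) * (1 - (p + t))) < t / ((p - t) * (1 - (p - t))) :=
    div_lt_div_of_pos_left ht0 (by nlinarith) hden
  linarith

lemma rpow_mul_rpow_eq_exp_logLik (hx : x ∈ Ioo (0 : ℝ) 1) :
    x ^ p * (1 - x) ^ (1 - p) = exp (logLik p x) := by
  rw [rpow_def_of_pos hx.1, rpow_def_of_pos (sub_pos.2 hx.2), ← exp_add, logLik, mul_comm p,
    mul_comm (1 - p)]

lemma mem_Ioo_of_rpow_mul_rpow_eq (hp : p ∈ Ioo (0 : ℝ) 1) (hx : x ∈ Ioo (0 : ℝ) 1)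
    (hy : y ∈ Icc (0 : ℝ) 1) (h : x ^ p * (1 - x) ^ (1 - p) = y ^ p * (1 - y) ^ (1 - p)) :
    y ∈ Ioo (0 : ℝ) 1 := by
  have hpos : 0 < y ^ p * (1 - y) ^ (1 - p) :=
    h ▸ (rpow_mul_rpow_eq_exp_logLik hx).symm ▸ exp_pos _
  refine ⟨hy.1.lt_of_ne ?_, hy.2.lt_of_ne ?_⟩ <;> rintro rfl
  · rw [zero_rpow hp.1.ne', zero_mul] at hpos
    exact hpos.false
  · rw [sub_self, zero_rpow (sub_pos.2 hp.2).ne', mul_zero] at hpos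
    exact hpos.false

structure IsLogLikReflection (p : ℝ) (r : ℝ → ℝ) : Prop where
  strictAntiOn : StrictAntiOn r (Ioo 0 1)
  mapsTo : MapsTo r (Ioo 0 1) (Ioo 0 1)
  logLik_apply : ∀ x ∈ Ioo (0 : ℝ) 1, logLik p (r x) = logLik p x

lemma isLogLikReflection_of_rpow_mul_rpow_eq (hp : p ∈ Ioo (0 : ℝ) 1)
    (hanti : StrictAntiOn r (Icc 0 1)) (hmaps : MapsTo r (Icc 0 1) (Icc 0 1))
    (heq : ∀ x ∈ Ioo (0 : ℝ) 1, x ^ p * (1 - x) ^ (1 - p) = r x ^ p * (1 - r x) ^ (1 - p)) :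
    IsLogLikReflection p r where
  strictAntiOn := hanti.mono Ioo_subset_Icc_self
  mapsTo x hx := mem_Ioo_of_rpow_mul_rpow_eq hp hx (hmaps (Ioo_subset_Icc_self hx)) (heq x hx)
  logLik_apply x hx := by
    have h := heq x hx
    have hrx := mem_Ioo_of_rpow_mul_rpow_eq hp hx (hmaps (Ioo_subset_Icc_self hx)) h
    rwa [rpow_mul_rpow_eq_exp_logLik hx, rpow_mul_rpow_eq_exp_logLik hrx, exp_eq_exp,
      eq_comm] at h

namespace IsLogLikReflection

lemma reflect (hr : IsLogLikReflection p r) :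
    IsLogLikReflection (1 - p) (fun y => 1 - r (1 - y)) where
  strictAntiOn a ha b hb hab := by
    have := hr.strictAntiOn (a := 1 - b) (b := 1 - a) ⟨by linarith [hb.2], by linarith [hb.1]⟩
      ⟨by linarith [ha.2], by linarith [ha.1]⟩ (by linarith)
    dsimp only
    linarith
  mapsTo y hy := by
    have := hr.mapsTo (x := 1 - y) ⟨by linarith [hy.2], by linarith [hy.1]⟩
    exact ⟨by linarith [this.2], by linarith [this.1]⟩
  logLik_apply y hy := by
    rw [logLik_one_sub, hr.logLik_apply _ ⟨by linarith [hy.2], by linarith [hy.1]⟩,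
      ← logLik_one_sub p, sub_sub_cancel]

lemma apply_self (hr : IsLogLikReflection p r) (hp : p ∈ Ioo (0 : ℝ) 1) : r p = p := by
  by_contra h
  exact (logLik_lt_logLik_self hp (hr.mapsTo hp) h).ne (hr.logLik_apply p hp)

lemma lt_apply_of_lt (hr : IsLogLikReflection p r) (hp : p ∈ Ioo (0 : ℝ) 1)
    (hx : x ∈ Ioo (0 : ℝ) 1) (hxp : x < p) : p < r x :=
  hr.apply_self hp ▸ hr.strictAntiOn hx hp hxp

lemma apply_lt_of_lt (hr : IsLogLikReflection p r) (hp : p ∈ Ioo (0 : ℝ) 1)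
    (hx : x ∈ Ioo (0 : ℝ) 1) (hxp : p < x) : r x < p :=
  hr.apply_self hp ▸ hr.strictAntiOn hp hx hxp

lemma two_mul_sub_lt_and_lt_one_sub_of_lt (hr : IsLogLikReflection p r) (hp0 : 0 < p)
    (hp : p < 1 / 2) (hx : x ∈ Ioo (0 : ℝ) 1) (hxp : x < p) : 2 * p - x < r x ∧ r x < 1 - x := by
  have hrx : r x ∈ Ico p 1 := ⟨(hr.lt_apply_of_lt ⟨hp0, by linarith⟩ hx hxp).le, (hr.mapsTo hx).2⟩
  have hanti := logLik_strictAntiOn hp0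
  have hL := hr.logLik_apply x hx
  constructor
  · refine (hanti.lt_iff_gt hrx ⟨by linarith, by linarith [hx.1]⟩).1 ?_
    rw [hL]
    exact logLik_lt_logLik_two_mul_sub hp hx.1 hxp
  · refine (hanti.lt_iff_gt ⟨by linarith, by linarith [hx.1]⟩ hrx).1 ?_
    rw [hL]
    exact logLik_one_sub_lt hp hx.1 (by linarith)

lemma two_mul_sub_lt_and_lt_one_sub_of_gt (hr : IsLogLikReflection p r) (hp0 : 0 < p)
    (hp : p < 1 / 2) (hx : x ∈ Ioo (0 : ℝ) 1) (hxp : p < x) : 2 * p - x < r x ∧ r x < 1 - x := by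
  have hrx : r x ∈ Ioc 0 p := ⟨(hr.mapsTo hx).1, (hr.apply_lt_of_lt ⟨hp0, by linarith⟩ hx hxp).le⟩
  have hmono := logLik_strictMonoOn (p := p) (by linarith)
  have hL := hr.logLik_apply x hx
  constructor
  · rcases lt_or_ge x (2 * p) with h2p | h2p
    · refine (hmono.lt_iff_lt ⟨by linarith, by linarith⟩ hrx).1 ?_
      rw [hL]
      simpa only [sub_sub_cancel] using
        logLik_lt_logLik_two_mul_sub hp (sub_pos.2 h2p) (by linarith : 2 * p - x < p)
    · linarith [hrx.1]
  · rcases lt_or_ge p (1 - x) with h1x | h1x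
    · linarith [hrx.2]
    · refine (hmono.lt_iff_lt hrx ⟨by linarith [hx.2], h1x⟩).1 ?_
      rw [hL]
      simpa only [sub_sub_cancel] using logLik_one_sub_lt hp (sub_pos.2 hx.2) (by linarith)

lemma two_mul_sub_le_and_lt_one_sub (hr : IsLogLikReflection p r) (hp0 : 0 < p)
    (hp : p < 1 / 2) (hx : x ∈ Ioo (0 : ℝ) 1) : 2 * p - x ≤ r x ∧ r x < 1 - x := by
  rcases lt_trichotomy x p with hxp | rfl | hxp
  · exact (hr.two_mul_sub_lt_and_lt_one_sub_of_lt hp0 hp hx hxp).imp_left le_of_lt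
  · rw [hr.apply_self hx]
    constructor <;> linarith
  · exact (hr.two_mul_sub_lt_and_lt_one_sub_of_gt hp0 hp hx hxp).imp_left le_of_lt

lemma eqOn_one_sub (hr : IsLogLikReflection (1 / 2) r) : EqOn r (fun x => 1 - x) (Ioo 0 1) := by
  intro x hx
  have hhalf : (1 / 2 : ℝ) ∈ Ioo 0 1 := by norm_num
  have hL : logLik (1 / 2) (r x) = logLik (1 / 2) (1 - x) := by
    rw [hr.logLik_apply x hx, ← logLik_one_sub, show (1 : ℝ) - 1 / 2 = 1 / 2 by norm_num]
  rcases lt_trichotomy x (1 / 2) with hx2 | rfl | hx2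
  · exact (logLik_strictAntiOn (by norm_num)).injOn
      ⟨(hr.lt_apply_of_lt hhalf hx hx2).le, (hr.mapsTo hx).2⟩ ⟨by linarith, by linarith [hx.1]⟩ hL
  · rw [hr.apply_self hhalf]
    norm_num
  · exact (logLik_strictMonoOn (by norm_num)).injOn
      ⟨(hr.mapsTo hx).1, (hr.apply_lt_of_lt hhalf hx hx2).le⟩ ⟨by linarith [hx.2], by linarith⟩ hL

end IsLogLikReflection

/-- Let `p ∈ (0,1)` and let `r_p : [0,1] → [0,1]` be the (unique) continuous strictly
decreasing function with `x^p (1-x)^{1-p} = r_p(x)^p (1-r_p(x))^{1-p}` on `(0,1)`.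
If `p < 1/2` then `2p - x ≤ r_p(x) < 1 - x` on `(0,1)`; if `p > 1/2` the inequalities
are reversed; and if `p = 1/2` then `r_p(x) = 1 - x` on `[0,1]`. -/
theorem stmt16 (p : ℝ) (hp : p ∈ Set.Ioo (0 : ℝ) 1) (r : ℝ → ℝ)
    (hcont : ContinuousOn r (Set.Icc 0 1)) (hanti : StrictAntiOn r (Set.Icc 0 1))
    (hmaps : Set.MapsTo r (Set.Icc 0 1) (Set.Icc 0 1))
    (heq : ∀ x ∈ Set.Ioo (0 : ℝ) 1,
      x ^ p * (1 - x) ^ (1 - p) = r x ^ p * (1 - r x) ^ (1 - p)) :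
    (p < 1 / 2 → ∀ x ∈ Set.Ioo (0 : ℝ) 1, 2 * p - x ≤ r x ∧ r x < 1 - x) ∧
    (1 / 2 < p → ∀ x ∈ Set.Ioo (0 : ℝ) 1, r x ≤ 2 * p - x ∧ 1 - x < r x) ∧
    (p = 1 / 2 → ∀ x ∈ Set.Icc (0 : ℝ) 1, r x = 1 - x) := by
  have hr := isLogLikReflection_of_rpow_mul_rpow_eq hp hanti hmaps heq
  refine ⟨fun hp2 _ hx => hr.two_mul_sub_le_and_lt_one_sub hp.1 hp2 hx, fun hp2 x hx => ?_, ?_⟩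
  · have h := hr.reflect.two_mul_sub_le_and_lt_one_sub (by linarith [hp.2]) (by linarith)
      (x := 1 - x) ⟨by linarith [hx.2], by linarith [hx.1]⟩
    rw [sub_sub_cancel] at h
    constructor <;> linarith [h.1, h.2]
  · rintro rfl
    exact hr.eqOn_one_sub.of_subset_closure hcont (continuousOn_const.sub continuousOn_id)
      Ioo_subset_Icc_self (closure_Ioo zero_ne_one).ge
end

section
/- Let p ∈ (0,1) and let r_p : [0,1] → [0,1] be the unique continuous decreasing function satisfying x^p (1−x)^{1−p} = r_p(x)^p (1−r_p(x))^{1−p} for x ∈ (0,1). Then r_p is differentiable on (0,1) and satisfies the differential equation (p − r_p(x))·x·(1−x)·r_p'(x) = (p − x)·r_p(x)·(1 − r_p(x)) for all x ∈ (0,1). -/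
/-!
With `G x = p log x + (1 - p) log (1 - x)`, the defining equation says `G ∘ r = G` on `(0,1)`.
By Gibbs' inequality `G` has its unique maximum at `p`, so `r p = p`. Away from `p` we have
`G' (r x) ≠ 0`, and the inverse function theorem gives `r' x = G' x / G' (r x)`, which is the
differential equation. At `p` itself both sides of the equation vanish, and differentiability
comes from the quadratic behaviour `G y - G p ~ G'' p (y - p)² / 2` on both sides of
`G (r y) = G y`: it forces `((r y - p) / (y - p))² → 1`, so `r' p = -1` as `r` is decreasing.
-/

open Set Filter Real
open scoped Topology

theorem HasStrictDerivAt.hasDerivAt_of_comp_eventuallyEq {𝕜 : Type*}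
    [NontriviallyNormedField 𝕜] [CompleteSpace 𝕜] {G r : 𝕜 → 𝕜} {x G'x G'rx : 𝕜}
    (hG : HasStrictDerivAt G G'rx (r x)) (hne : G'rx ≠ 0) (hGx : HasDerivAt G G'x x)
    (hr : ContinuousAt r x) (hGr : G ∘ r =ᶠ[𝓝 x] G) : HasDerivAt r (G'x / G'rx) x := by
  set φ := hG.localInverse G G'rx (r x) hne
  have hφ : HasDerivAt φ G'rx⁻¹ (G x) := by
    rw [← hGr.eq_of_nhds]
    exact (hG.to_localInverse hne).hasDerivAt
  have hleft : ∀ᶠ y in 𝓝 x, φ (G (r y)) = r y :=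
    hr.eventually (hG.hasStrictFDerivAt_equiv hne).eventually_left_inverse
  have hr_eq : r =ᶠ[𝓝 x] φ ∘ G := by
    filter_upwards [hleft, hGr] with y hleft hGr
    rw [Function.comp_apply, ← hGr, Function.comp_apply, hleft]
  rw [div_eq_inv_mul]
  exact (hφ.comp x hGx).congr_of_eventuallyEq hr_eq

theorem tendsto_sub_div_sq_of_hasDerivAt {G g : ℝ → ℝ} {a c : ℝ}
    (hG : ∀ᶠ y in 𝓝 a, HasDerivAt G (g y) y) (hg : HasDerivAt g c a) (hga : g a = 0) :
    Tendsto (fun y => (G y - G a) / (y - a) ^ 2) (𝓝[≠] a) (𝓝 (c / 2)) := by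
  refine HasDerivAt.lhopital_zero_nhdsNE (f' := g) (g' := fun y => 2 * (y - a))
    ?_ ?_ ?_ ?_ ?_ ?_
  · filter_upwards [nhdsWithin_le_nhds hG] with y hy using hy.sub_const _
  · refine Eventually.of_forall fun y => ?_
    simpa using ((hasDerivAt_id' y).sub_const a).fun_pow 2
  · filter_upwards [self_mem_nhdsWithin] with y hy
    exact mul_ne_zero two_ne_zero (sub_ne_zero.2 hy)
  · have := hG.self_of_nhds.continuousAt.tendsto.sub_const (G a)
    rw [sub_self] at this
    exact this.mono_left nhdsWithin_le_nhds
  · have : Tendsto (fun y : ℝ => (y - a) ^ 2) (𝓝 a) (𝓝 ((a - a) ^ 2)) :=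
      ((continuous_id.sub continuous_const).pow 2).tendsto a
    simpa using this.mono_left nhdsWithin_le_nhds
  · refine ((hasDerivAt_iff_tendsto_slope.1 hg).div_const 2).congr fun y => ?_
    rw [slope_def_field, hga, sub_zero, div_div, mul_comm]

theorem tendsto_neg_one_of_sq_tendsto_one {l : Filter ℝ} {f : ℝ → ℝ}
    (hf : Tendsto (fun y => f y ^ 2) l (𝓝 1)) (hneg : ∀ᶠ y in l, f y ≤ 0) :
    Tendsto f l (𝓝 (-1)) := by
  have := ((continuous_sqrt.tendsto 1).comp hf).neg
  rw [sqrt_one] at this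
  refine this.congr' ?_
  filter_upwards [hneg] with y hy
  simp [sqrt_sq_eq_abs, abs_of_nonpos hy]

theorem hasDerivAt_neg_one_of_comp_eventuallyEq {G g r : ℝ → ℝ} {a c : ℝ} {s : Set ℝ}
    (hG : ∀ᶠ y in 𝓝 a, HasDerivAt G (g y) y) (hg : HasDerivAt g c a) (hga : g a = 0)
    (hc : c ≠ 0) (hr : ContinuousAt r a) (hra : r a = a) (hs : s ∈ 𝓝 a)
    (hanti : StrictAntiOn r s) (hGr : ∀ᶠ y in 𝓝 a, G (r y) = G y) :
    HasDerivAt r (-1) a := by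
  set Q := fun y => (G y - G a) / (y - a) ^ 2
  have hQ : Tendsto Q (𝓝[≠] a) (𝓝 (c / 2)) := tendsto_sub_div_sq_of_hasDerivAt hG hg hga
  have hsign : ∀ᶠ y in 𝓝[≠] a, slope r a y < 0 := by
    filter_upwards [nhdsWithin_le_nhds hs, self_mem_nhdsWithin] with y hy hya
    have has := mem_of_mem_nhds hs
    rw [slope_def_field, hra, div_neg_iff, sub_pos, sub_neg, sub_pos, sub_neg]
    rcases lt_or_gt_of_ne hya with h | h
    · exact .inl ⟨hra ▸ hanti hy has h, h⟩
    · exact .inr ⟨hra ▸ hanti has hy h, h⟩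
  have hr_ne : Tendsto r (𝓝[≠] a) (𝓝[≠] a) := by
    refine tendsto_nhdsWithin_iff.2
      ⟨by simpa [hra] using hr.tendsto.mono_left nhdsWithin_le_nhds, ?_⟩
    filter_upwards [hsign] with y hy hya
    rw [slope_def_field, hya, hra, sub_self, zero_div] at hy
    exact hy.false
  have hQr : Tendsto (Q ∘ r) (𝓝[≠] a) (𝓝 (c / 2)) := hQ.comp hr_ne
  -- `G (r y) = G y` reads `Q (r y) * (r y - a) ^ 2 = Q y * (y - a) ^ 2`.
  have hslope_sq : ∀ᶠ y in 𝓝[≠] a, slope r a y ^ 2 = Q y / Q (r y) := by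
    filter_upwards [nhdsWithin_le_nhds hGr, hsign, self_mem_nhdsWithin,
      hQr.eventually_ne (div_ne_zero hc two_ne_zero)] with y hGy hy hya hQy
    have hrya : r y - a ≠ 0 := by
      intro h; rw [slope_def_field, hra, h, zero_div] at hy; exact hy.false
    have hya' : y - a ≠ 0 := sub_ne_zero.2 hya
    simp only [Q, Function.comp_apply, hGy] at hQy ⊢
    have hGya : G y - G a ≠ 0 := by
      intro h; rw [h, zero_div] at hQy; exact hQy rfl
    rw [slope_def_field, hra]
    field_simp
  have hratio : Tendsto (fun y => Q y / Q (r y)) (𝓝[≠] a) (𝓝 1) := by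
    have := hQ.div hQr (div_ne_zero hc two_ne_zero)
    rwa [div_self (div_ne_zero hc two_ne_zero)] at this
  exact hasDerivAt_iff_tendsto_slope.2 <| tendsto_neg_one_of_sq_tendsto_one
    (hratio.congr' (hslope_sq.mono fun _ h => h.symm)) (hsign.mono fun _ h => h.le)

noncomputable def bernoulliLogLik (p x : ℝ) : ℝ := p * log x + (1 - p) * log (1 - x)

theorem log_rpow_mul_one_sub_rpow {p x : ℝ} (hx : x ∈ Ioo 0 1) :
    log (x ^ p * (1 - x) ^ (1 - p)) = bernoulliLogLik p x := by
  obtain ⟨hx0, hx1⟩ := hx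
  have h1x : 0 < 1 - x := sub_pos.2 hx1
  rw [log_mul (by positivity) (by positivity), log_rpow hx0, log_rpow h1x, bernoulliLogLik]

theorem hasStrictDerivAt_bernoulliLogLik {p x : ℝ} (hx : x ∈ Ioo 0 1) :
    HasStrictDerivAt (bernoulliLogLik p) ((p - x) / (x * (1 - x))) x := by
  have h1x : 1 - x ≠ 0 := (sub_pos.2 hx.2).ne'
  have hlog := (hasStrictDerivAt_log hx.1.ne').const_mul p
  have hlog_one_sub := ((hasStrictDerivAt_log h1x).comp x
    ((hasStrictDerivAt_id x).const_sub 1)).const_mul (1 - p)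
  refine (hlog.add hlog_one_sub).congr_deriv ?_
  field_simp [hx.1.ne']
  ring

theorem bernoulliLogLik_lt {p y : ℝ} (hp : p ∈ Ioo 0 1) (hy : y ∈ Ioo 0 1) (hyp : y ≠ p) :
    bernoulliLogLik p y < bernoulliLogLik p p := by
  obtain ⟨hp0, hp1⟩ := hp
  obtain ⟨hy0, hy1⟩ := hy
  have h1p : 0 < 1 - p := sub_pos.2 hp1
  have h1y : 0 < 1 - y := sub_pos.2 hy1
  have hne : y / p ≠ (1 - y) / (1 - p) := by
    rw [Ne, div_eq_div_iff hp0.ne' h1p.ne']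
    intro h
    exact hyp (by linarith)
  have := strictConcaveOn_log_Ioi.2 (div_pos hy0 hp0) (div_pos h1y h1p) hne hp0 h1p
    (add_sub_cancel p 1)
  rw [smul_eq_mul, smul_eq_mul, smul_eq_mul, smul_eq_mul, mul_div_cancel₀ _ hp0.ne',
    mul_div_cancel₀ _ h1p.ne', add_sub_cancel, log_one, log_div hy0.ne' hp0.ne',
    log_div h1y.ne' h1p.ne'] at this
  unfold bernoulliLogLik
  linarith

theorem hasDerivAt_bernoulliScore {p : ℝ} (hp : p ∈ Ioo 0 1) :
    HasDerivAt (fun y => (p - y) / (y * (1 - y))) (-(p * (1 - p))⁻¹) p := by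
  have hp1 : p * (1 - p) ≠ 0 := (mul_pos hp.1 (sub_pos.2 hp.2)).ne'
  have hnum : HasDerivAt (fun y : ℝ => p - y) (-1) p := (hasDerivAt_id' p).const_sub p
  have hden : HasDerivAt (fun y : ℝ => y * (1 - y)) (1 * (1 - p) + p * (-1)) p :=
    (hasDerivAt_id' p).mul ((hasDerivAt_id' p).const_sub 1)
  refine (hnum.div hden hp1).congr_deriv ?_
  rw [sub_self, zero_mul, sub_zero]
  field_simp

theorem hasDerivAt_of_bernoulliLogLik_comp_eq {p x : ℝ} {r : ℝ → ℝ} (hx : x ∈ Ioo 0 1)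
    (hrx : r x ∈ Ioo 0 1) (hrxp : r x ≠ p) (hr : ContinuousAt r x)
    (hGr : ∀ᶠ y in 𝓝 x, bernoulliLogLik p (r y) = bernoulliLogLik p y) :
    HasDerivAt r ((p - x) * r x * (1 - r x) / ((p - r x) * x * (1 - x))) x := by
  obtain ⟨hrx0, hrx1⟩ := hrx
  have hscore : (p - r x) / (r x * (1 - r x)) ≠ 0 :=
    div_ne_zero (sub_ne_zero.2 hrxp.symm) (mul_pos hrx0 (sub_pos.2 hrx1)).ne'
  refine ((hasStrictDerivAt_bernoulliLogLik ⟨hrx0, hrx1⟩).hasDerivAt_of_comp_eventuallyEq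
    hscore (hasStrictDerivAt_bernoulliLogLik hx).hasDerivAt hr hGr).congr_deriv ?_
  field_simp [hx.1.ne', (sub_pos.2 hx.2).ne', hrx0.ne', (sub_pos.2 hrx1).ne',
    sub_ne_zero.2 hrxp.symm]

theorem hasDerivAt_neg_one_of_bernoulliLogLik_comp_eq {p : ℝ} {r : ℝ → ℝ} {s : Set ℝ}
    (hp : p ∈ Ioo 0 1) (hr : ContinuousAt r p) (hrp : r p = p) (hs : s ∈ 𝓝 p)
    (hanti : StrictAntiOn r s)
    (hGr : ∀ᶠ y in 𝓝 p, bernoulliLogLik p (r y) = bernoulliLogLik p y) :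
    HasDerivAt r (-1) p := by
  refine hasDerivAt_neg_one_of_comp_eventuallyEq ?_ (hasDerivAt_bernoulliScore hp) (by simp)
    (neg_ne_zero.2 (inv_ne_zero (mul_pos hp.1 (sub_pos.2 hp.2)).ne')) hr hrp hs hanti hGr
  filter_upwards [isOpen_Ioo.mem_nhds hp] with y hy
  exact (hasStrictDerivAt_bernoulliLogLik hy).hasDerivAt

/-- Let `p ∈ (0,1)` and let `r_p : [0,1] → [0,1]` be the (unique) continuous strictly
decreasing function with `x^p (1-x)^{1-p} = r_p(x)^p (1-r_p(x))^{1-p}` on `(0,1)`.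
Then `r_p` is differentiable on `(0,1)` and satisfies
`(p - r_p(x))·x·(1-x)·r_p'(x) = (p - x)·r_p(x)·(1 - r_p(x))` there. -/
theorem stmt17 (p : ℝ) (hp : p ∈ Set.Ioo (0 : ℝ) 1) (r : ℝ → ℝ)
    (hcont : ContinuousOn r (Set.Icc 0 1)) (hanti : StrictAntiOn r (Set.Icc 0 1))
    (hmaps : Set.MapsTo r (Set.Icc 0 1) (Set.Icc 0 1))
    (heq : ∀ x ∈ Set.Ioo (0 : ℝ) 1,
      x ^ p * (1 - x) ^ (1 - p) = r x ^ p * (1 - r x) ^ (1 - p)) :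
    ∀ x ∈ Set.Ioo (0 : ℝ) 1, DifferentiableAt ℝ r x ∧
      (p - r x) * x * (1 - x) * deriv r x = (p - x) * r x * (1 - r x) := by
  have hr_mem : MapsTo r (Ioo 0 1) (Ioo 0 1) := fun x hx =>
    Ioo_subset_Ioo (hmaps (right_mem_Icc.2 zero_le_one)).1
      (hmaps (left_mem_Icc.2 zero_le_one)).2 (hanti.mapsTo_Ioo hx)
  have hGr : ∀ x ∈ Ioo (0 : ℝ) 1, bernoulliLogLik p (r x) = bernoulliLogLik p x := by
    intro x hx
    rw [← log_rpow_mul_one_sub_rpow hx, ← log_rpow_mul_one_sub_rpow (hr_mem hx), heq x hx]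
  have hrp : r p = p := by
    by_contra h
    exact (bernoulliLogLik_lt hp (hr_mem hp) h).ne (hGr p hp)
  intro x hx
  have hGr_near : ∀ᶠ y in 𝓝 x, bernoulliLogLik p (r y) = bernoulliLogLik p y :=
    eventually_of_mem (isOpen_Ioo.mem_nhds hx) hGr
  have hr_cont : ContinuousAt r x := hcont.continuousAt (Icc_mem_nhds hx.1 hx.2)
  by_cases hxp : x = p
  · subst hxp
    have hd := hasDerivAt_neg_one_of_bernoulliLogLik_comp_eq hx hr_cont hrp
      (Icc_mem_nhds hx.1 hx.2) hanti hGr_near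
    exact ⟨hd.differentiableAt, by rw [hd.deriv, hrp]; ring⟩
  · have hrxp : r x ≠ p := fun h => hxp (hanti.injOn (Ioo_subset_Icc_self hx)
      (Ioo_subset_Icc_self hp) (h.trans hrp.symm))
    have hd := hasDerivAt_of_bernoulliLogLik_comp_eq hx (hr_mem hx) hrxp hr_cont hGr_near
    refine ⟨hd.differentiableAt, ?_⟩
    rw [hd.deriv, mul_div_cancel₀]
    exact mul_ne_zero (mul_ne_zero (sub_ne_zero.2 hrxp.symm) hx.1.ne') (sub_pos.2 hx.2).ne'
end

section
/- Let p ∈ (0,1) and let r_p : [0,1] → [0,1] be the unique continuous decreasing function satisfying x^p (1−x)^{1−p} = r_p(x)^p (1−r_p(x))^{1−p} for x ∈ (0,1). If p ≤ 1/2 then r_p is convex on [0,1], and if p ≥ 1/2 then r_p is concave on [0,1]. -/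
/-
Since `phi p (r x) = phi p x`, implicit differentiation gives `r' x = E (r x) / E x`, where
`E t = invLogDeriv p t = t (1 - t) / (p - t)` is the reciprocal of the logarithmic derivative
of `phi p`.
As `E' t = 1 + p (1 - p) / (p - t)²`, on `(0, p)` one finds
`r'' x = E (r x) (E' (r x) - E' x) / (E x)²`, which is nonnegative as soon as `r x - p ≥ p - x`.
For `p ≤ 1/2` this is the inequality `phi p x ≤ phi p (2p - x)`, proved by monotonicity of
`log (phi p (2p - t)) - log (phi p t)`. So `r` is convex on `[0, p]`, hence on `[p, 1]` because
`r` is a decreasing involution, and the two pieces glue along the line `y = 2p - x`, which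
supports `r` at its fixed point `p`. The case `p ≥ 1/2` follows by applying this to
`x ↦ 1 - r (1 - x)`, the reflection for `1 - p`.
-/

open Set Real Topology

theorem HasDerivAt.of_comp_hasStrictDerivAt {𝕜 : Type*} [NontriviallyNormedField 𝕜]
    [CompleteSpace 𝕜] {f g : 𝕜 → 𝕜} {a f' D : 𝕜} (hg : ContinuousAt g a)
    (hf : HasStrictDerivAt f f' (g a)) (hf' : f' ≠ 0) (hfg : HasDerivAt (f ∘ g) D a) :
    HasDerivAt g (D / f') a := by
  have hinv : (hf.localInverse f f' (g a) hf') ∘ (f ∘ g) =ᶠ[𝓝 a] g :=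
    hg.eventually (hf.eventually_left_inverse hf')
  rw [div_eq_inv_mul]
  exact (hf.to_localInverse hf').hasDerivAt.comp a hfg |>.congr_of_eventuallyEq hinv.symm

theorem ConvexOn.of_invOn_of_antitoneOn {𝕜 : Type*} [Field 𝕜] [LinearOrder 𝕜]
    [IsStrictOrderedRing 𝕜] {f g : 𝕜 → 𝕜} {s t : Set 𝕜} (hf : ConvexOn 𝕜 s f)
    (ht : Convex 𝕜 t) (hfg : InvOn g f s t) (hf_maps : MapsTo f s t) (hg_maps : MapsTo g t s)
    (hg : AntitoneOn g t) : ConvexOn 𝕜 t g := by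
  refine ⟨ht, fun u hu v hv a b ha hb hab => ?_⟩
  have hcomb : a • g u + b • g v ∈ s := hf.1 (hg_maps hu) (hg_maps hv) ha hb hab
  calc g (a • u + b • v) ≤ g (f (a • g u + b • g v)) := by
        refine hg (hf_maps hcomb) (ht hu hv ha hb hab) ?_
        simpa only [hfg.2 hu, hfg.2 hv] using hf.2 (hg_maps hu) (hg_maps hv) ha hb hab
    _ = a • g u + b • g v := hfg.1 hcomb

theorem ConvexOn.Icc_union_Icc_of_affine_le {f : ℝ → ℝ} {a b c m : ℝ}
    (h₁ : ConvexOn ℝ (Icc a b) f) (h₂ : ConvexOn ℝ (Icc b c) f)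
    (hm : ∀ x ∈ Icc a c, f b + m * (x - b) ≤ f x) :
    ConvexOn ℝ (Icc a c) f := by
  refine convexOn_of_slope_mono_adjacent (convex_Icc a c) fun {x y z} hx hz hxy hyz => ?_
  have hxz := (hxy.trans hyz).le
  rcases le_or_gt z b with hzb | hbz
  · exact h₁.slope_mono_adjacent ⟨hx.1, hxz.trans hzb⟩ ⟨hx.1.trans hxz, hzb⟩ hxy hyz
  rcases le_or_gt b x with hbx | hxb
  · exact h₂.slope_mono_adjacent ⟨hbx, hx.2⟩ ⟨hbx.trans hxz, hz.2⟩ hxy hyz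
  -- `x < b < z`: weigh the chord inequality on one side of `b` against `hm` at `x` and `z`.
  have lx := hm x hx
  have lz := hm z hz
  have hyx := sub_nonneg.2 hxy.le
  have hzy := sub_nonneg.2 hyz.le
  have hbx := sub_nonneg.2 hxb.le
  have hzb := sub_nonneg.2 hbz.le
  rw [div_le_div_iff₀ (by linarith) (by linarith)]
  rcases lt_trichotomy y b with hyb | rfl | hby
  · have := h₁.secant_mono_aux1 ⟨hx.1, hxb.le⟩ ⟨hx.1.trans hxb.le, le_rfl⟩ hxy hyb
    nlinarith [mul_le_mul_of_nonneg_left lx (mul_nonneg hzb hyx),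
      mul_le_mul_of_nonneg_left lz (mul_nonneg hyx hbx)]
  · nlinarith
  · have := h₂.secant_mono_aux1 ⟨le_rfl, hbz.le.trans hz.2⟩ ⟨hbz.le, hz.2⟩ hby hyz
    nlinarith [mul_le_mul_of_nonneg_left lx (mul_nonneg hzy hzb),
      mul_le_mul_of_nonneg_left lz (mul_nonneg hbx hzy)]

noncomputable def phi (p x : ℝ) : ℝ := x ^ p * (1 - x) ^ (1 - p)

noncomputable def invLogDeriv (p t : ℝ) : ℝ := t * (1 - t) / (p - t)

section Phi

variable {p : ℝ}

theorem continuous_phi (hp : p ∈ Ioo 0 1) : Continuous (phi p) :=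
  (continuous_rpow_const hp.1.le).mul
    ((continuous_rpow_const (sub_nonneg.2 hp.2.le)).comp (continuous_const.sub continuous_id))

theorem phi_pos {x : ℝ} (hx : x ∈ Ioo 0 1) : 0 < phi p x :=
  mul_pos (rpow_pos_of_pos hx.1 _) (rpow_pos_of_pos (sub_pos.2 hx.2) _)

theorem phi_one_sub (p x : ℝ) : phi (1 - p) (1 - x) = phi p x := by
  simp only [phi, sub_sub_cancel, mul_comm]

theorem hasStrictDerivAt_phi {x : ℝ} (hx : x ∈ Ioo 0 1) :
    HasStrictDerivAt (phi p) (phi p x * (p - x) / (x * (1 - x))) x := by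
  have hx₀ : x ≠ 0 := hx.1.ne'
  have hx₁ : 1 - x ≠ 0 := (sub_pos.2 hx.2).ne'
  have h := (hasStrictDerivAt_rpow_const_of_ne hx₀ p).mul
    ((hasStrictDerivAt_rpow_const_of_ne hx₁ (1 - p)).comp x
      ((hasStrictDerivAt_id x).const_sub 1))
  refine h.congr_deriv ?_
  simp only [phi, Function.comp_apply, rpow_sub_one hx₀, rpow_sub_one hx₁]
  field_simp
  ring

theorem hasDerivAt_log_phi {x : ℝ} (hx : x ∈ Ioo 0 1) :
    HasDerivAt (fun t => log (phi p t)) ((p - x) / (x * (1 - x))) x := by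
  convert (hasStrictDerivAt_phi hx).hasDerivAt.log (phi_pos hx).ne' using 1
  field_simp [(phi_pos (p := p) hx).ne']

theorem strictMonoOn_phi (hp : p ∈ Ioo 0 1) : StrictMonoOn (phi p) (Icc 0 p) := by
  refine strictMonoOn_of_hasDerivWithinAt_pos
    (f' := fun x => phi p x * (p - x) / (x * (1 - x))) (convex_Icc 0 p)
    (continuous_phi hp).continuousOn (fun x hx => ?_) fun x hx => ?_ <;> rw [interior_Icc] at hx
  · exact (hasStrictDerivAt_phi ⟨hx.1, hx.2.trans hp.2⟩).hasDerivAt.hasDerivWithinAt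
  · have hx' : x ∈ Ioo 0 1 := ⟨hx.1, hx.2.trans hp.2⟩
    exact div_pos (mul_pos (phi_pos hx') (sub_pos.2 hx.2)) (mul_pos hx'.1 (sub_pos.2 hx'.2))

theorem strictAntiOn_phi (hp : p ∈ Ioo 0 1) : StrictAntiOn (phi p) (Icc p 1) := by
  refine strictAntiOn_of_hasDerivWithinAt_neg
    (f' := fun x => phi p x * (p - x) / (x * (1 - x))) (convex_Icc p 1)
    (continuous_phi hp).continuousOn (fun x hx => ?_) fun x hx => ?_ <;> rw [interior_Icc] at hx
  · exact (hasStrictDerivAt_phi ⟨hp.1.trans hx.1, hx.2⟩).hasDerivAt.hasDerivWithinAt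
  · have hx' : x ∈ Ioo 0 1 := ⟨hp.1.trans hx.1, hx.2⟩
    exact div_neg_of_neg_of_pos (mul_neg_of_pos_of_neg (phi_pos hx') (by linarith [hx.1]))
      (mul_pos hx'.1 (sub_pos.2 hx'.2))

theorem phi_le_phi_two_mul_sub (hp : p ∈ Ioo 0 1) (hp2 : p ≤ 1 / 2) {x : ℝ}
    (hx : x ∈ Icc 0 p) : phi p x ≤ phi p (2 * p - x) := by
  rcases hx.1.eq_or_lt with rfl | hx₀
  · simp only [phi, zero_rpow hp.1.ne', zero_mul]
    exact mul_nonneg (rpow_nonneg (by linarith [hp.1]) _) (rpow_nonneg (by linarith) _)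
  have hmem : ∀ t ∈ Icc x p, t ∈ Ioo 0 1 ∧ 2 * p - t ∈ Ioo 0 1 := fun t ht =>
    ⟨⟨hx₀.trans_le ht.1, ht.2.trans_lt hp.2⟩, ⟨by linarith [ht.2, hp.1], by linarith [ht.1]⟩⟩
  have hderiv : ∀ t ∈ Icc x p, HasDerivAt (fun t => log (phi p (2 * p - t)) - log (phi p t))
      ((p - t) / ((2 * p - t) * (1 - (2 * p - t))) - (p - t) / (t * (1 - t))) t :=
    fun t ht => by
      have h := (hasDerivAt_log_phi (p := p) (hmem t ht).2).comp t
        ((hasDerivAt_id t).const_sub (2 * p))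
      exact (h.sub (hasDerivAt_log_phi (hmem t ht).1)).congr_deriv (by ring)
  have hanti : AntitoneOn (fun t => log (phi p (2 * p - t)) - log (phi p t)) (Icc x p) := by
    refine antitoneOn_of_hasDerivWithinAt_nonpos (convex_Icc x p)
      (fun t ht => (hderiv t ht).continuousAt.continuousWithinAt)
      (fun t ht => (hderiv t (interior_subset ht)).hasDerivWithinAt) fun t ht => ?_
    rw [interior_Icc] at ht
    obtain ⟨⟨ht₀, ht₁⟩, ⟨hs₀, hs₁⟩⟩ := hmem t (Ioo_subset_Icc_self ht)
    -- the difference is `2 (p - t) (1 - 2p)`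
    have hprod : t * (1 - t) ≤ (2 * p - t) * (1 - (2 * p - t)) := by nlinarith [ht.2]
    have := div_le_div_of_nonneg_left (sub_nonneg.2 ht.2.le) (by positivity) hprod
    linarith
  have h := hanti (left_mem_Icc.2 hx.2) (right_mem_Icc.2 hx.2) hx.2
  simp only [show 2 * p - p = p by ring, sub_self, sub_nonneg] at h
  exact (log_le_log_iff (phi_pos (hmem x (left_mem_Icc.2 hx.2)).1)
    (phi_pos (hmem x (left_mem_Icc.2 hx.2)).2)).1 h

theorem hasDerivAt_invLogDeriv {t : ℝ} (ht : t ≠ p) :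
    HasDerivAt (invLogDeriv p) (1 + p * (1 - p) / (p - t) ^ 2) t := by
  have hpt : p - t ≠ 0 := sub_ne_zero.2 ht.symm
  have h := ((hasDerivAt_id t).mul ((hasDerivAt_id t).const_sub 1)).div
    ((hasDerivAt_id t).const_sub p) hpt
  refine h.congr_deriv ?_
  simp only [id, Pi.mul_apply]
  field_simp
  ring

theorem phi_lt_phi_self (hp : p ∈ Ioo 0 1) {t : ℝ} (ht : t ∈ Icc 0 1) (htp : t ≠ p) :
    phi p t < phi p p := by
  rcases htp.lt_or_gt with h | h
  · exact strictMonoOn_phi hp ⟨ht.1, h.le⟩ (right_mem_Icc.2 hp.1.le) h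
  · exact strictAntiOn_phi hp (left_mem_Icc.2 hp.2.le) ⟨h.le, ht.2⟩ h

end Phi

structure IsPhiReflection (p : ℝ) (r : ℝ → ℝ) : Prop where
  continuousOn : ContinuousOn r (Icc 0 1)
  strictAntiOn : StrictAntiOn r (Icc 0 1)
  mapsTo : MapsTo r (Icc 0 1) (Icc 0 1)
  phi_comp : ∀ x ∈ Icc 0 1, phi p (r x) = phi p x

namespace IsPhiReflection

variable {p : ℝ} {r : ℝ → ℝ}

theorem of_Ioo (hp : p ∈ Ioo 0 1) (hcont : ContinuousOn r (Icc 0 1))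
    (hanti : StrictAntiOn r (Icc 0 1)) (hmaps : MapsTo r (Icc 0 1) (Icc 0 1))
    (heq : ∀ x ∈ Ioo 0 1, phi p x = phi p (r x)) : IsPhiReflection p r where
  continuousOn := hcont
  strictAntiOn := hanti
  mapsTo := hmaps
  phi_comp := by
    refine Set.EqOn.of_subset_closure (fun x hx => (heq x hx).symm)
      ((continuous_phi hp).comp_continuousOn hcont) (continuous_phi hp).continuousOn
      Ioo_subset_Icc_self ?_
    rw [closure_Ioo zero_ne_one]

variable (hp : p ∈ Ioo 0 1) (hr : IsPhiReflection p r)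
include hp hr

theorem map_self : r p = p := by
  by_contra h
  have hp' : p ∈ Icc 0 1 := ⟨hp.1.le, hp.2.le⟩
  exact (phi_lt_phi_self hp (hr.mapsTo hp') h).ne (hr.phi_comp p hp')

theorem mapsTo_Icc_left : MapsTo r (Icc 0 p) (Icc p 1) := fun x hx =>
  have hx' : x ∈ Icc 0 1 := ⟨hx.1, hx.2.trans hp.2.le⟩
  ⟨hr.map_self hp ▸ hr.strictAntiOn.antitoneOn hx' ⟨hp.1.le, hp.2.le⟩ hx.2, (hr.mapsTo hx').2⟩

theorem mapsTo_Icc_right : MapsTo r (Icc p 1) (Icc 0 p) := fun x hx =>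
  have hx' : x ∈ Icc 0 1 := ⟨hp.1.le.trans hx.1, hx.2⟩
  ⟨(hr.mapsTo hx').1, hr.map_self hp ▸ hr.strictAntiOn.antitoneOn ⟨hp.1.le, hp.2.le⟩ hx' hx.1⟩

theorem mapsTo_Ioo_left : MapsTo r (Ioo 0 p) (Ioo p 1) := fun x hx =>
  have hx' : x ∈ Icc 0 1 := ⟨hx.1.le, hx.2.le.trans hp.2.le⟩
  ⟨hr.map_self hp ▸ hr.strictAntiOn hx' ⟨hp.1.le, hp.2.le⟩ hx.2,
    (hr.strictAntiOn ⟨le_rfl, zero_le_one⟩ hx' hx.1).trans_le (hr.mapsTo ⟨le_rfl, zero_le_one⟩).2⟩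

theorem invOn : InvOn r r (Icc 0 p) (Icc p 1) := by
  have hphi : ∀ x ∈ Icc 0 1, phi p (r (r x)) = phi p x := fun x hx =>
    (hr.phi_comp _ (hr.mapsTo hx)).trans (hr.phi_comp x hx)
  constructor
  · intro x hx
    exact (strictMonoOn_phi hp).injOn (hr.mapsTo_Icc_right hp (hr.mapsTo_Icc_left hp hx)) hx
      (hphi x ⟨hx.1, hx.2.trans hp.2.le⟩)
  · intro x hx
    exact (strictAntiOn_phi hp).injOn (hr.mapsTo_Icc_left hp (hr.mapsTo_Icc_right hp hx)) hx
      (hphi x ⟨hp.1.le.trans hx.1, hx.2⟩)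

theorem hasDerivAt {x : ℝ} (hx : x ∈ Ioo 0 p) :
    HasDerivAt r (invLogDeriv p (r x) / invLogDeriv p x) x := by
  have hx₁ : x ∈ Ioo 0 1 := ⟨hx.1, hx.2.trans hp.2⟩
  have hu := hr.mapsTo_Ioo_left hp hx
  have hu₁ : r x ∈ Ioo 0 1 := ⟨hp.1.trans hu.1, hu.2⟩
  have hcomp : phi p ∘ r =ᶠ[𝓝 x] phi p :=
    Filter.eventuallyEq_of_mem (Ioo_mem_nhds hx₁.1 hx₁.2) fun y hy =>
      hr.phi_comp y (Ioo_subset_Icc_self hy)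
  have h := HasDerivAt.of_comp_hasStrictDerivAt
    (hr.continuousOn.continuousAt (Icc_mem_nhds hx₁.1 hx₁.2)) (hasStrictDerivAt_phi hu₁)
    (div_ne_zero (mul_ne_zero (phi_pos hu₁).ne' (sub_ne_zero.2 hu.1.ne))
      (mul_pos hu₁.1 (sub_pos.2 hu₁.2)).ne')
    ((hasStrictDerivAt_phi hx₁).hasDerivAt.congr_of_eventuallyEq hcomp)
  refine h.congr_deriv ?_
  rw [hr.phi_comp x (Ioo_subset_Icc_self hx₁), invLogDeriv, invLogDeriv]
  have := (phi_pos (p := p) hx₁).ne'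
  have := (sub_pos.2 hx.2).ne'
  have := (sub_neg.2 hu.1).ne
  field_simp

theorem two_mul_le_add (hp2 : p ≤ 1 / 2) {x : ℝ} (hx : x ∈ Icc 0 p) : 2 * p ≤ x + r x := by
  have h : phi p (r x) ≤ phi p (2 * p - x) :=
    (hr.phi_comp x ⟨hx.1, hx.2.trans hp.2.le⟩).trans_le (phi_le_phi_two_mul_sub hp hp2 hx)
  have := (strictAntiOn_phi hp).le_iff_ge (hr.mapsTo_Icc_left hp hx)
    ⟨by linarith [hx.2], by linarith [hx.1]⟩ |>.1 h
  linarith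

theorem convexOn_Icc_left (hp2 : p ≤ 1 / 2) : ConvexOn ℝ (Icc 0 p) r := by
  refine convexOn_of_hasDerivWithinAt2_nonneg
    (f' := fun x => invLogDeriv p (r x) / invLogDeriv p x)
    (f'' := fun x => invLogDeriv p (r x) *
        ((1 + p * (1 - p) / (p - r x) ^ 2) - (1 + p * (1 - p) / (p - x) ^ 2)) /
        invLogDeriv p x ^ 2)
    (convex_Icc 0 p) (hr.continuousOn.mono (Icc_subset_Icc le_rfl hp.2.le)) ?_ ?_ ?_ <;>
    rw [interior_Icc] <;> intro x hx
  · exact (hr.hasDerivAt hp hx).hasDerivWithinAt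
  · have hu := hr.mapsTo_Ioo_left hp hx
    have hEx : invLogDeriv p x ≠ 0 :=
      div_ne_zero (mul_pos hx.1 (by linarith [hx.2, hp.2])).ne' (sub_pos.2 hx.2).ne'
    have h := ((hasDerivAt_invLogDeriv hu.1.ne').comp x (hr.hasDerivAt hp hx)).div
      (hasDerivAt_invLogDeriv hx.2.ne) hEx
    refine (h.congr_deriv ?_).hasDerivWithinAt
    simp only [Function.comp_apply]
    field_simp
  · have hu := hr.mapsTo_Ioo_left hp hx
    have hEu : invLogDeriv p (r x) < 0 := div_neg_of_pos_of_neg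
      (mul_pos (hp.1.trans hu.1) (sub_pos.2 hu.2)) (sub_neg.2 hu.1)
    have hsq : (p - x) ^ 2 ≤ (p - r x) ^ 2 := by
      nlinarith [hr.two_mul_le_add hp hp2 (Ioo_subset_Icc_self hx), hx.2, hu.1]
    have := div_le_div_of_nonneg_left (mul_pos hp.1 (sub_pos.2 hp.2)).le
      (pow_pos (sub_pos.2 hx.2) 2) hsq
    exact div_nonneg (mul_nonneg_of_nonpos_of_nonpos hEu.le (by linarith)) (sq_nonneg _)

theorem convexOn (hp2 : p ≤ 1 / 2) : ConvexOn ℝ (Icc 0 1) r := by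
  have hleft := hr.convexOn_Icc_left hp hp2
  have hright : ConvexOn ℝ (Icc p 1) r :=
    hleft.of_invOn_of_antitoneOn (convex_Icc p 1) (hr.invOn hp) (hr.mapsTo_Icc_left hp)
      (hr.mapsTo_Icc_right hp) (hr.strictAntiOn.antitoneOn.mono (Icc_subset_Icc hp.1.le le_rfl))
  refine hleft.Icc_union_Icc_of_affine_le hright (m := -1) fun x hx => ?_
  rw [hr.map_self hp]
  rcases le_total x p with hxp | hpx
  · linarith [hr.two_mul_le_add hp hp2 ⟨hx.1, hxp⟩]
  · have := hr.two_mul_le_add hp hp2 (hr.mapsTo_Icc_right hp ⟨hpx, hx.2⟩)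
    rw [(hr.invOn hp).2 ⟨hpx, hx.2⟩] at this
    linarith

omit hp in
theorem reflect : IsPhiReflection (1 - p) (fun y => 1 - r (1 - y)) where
  continuousOn := continuousOn_const.sub (hr.continuousOn.comp
    (continuousOn_const.sub continuousOn_id) fun _ hy => Icc.mem_iff_one_sub_mem.1 hy)
  strictAntiOn := fun y hy z hz hyz => by
    have := hr.strictAntiOn (Icc.mem_iff_one_sub_mem.1 hz) (Icc.mem_iff_one_sub_mem.1 hy)
      (sub_lt_sub_left hyz 1)
    exact sub_lt_sub_left this 1
  mapsTo := fun y hy => Icc.mem_iff_one_sub_mem.1 (hr.mapsTo (Icc.mem_iff_one_sub_mem.1 hy))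
  phi_comp := fun y hy => by
    have := hr.phi_comp (1 - y) (Icc.mem_iff_one_sub_mem.1 hy)
    rwa [← phi_one_sub p (r _), ← phi_one_sub p (1 - y), sub_sub_cancel] at this

theorem concaveOn (hp2 : 1 / 2 ≤ p) : ConcaveOn ℝ (Icc 0 1) r := by
  have hs := hr.reflect.convexOn ⟨by linarith [hp.2], by linarith [hp.1]⟩ (by linarith)
  refine ⟨convex_Icc 0 1, fun x hx y hy a b ha hb hab => ?_⟩
  have h := hs.2 (Icc.mem_iff_one_sub_mem.1 hx) (Icc.mem_iff_one_sub_mem.1 hy) ha hb hab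
  simp only [smul_eq_mul] at h ⊢
  rw [show a * (1 - x) + b * (1 - y) = 1 - (a * x + b * y) by linear_combination hab,
    sub_sub_cancel, sub_sub_cancel, sub_sub_cancel] at h
  linarith

end IsPhiReflection

/-- Let `p ∈ (0,1)` and let `r_p : [0,1] → [0,1]` be the (unique) continuous strictly
decreasing function with `x^p (1-x)^{1-p} = r_p(x)^p (1-r_p(x))^{1-p}` on `(0,1)`.
If `p ≤ 1/2` then `r_p` is convex on `[0,1]`, and if `p ≥ 1/2` then `r_p` is concave
on `[0,1]`. -/
theorem stmt18 (p : ℝ) (hp : p ∈ Set.Ioo (0 : ℝ) 1) (r : ℝ → ℝ)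
    (hcont : ContinuousOn r (Set.Icc 0 1)) (hanti : StrictAntiOn r (Set.Icc 0 1))
    (hmaps : Set.MapsTo r (Set.Icc 0 1) (Set.Icc 0 1))
    (heq : ∀ x ∈ Set.Ioo (0 : ℝ) 1,
      x ^ p * (1 - x) ^ (1 - p) = r x ^ p * (1 - r x) ^ (1 - p)) :
    (p ≤ 1 / 2 → ConvexOn ℝ (Set.Icc 0 1) r) ∧
    (1 / 2 ≤ p → ConcaveOn ℝ (Set.Icc 0 1) r) := by
  have hr := IsPhiReflection.of_Ioo hp hcont hanti hmaps heq
  exact ⟨hr.convexOn hp, hr.concaveOn hp⟩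
end

section
/- Let p ∈ (0,1), let r_p : [0,1] → [0,1] be the unique continuous decreasing function satisfying x^p (1−x)^{1−p} = r_p(x)^p (1−r_p(x))^{1−p} for x ∈ (0,1), and let g(x) = c·x^a·(1−x)^b on (0,1) with a, b ∈ ℝ and c > 0. Then the function h(x) = g(r_p(x))/g(x) on (0,1) satisfies: (1) h is non-increasing if a ≥ 0 ≥ b; (2) h is non-decreasing if a ≤ 0 ≤ b; (3) if a + b ≠ 0 and (a+b)·(a/(a+b) − p) > 0 then h is strictly decreasing; (4) if a + b ≠ 0 and (a+b)·(a/(a+b) − p) < 0 then h is strictly increasing. -/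
/-!
Writing `E(x) = x^p (1-x)^(1-p)` and `q = a - p(a+b)`, one has
`x^a (1-x)^b = (x/(1-x))^q · E(x)^(a+b)`. Since `E ∘ r_p = E`, the factor `E^(a+b)` and the
constant `c` cancel in `h`, leaving `h(x) = (odds (r_p x) / odds x)^q` with `odds x = x/(1-x)`.
The base is a positive, strictly decreasing function of `x`, because `odds` is increasing and
`r_p` is decreasing, so the monotonicity of `h` is decided by the sign of
`q = (a+b)(a/(a+b) - p)`; in cases (1) and (2) that sign is read off from `q = a(1-p) - pb`.
-/

open Real Set

noncomputable def odds (x : ℝ) : ℝ := x / (1 - x)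

lemma odds_pos {x : ℝ} (hx : x ∈ Ioo 0 1) : 0 < odds x :=
  div_pos hx.1 (sub_pos.2 hx.2)

lemma strictMonoOn_odds : StrictMonoOn odds (Iio 1) := by
  intro x hx y hy hxy
  have hx' : 0 < 1 - x := sub_pos.2 hx
  have hy' : 0 < 1 - y := sub_pos.2 hy
  rw [odds, odds, div_lt_div_iff₀ hx' hy']
  linarith

lemma rpow_mul_one_sub_rpow_eq_odds_rpow_mul {x : ℝ} (hx : x ∈ Ioo 0 1) (a b p : ℝ) :
    x ^ a * (1 - x) ^ b
      = odds x ^ (a - p * (a + b)) * (x ^ p * (1 - x) ^ (1 - p)) ^ (a + b) := by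
  have hx0 : 0 < x := hx.1
  have hx1 : 0 < 1 - x := sub_pos.2 hx.2
  rw [rpow_def_of_pos hx0, rpow_def_of_pos hx1, rpow_def_of_pos (odds_pos hx),
    rpow_def_of_pos (by positivity), ← exp_add, ← exp_add, odds, log_div hx0.ne' hx1.ne',
    log_mul (by positivity) (by positivity), log_rpow hx0, log_rpow hx1]
  ring_nf

lemma div_eq_odds_div_odds_rpow {p c x y : ℝ} (hc : c ≠ 0) (hx : x ∈ Ioo 0 1)
    (hy : y ∈ Ioo 0 1) (h : x ^ p * (1 - x) ^ (1 - p) = y ^ p * (1 - y) ^ (1 - p)) (a b : ℝ) :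
    c * y ^ a * (1 - y) ^ b / (c * x ^ a * (1 - x) ^ b)
      = (odds y / odds x) ^ (a - p * (a + b)) := by
  have hEx : 0 < (x ^ p * (1 - x) ^ (1 - p)) ^ (a + b) := by
    have := hx.1; have := sub_pos.2 hx.2; positivity
  rw [mul_assoc, mul_assoc, rpow_mul_one_sub_rpow_eq_odds_rpow_mul hx a b p,
    rpow_mul_one_sub_rpow_eq_odds_rpow_mul hy a b p, ← h,
    div_rpow (odds_pos hy).le (odds_pos hx).le]
  field_simp

lemma mem_Ioo_of_rpow_mul_one_sub_rpow_eq {p x y : ℝ} (hp : p ∈ Ioo 0 1) (hx : x ∈ Ioo 0 1)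
    (hy : y ∈ Icc 0 1) (h : x ^ p * (1 - x) ^ (1 - p) = y ^ p * (1 - y) ^ (1 - p)) :
    y ∈ Ioo 0 1 := by
  have hE : 0 < x ^ p * (1 - x) ^ (1 - p) := by
    have := hx.1; have := sub_pos.2 hx.2; positivity
  refine ⟨lt_of_le_of_ne hy.1 ?_, lt_of_le_of_ne hy.2 ?_⟩
  · rintro rfl
    rw [zero_rpow hp.1.ne', zero_mul] at h
    exact hE.ne' h
  · rintro rfl
    rw [sub_self, zero_rpow (sub_pos.2 hp.2).ne', mul_zero] at h
    exact hE.ne' h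

lemma strictAntiOn_odds_comp_div_odds {r : ℝ → ℝ} (hr : StrictAntiOn r (Ioo 0 1))
    (hmaps : MapsTo r (Ioo 0 1) (Ioo 0 1)) :
    StrictAntiOn (fun x => odds (r x) / odds x) (Ioo 0 1) := by
  intro x hx y hy hxy
  have hodds : odds x < odds y := strictMonoOn_odds hx.2 hy.2 hxy
  have hodds_r : odds (r y) < odds (r x) :=
    strictMonoOn_odds (hmaps hy).2 (hmaps hx).2 (hr hx hy hxy)
  exact div_lt_div₀ hodds_r hodds.le (odds_pos (hmaps hx)).le (odds_pos hx)

theorem stmt19_general (p : ℝ) (hp : p ∈ Set.Ioo (0 : ℝ) 1) (r : ℝ → ℝ)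
    (hanti : StrictAntiOn r (Set.Icc 0 1))
    (hmaps : Set.MapsTo r (Set.Icc 0 1) (Set.Icc 0 1))
    (heq : ∀ x ∈ Set.Ioo (0 : ℝ) 1,
      x ^ p * (1 - x) ^ (1 - p) = r x ^ p * (1 - r x) ^ (1 - p))
    (a b c : ℝ) (hc : 0 < c) :
    (a ≥ 0 ∧ 0 ≥ b → AntitoneOn
      (fun x => (c * r x ^ a * (1 - r x) ^ b) / (c * x ^ a * (1 - x) ^ b))
      (Set.Ioo 0 1)) ∧
    (a ≤ 0 ∧ 0 ≤ b → MonotoneOn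
      (fun x => (c * r x ^ a * (1 - r x) ^ b) / (c * x ^ a * (1 - x) ^ b))
      (Set.Ioo 0 1)) ∧
    (a + b ≠ 0 → (a + b) * (a / (a + b) - p) > 0 → StrictAntiOn
      (fun x => (c * r x ^ a * (1 - r x) ^ b) / (c * x ^ a * (1 - x) ^ b))
      (Set.Ioo 0 1)) ∧
    (a + b ≠ 0 → (a + b) * (a / (a + b) - p) < 0 → StrictMonoOn
      (fun x => (c * r x ^ a * (1 - r x) ^ b) / (c * x ^ a * (1 - x) ^ b))
      (Set.Ioo 0 1)) := by
  have hr : MapsTo r (Ioo 0 1) (Ioo 0 1) := fun x hx =>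
    mem_Ioo_of_rpow_mul_one_sub_rpow_eq hp hx (hmaps (Ioo_subset_Icc_self hx)) (heq x hx)
  have hρ := strictAntiOn_odds_comp_div_odds (hanti.mono Ioo_subset_Icc_self) hr
  have hρ_pos : MapsTo (fun x => odds (r x) / odds x) (Ioo 0 1) (Ioi 0) := fun x hx =>
    div_pos (odds_pos (hr hx)) (odds_pos hx)
  have hh : EqOn (fun x => (odds (r x) / odds x) ^ (a - p * (a + b)))
      (fun x => (c * r x ^ a * (1 - r x) ^ b) / (c * x ^ a * (1 - x) ^ b)) (Ioo 0 1) :=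
    fun x hx => (div_eq_odds_div_odds_rpow hc.ne' hx (hr hx) (heq x hx) a b).symm
  have hq (hab : a + b ≠ 0) : (a + b) * (a / (a + b) - p) = a - p * (a + b) := by
    field_simp
  refine ⟨fun ⟨ha, hb⟩ => ?_, fun ⟨ha, hb⟩ => ?_, fun hab hpos => ?_, fun hab hneg => ?_⟩
  · exact ((monotoneOn_rpow_Ici_of_exponent_nonneg (by nlinarith [hp.1, hp.2])).comp_AntitoneOn
      hρ.antitoneOn (hρ_pos.mono_right Ioi_subset_Ici_self)).congr hh
  · exact ((antitoneOn_rpow_Ioi_of_exponent_nonpos (by nlinarith [hp.1, hp.2])).comp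
      hρ.antitoneOn hρ_pos).congr hh
  · exact ((strictMonoOn_rpow_Ici_of_exponent_pos (hq hab ▸ hpos)).comp_strictAntiOn
      hρ (hρ_pos.mono_right Ioi_subset_Ici_self)).congr hh
  · exact ((strictAntiOn_rpow_Ioi_of_exponent_neg (hq hab ▸ hneg)).comp hρ hρ_pos).congr hh

/-- Let `p ∈ (0,1)`, let `r_p : [0,1] → [0,1]` be the (unique) continuous strictly
decreasing function with `x^p (1-x)^{1-p} = r_p(x)^p (1-r_p(x))^{1-p}` on `(0,1)`,
and let `g(x) = c·x^a·(1-x)^b` with `c > 0`. Then `h(x) = g(r_p(x))/g(x)` on `(0,1)`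
is: (1) non-increasing if `a ≥ 0 ≥ b`; (2) non-decreasing if `a ≤ 0 ≤ b`;
(3) strictly decreasing if `a + b ≠ 0` and `(a+b)(a/(a+b) - p) > 0`;
(4) strictly increasing if `a + b ≠ 0` and `(a+b)(a/(a+b) - p) < 0`. -/
theorem stmt19 (p : ℝ) (hp : p ∈ Set.Ioo (0 : ℝ) 1) (r : ℝ → ℝ)
    (hcont : ContinuousOn r (Set.Icc 0 1)) (hanti : StrictAntiOn r (Set.Icc 0 1))
    (hmaps : Set.MapsTo r (Set.Icc 0 1) (Set.Icc 0 1))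
    (heq : ∀ x ∈ Set.Ioo (0 : ℝ) 1,
      x ^ p * (1 - x) ^ (1 - p) = r x ^ p * (1 - r x) ^ (1 - p))
    (a b c : ℝ) (hc : 0 < c) :
    (a ≥ 0 ∧ 0 ≥ b → AntitoneOn
      (fun x => (c * r x ^ a * (1 - r x) ^ b) / (c * x ^ a * (1 - x) ^ b))
      (Set.Ioo 0 1)) ∧
    (a ≤ 0 ∧ 0 ≤ b → MonotoneOn
      (fun x => (c * r x ^ a * (1 - r x) ^ b) / (c * x ^ a * (1 - x) ^ b))
      (Set.Ioo 0 1)) ∧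
    (a + b ≠ 0 → (a + b) * (a / (a + b) - p) > 0 → StrictAntiOn
      (fun x => (c * r x ^ a * (1 - r x) ^ b) / (c * x ^ a * (1 - x) ^ b))
      (Set.Ioo 0 1)) ∧
    (a + b ≠ 0 → (a + b) * (a / (a + b) - p) < 0 → StrictMonoOn
      (fun x => (c * r x ^ a * (1 - r x) ^ b) / (c * x ^ a * (1 - x) ^ b))
      (Set.Ioo 0 1)) :=
  stmt19_general p hp r hanti hmaps heq a b c hc
end
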